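/- arXiv:1304.6786 — 7 statements merged into one kernel-verified Lean document; each statement's English description precedes it below -/
import Mathlib

section
/- Let μ be an entrance-type string measure with concentration function M. Define iterated integrals φ₀(x) = 1 and φₙ(x) = ∫_{(−∞,x]} (x−y) φₙ₋₁(y) dμ(y) for n ≥ 1. Then for every n ≥ 0 and every x < l one has 0 ≤ φₙ(x) ≤ M(x)ⁿ / n!. -/
open MeasureTheory

/-- `x` lies strictly below the length `l = sup {y | m(y) = μ((-∞,y]) < ∞}` of the string. -/
def belowL (μ : Measure ℝ) (x : ℝ) : Prop := ∃ y, x < y ∧ μ (Set.Iic y) < ⊤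

/-- The concentration function `M(x) = ∫_{(-∞,x]} (x - y) dμ(y)` (as a real number). -/
noncomputable def Mfun (μ : Measure ℝ) (x : ℝ) : ℝ :=
  (∫⁻ y in Set.Iic x, ENNReal.ofReal (x - y) ∂μ).toReal

/-- Entrance condition: `M(x) < ∞` for every `x < l`. -/
def IsEntrance (μ : Measure ℝ) : Prop :=
  ∀ x, belowL μ x → (∫⁻ y in Set.Iic x, ENNReal.ofReal (x - y) ∂μ) < ⊤


open Set

-- L2: tail bound for the "strict CDF"
lemma meas_lt_bound (ρ : Measure ℝ) [IsFiniteMeasure ρ] {t : ℝ} (ht : 0 < t) :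
    ρ {a | t < (ρ (Set.Iio a)).toReal} ≤ ρ Set.univ - ENNReal.ofReal t := by
  set S := {a : ℝ | t < (ρ (Set.Iio a)).toReal} with hS
  have hfin : ∀ a : ℝ, ρ (Set.Iio a) ≠ ⊤ := fun a => measure_ne_top ρ _
  have hmemS : ∀ a, a ∈ S ↔ ENNReal.ofReal t < ρ (Set.Iio a) := by
    intro a
    rw [hS, Set.mem_setOf_eq, ENNReal.ofReal_lt_iff_lt_toReal ht.le (hfin a)]
  rcases Set.eq_empty_or_nonempty S with hemp | hne
  · simp [hemp]
  have hup : ∀ a b : ℝ, a ∈ S → a ≤ b → b ∈ S := by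
    intro a b ha hab
    rw [hmemS] at ha ⊢
    exact lt_of_lt_of_le ha (measure_mono (Set.Iio_subset_Iio hab))
  -- S is bounded below
  have htend : Filter.Tendsto (fun k : ℕ => ρ (Set.Iio (-(k : ℝ)))) Filter.atTop (nhds (ρ (⋂ k : ℕ, Set.Iio (-(k : ℝ))))) := by
    apply tendsto_measure_iInter_atTop (fun k => measurableSet_Iio.nullMeasurableSet)
    · intro i j hij
      exact Set.Iio_subset_Iio (by simp; exact_mod_cast hij)
    · exact ⟨0, measure_ne_top ρ _⟩
  have hempty : (⋂ k : ℕ, Set.Iio (-(k : ℝ))) = ∅ := by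
    ext x; simp only [Set.mem_iInter, Set.mem_Iio, Set.mem_empty_iff_false, iff_false]
    push_neg
    obtain ⟨k, hk⟩ := exists_nat_gt (-x)
    exact ⟨k, by linarith⟩
  rw [hempty, measure_empty] at htend
  have hlow : ∃ a₀ : ℝ, ρ (Set.Iio a₀) < ENNReal.ofReal t := by
    have := htend.eventually_lt_const (by simpa using ht : (0:ENNReal) < ENNReal.ofReal t)
    obtain ⟨k, hk⟩ := this.exists
    exact ⟨-(k:ℝ), hk⟩
  obtain ⟨a₀, ha₀⟩ := hlow
  have hbdd : BddBelow S := by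
    refine ⟨a₀, fun a ha => ?_⟩
    by_contra hcon
    push_neg at hcon
    have := lt_of_le_of_lt (measure_mono (Set.Iio_subset_Iio hcon.le)) ha₀
    rw [hmemS] at ha
    exact absurd (ha.trans this) (lt_irrefl _)
  set c := sInf S with hc
  have hSIci : S ⊆ Set.Ici c := fun a ha => csInf_le hbdd ha
  have hIoiS : Set.Ioi c ⊆ S := by
    intro b hb
    obtain ⟨a, haS, hab⟩ := (csInf_lt_iff hbdd hne).mp hb
    exact hup a b haS hab.le
  -- ρ (Iic c) ≥ ofReal t
  have hIic : ENNReal.ofReal t ≤ ρ (Set.Iic c) := by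
    have htend2 : Filter.Tendsto (fun k : ℕ => ρ (Set.Iio (c + 1/(k+1 : ℝ)))) Filter.atTop (nhds (ρ (⋂ k : ℕ, Set.Iio (c + 1/(k+1 : ℝ))))) := by
      apply tendsto_measure_iInter_atTop (fun k => measurableSet_Iio.nullMeasurableSet)
      · intro i j hij
        apply Set.Iio_subset_Iio
        have : (1:ℝ)/(j+1) ≤ 1/(i+1) := by
          apply one_div_le_one_div_of_le (by positivity)
          exact_mod_cast (by exact_mod_cast Nat.succ_le_succ hij : (i:ℕ)+1 ≤ j+1)
        linarith
      · exact ⟨0, measure_ne_top ρ _⟩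
    have hiInter : (⋂ k : ℕ, Set.Iio (c + 1/(k+1 : ℝ))) = Set.Iic c := by
      ext x
      simp only [Set.mem_iInter, Set.mem_Iio, Set.mem_Iic]
      constructor
      · intro h
        by_contra hcx
        push_neg at hcx
        obtain ⟨k, hk⟩ := exists_nat_gt (1/(x - c))
        have hk0 : (0:ℝ) < 1/(x-c) := div_pos one_pos (by linarith)
        have : 1/((k:ℝ)+1) < x - c := by
          rw [div_lt_iff₀ (by positivity)]
          rw [div_lt_iff₀ (by linarith)] at hk
          nlinarith
        linarith [h k]
      · intro h k
        have : (0:ℝ) < 1/(k+1:ℝ) := by positivity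
        linarith
    rw [hiInter] at htend2
    apply ge_of_tendsto htend2
    filter_upwards with k
    have : c + 1/(k+1:ℝ) ∈ S := hIoiS (by simp; positivity)
    exact ((hmemS _).mp this).le
  by_cases hcS : c ∈ S
  · have h1 : ENNReal.ofReal t ≤ ρ (Set.Iio c) := ((hmemS c).mp hcS).le
    calc ρ S ≤ ρ (Set.Ici c) := measure_mono hSIci
      _ = ρ Set.univ - ρ (Set.Iio c) := by
          rw [← Set.compl_Iio, measure_compl measurableSet_Iio (measure_ne_top ρ _)]
      _ ≤ ρ Set.univ - ENNReal.ofReal t := tsub_le_tsub_left h1 _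
  · have hSIoi : S ⊆ Set.Ioi c := by
      intro a ha
      rcases lt_or_eq_of_le (show c ≤ a from hSIci ha) with h | h
      · exact h
      · exact absurd (h ▸ ha) hcS
    calc ρ S ≤ ρ (Set.Ioi c) := measure_mono hSIoi
      _ = ρ Set.univ - ρ (Set.Iic c) := by
          rw [← Set.compl_Iic, measure_compl measurableSet_Iic (measure_ne_top ρ _)]
      _ ≤ ρ Set.univ - ENNReal.ofReal t := tsub_le_tsub_left hIic _

lemma key_ineq (ρ : Measure ℝ) [IsFiniteMeasure ρ] (n : ℕ) :
    ∫⁻ a, ρ (Set.Iio a) ^ n ∂ρ ≤ ρ Set.univ ^ (n+1) / ((n:ENNReal)+1) := by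
  rcases n with _ | m
  · simp
  set T := ρ Set.univ with hT
  set T' := T.toReal with hT'
  have hTfin : T ≠ ⊤ := measure_ne_top ρ _
  have hT'0 : 0 ≤ T' := ENNReal.toReal_nonneg
  have hTeq : T = ENNReal.ofReal T' := (ENNReal.ofReal_toReal hTfin).symm
  set f : ℝ → ℝ := fun a => (ρ (Set.Iio a)).toReal with hf
  have hfmono : Monotone f := by
    intro a b hab
    exact ENNReal.toReal_le_toReal (measure_ne_top ρ _) (measure_ne_top ρ _) |>.mpr
      (measure_mono (Set.Iio_subset_Iio hab))
  have hfmble : AEMeasurable f ρ := hfmono.measurable.aemeasurable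
  have hfnn : 0 ≤ᵐ[ρ] f := Filter.Eventually.of_forall fun a => ENNReal.toReal_nonneg
  set g : ℝ → ℝ := fun t => ((m:ℝ)+1) * t^m with hg
  have hgint : ∀ t > (0:ℝ), IntervalIntegrable g volume 0 t := fun t _ =>
    (by continuity : Continuous g).intervalIntegrable 0 t
  have hgnn : ∀ᵐ t ∂(volume.restrict (Set.Ioi (0:ℝ))), 0 ≤ g t := by
    filter_upwards [ae_restrict_mem measurableSet_Ioi] with t ht
    have : (0:ℝ) < t := ht
    positivity
  have hlc := lintegral_comp_eq_lintegral_meas_lt_mul ρ hfnn hfmble hgint hgnn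
  have hcomp : ∀ a, ENNReal.ofReal (∫ t in (0:ℝ)..(f a), g t) = ρ (Set.Iio a) ^ (m+1) := by
    intro a
    have h1 : ∫ t in (0:ℝ)..(f a), g t = f a ^ (m+1) := by
      rw [hg]
      rw [intervalIntegral.integral_const_mul, integral_pow]
      field_simp
      simp
    rw [h1, ENNReal.ofReal_pow (ENNReal.toReal_nonneg), ENNReal.ofReal_toReal (measure_ne_top ρ _)]
  have hLHS : ∫⁻ a, ρ (Set.Iio a) ^ (m+1) ∂ρ = ∫⁻ t in Set.Ioi (0:ℝ), ρ {a | t < f a} * ENNReal.ofReal (g t) := by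
    rw [← hlc]; exact lintegral_congr fun a => (hcomp a).symm
  rw [hLHS]
  -- bound the RHS
  have hbd : ∫⁻ t in Set.Ioi (0:ℝ), ρ {a | t < f a} * ENNReal.ofReal (g t)
      ≤ ∫⁻ t in Set.Ioi (0:ℝ), (T - ENNReal.ofReal t) * ENNReal.ofReal (g t) := by
    apply setLIntegral_mono
    · apply Measurable.mul
      · exact (measurable_const.sub (ENNReal.measurable_ofReal.comp measurable_id))
      · exact ENNReal.measurable_ofReal.comp (by continuity : Continuous g).measurable
    · intro t ht
      exact mul_le_mul_left (meas_lt_bound ρ ht) _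
  refine le_trans hbd ?_
  -- compute the majorant integral
  have hsplit : (Set.Ioi (0:ℝ)) = Set.Ioc 0 T' ∪ Set.Ioi T' := (Set.Ioc_union_Ioi_eq_Ioi hT'0).symm
  have hdisj : Disjoint (Set.Ioc (0:ℝ) T') (Set.Ioi T') := Set.Ioc_disjoint_Ioi le_rfl
  rw [hsplit, lintegral_union measurableSet_Ioi hdisj]
  have hzero : ∫⁻ t in Set.Ioi T', (T - ENNReal.ofReal t) * ENNReal.ofReal (g t) = 0 := by
    rw [setLIntegral_congr_fun measurableSet_Ioi (fun t ht => ?_), lintegral_zero]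
    have : T ≤ ENNReal.ofReal t := by
      rw [hTeq]
      exact ENNReal.ofReal_le_ofReal (le_of_lt ht)
    rw [tsub_eq_zero_of_le this, zero_mul]
  rw [hzero, add_zero]
  -- now the Ioc part
  have hpt : ∀ t ∈ Set.Ioc (0:ℝ) T', (T - ENNReal.ofReal t) * ENNReal.ofReal (g t)
      = ENNReal.ofReal ((T' - t) * g t) := by
    intro t ht
    have h1 : T - ENNReal.ofReal t = ENNReal.ofReal (T' - t) := by
      rw [hTeq, ← ENNReal.ofReal_sub _ ht.1.le]
    rw [h1, ← ENNReal.ofReal_mul (by linarith [ht.2] : 0 ≤ T' - t)]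
  rw [setLIntegral_congr_fun measurableSet_Ioc hpt]
  have hInt : IntegrableOn (fun t => (T' - t) * g t) (Set.Ioc 0 T') volume := by
    rw [hg]
    exact ((continuous_const.sub continuous_id).mul
      (continuous_const.mul (continuous_pow m))).integrableOn_Ioc
  have hnn2 : 0 ≤ᵐ[volume.restrict (Set.Ioc (0:ℝ) T')] fun t => (T' - t) * g t := by
    filter_upwards [ae_restrict_mem measurableSet_Ioc] with t ht
    have h1 : 0 ≤ T' - t := by linarith [ht.2]
    have h2 : 0 ≤ g t := by rw [hg]; have := ht.1; positivity
    positivity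
  rw [← ofReal_integral_eq_lintegral_ofReal hInt hnn2]
  have hval : ∫ t in Set.Ioc (0:ℝ) T', (T' - t) * g t = T' ^ (m+2) / ((m:ℝ)+2) := by
    rw [← intervalIntegral.integral_of_le hT'0]
    have : ∀ t, (T' - t) * g t = ((m:ℝ)+1) * T' * t^m - ((m:ℝ)+1) * t^(m+1) := by
      intro t; rw [hg]; ring
    simp_rw [this]
    rw [intervalIntegral.integral_sub, intervalIntegral.integral_const_mul,
        intervalIntegral.integral_const_mul, integral_pow, integral_pow]
    · field_simp
      push_cast
      ring
    · exact ((continuous_const.mul (continuous_pow m)) : Continuous fun t:ℝ => ((m:ℝ)+1)*T'*t^m).intervalIntegrable 0 T'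
    · exact ((continuous_const.mul (continuous_pow (m+1))) : Continuous fun t:ℝ => ((m:ℝ)+1)*t^(m+1)).intervalIntegrable 0 T'
  rw [hval]
  have hcast : ENNReal.ofReal ((m:ℝ)+2) = ((m+1:ℕ):ENNReal)+1 := by
    rw [show ((m:ℝ)+2) = ((m+2:ℕ):ℝ) by push_cast; ring, ENNReal.ofReal_natCast]
    push_cast; ring
  have hfinal : T ^ (m+1+1) / (((m+1:ℕ):ENNReal)+1) = ENNReal.ofReal (T' ^ (m+2) / ((m:ℝ)+2)) := by
    rw [ENNReal.ofReal_div_of_pos (by positivity), hcast, ENNReal.ofReal_pow hT'0, ← hTeq]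
  rw [hfinal]

lemma keyMu (μ : Measure ℝ) (x : ℝ)
    (hx : (∫⁻ w in Set.Iic x, ENNReal.ofReal (x - w) ∂μ) ≠ ⊤) (n : ℕ) :
    ∫⁻ z in Set.Iic x, ENNReal.ofReal (x - z) * (∫⁻ w in Set.Iic z, ENNReal.ofReal (z - w) ∂μ) ^ n ∂μ
      ≤ (∫⁻ w in Set.Iic x, ENNReal.ofReal (x - w) ∂μ) ^ (n+1) / ((n:ENNReal)+1) := by
  set ρ : Measure ℝ := (μ.restrict (Set.Iic x)).withDensity (fun z => ENNReal.ofReal (x - z)) with hρ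
  have hmes : Measurable fun z : ℝ => ENNReal.ofReal (x - z) :=
    ENNReal.measurable_ofReal.comp (measurable_const.sub measurable_id)
  have hρuniv : ρ Set.univ = ∫⁻ w in Set.Iic x, ENNReal.ofReal (x - w) ∂μ := by
    rw [hρ, withDensity_apply _ MeasurableSet.univ, Measure.restrict_univ]
  haveI : IsFiniteMeasure ρ := ⟨by rw [hρuniv]; exact lt_top_iff_ne_top.mpr hx⟩
  have hρIio : ∀ z : ℝ, z ≤ x → ρ (Set.Iio z) = ∫⁻ w in Set.Iio z, ENNReal.ofReal (x - w) ∂μ := by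
    intro z hz
    have hsub : Set.Iio z ∩ Set.Iic x = Set.Iio z :=
      Set.inter_eq_left.mpr fun w hw => le_trans (le_of_lt hw) hz
    rw [hρ, withDensity_apply _ measurableSet_Iio, Measure.restrict_restrict measurableSet_Iio,
      hsub]
  have hNle : ∀ z : ℝ, z ≤ x →
      (∫⁻ w in Set.Iic z, ENNReal.ofReal (z - w) ∂μ) ≤ ρ (Set.Iio z) := by
    intro z hz
    have h1 : (∫⁻ w in Set.Iic z, ENNReal.ofReal (z - w) ∂μ)
        = ∫⁻ w in Set.Iio z, ENNReal.ofReal (z - w) ∂μ := by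
      rw [← Set.Iio_union_right, lintegral_union (measurableSet_singleton z)
        (by simp [Set.disjoint_singleton_right])]
      rw [lintegral_singleton]
      simp
    rw [h1, hρIio z hz]
    exact setLIntegral_mono (hmes) fun w _ => ENNReal.ofReal_le_ofReal (by linarith)
  -- monotone CDF measurable
  have hmono : Monotone fun z : ℝ => ρ (Set.Iio z) := fun a b hab => measure_mono (Set.Iio_subset_Iio hab)
  have hcdfmes : Measurable fun z : ℝ => ρ (Set.Iio z) := hmono.measurable
  have step2 : ∫⁻ z in Set.Iic x, ENNReal.ofReal (x - z) * (∫⁻ w in Set.Iic z, ENNReal.ofReal (z - w) ∂μ) ^ n ∂μ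
      ≤ ∫⁻ z in Set.Iic x, ENNReal.ofReal (x - z) * ρ (Set.Iio z) ^ n ∂μ := by
    apply setLIntegral_mono (hmes.mul (hcdfmes.pow_const n))
    intro z hz
    exact mul_le_mul_right (pow_le_pow_left' (hNle z hz) n) _
  refine le_trans step2 ?_
  have step3 : ∫⁻ z in Set.Iic x, ENNReal.ofReal (x - z) * ρ (Set.Iio z) ^ n ∂μ
      = ∫⁻ z, ρ (Set.Iio z) ^ n ∂ρ := by
    rw [hρ, lintegral_withDensity_eq_lintegral_mul _ hmes (hcdfmes.pow_const n)]
    rfl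
  rw [step3, ← hρuniv]
  exact key_ineq ρ n

noncomputable def psiAux (ν : Measure ℝ) : ℕ → ℝ → ENNReal
  | 0 => fun _ => 1
  | n+1 => fun y => ∫⁻ z, ENNReal.ofReal (y - z) * psiAux ν n z ∂ν

lemma psiAux_measurable (ν : Measure ℝ) [SFinite ν] : ∀ n, Measurable (psiAux ν n) := by
  intro n
  induction n with
  | zero => exact measurable_const
  | succ m ih =>
    show Measurable fun y => ∫⁻ z, ENNReal.ofReal (y - z) * psiAux ν m z ∂ν
    apply Measurable.lintegral_prod_right'
      (f := fun p : ℝ × ℝ => ENNReal.ofReal (p.1 - p.2) * psiAux ν m p.2)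
    exact (ENNReal.measurable_ofReal.comp (measurable_fst.sub measurable_snd)).mul
      (ih.comp measurable_snd)

lemma split_zero (μ : Measure ℝ) {x y : ℝ} (hyx : y ≤ x) {f : ℝ → ENNReal}
    (hf : ∀ z ∈ Set.Ioc y x, f z = 0) :
    ∫⁻ z in Set.Iic x, f z ∂μ = ∫⁻ z in Set.Iic y, f z ∂μ := by
  rw [← Set.Iic_union_Ioc_eq_Iic hyx, lintegral_union measurableSet_Ioc (Set.Iic_disjoint_Ioc le_rfl)]
  rw [setLIntegral_congr_fun measurableSet_Ioc hf, lintegral_zero, add_zero]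

theorem stmt_0 (μ : Measure ℝ) (hμ : IsEntrance μ)
    (φ : ℕ → ℝ → ℝ)
    (hφ0 : ∀ x : ℝ, φ 0 x = 1)
    (hφ : ∀ (n : ℕ) (x : ℝ), φ (n + 1) x = ∫ y in Set.Iic x, (x - y) * φ n y ∂μ) :
    ∀ (n : ℕ) (x : ℝ), belowL μ x →
      0 ≤ φ n x ∧ φ n x ≤ Mfun μ x ^ n / n.factorial := by
  intro n x hx
  obtain ⟨y0, hxy0, hy0⟩ := hx
  set ν := μ.restrict (Set.Iic x) with hν
  haveI : IsFiniteMeasure ν := ⟨by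
    rw [hν, Measure.restrict_apply MeasurableSet.univ, Set.univ_inter]
    exact lt_of_le_of_lt (measure_mono (Set.Iic_subset_Iic.mpr hxy0.le)) hy0⟩
  set N : ℝ → ENNReal := fun z => ∫⁻ w in Set.Iic z, ENNReal.ofReal (z - w) ∂μ with hN
  have hbel : ∀ z, z ≤ x → belowL μ z := fun z hz => ⟨y0, lt_of_le_of_lt hz hxy0, hy0⟩
  have hNfin : ∀ z, z ≤ x → N z ≠ ⊤ := fun z hz => (hμ z (hbel z hz)).ne
  have hNres : ∀ z, z ≤ x → (∫⁻ w, ENNReal.ofReal (z - w) ∂ν) = N z := by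
    intro z hz
    rw [hν]
    exact split_zero μ hz fun w hw => ENNReal.ofReal_eq_zero.mpr (by linarith [hw.1])
  have hNmes : Measurable fun z => ∫⁻ w, ENNReal.ofReal (z - w) ∂ν :=
    Measurable.lintegral_prod_right'
      (f := fun p : ℝ × ℝ => ENNReal.ofReal (p.1 - p.2))
      (ENNReal.measurable_ofReal.comp (measurable_fst.sub measurable_snd))
  set ψ := psiAux ν with hψ
  have hψmes := psiAux_measurable ν
  have main : ∀ m, ∀ y, y ≤ x → φ m y = (ψ m y).toReal ∧
      ψ m y ≤ N y ^ m / (m.factorial : ENNReal) := by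
    intro m
    induction m with
    | zero =>
      intro y hy
      constructor
      · rw [hφ0]; simp [hψ, psiAux]
      · simp [hψ, psiAux]
    | succ m ih =>
      intro y hy
      have hψy : ψ (m+1) y = ∫⁻ z in Set.Iic y, ENNReal.ofReal (y - z) * ψ m z ∂μ := by
        show ∫⁻ z, ENNReal.ofReal (y - z) * ψ m z ∂ν = _
        rw [hν]
        exact split_zero μ hy fun z hz => by
          rw [ENNReal.ofReal_eq_zero.mpr (by linarith [hz.1]), zero_mul]
      have hψfin_pt : ∀ z, z ≤ x → ψ m z ≠ ⊤ := by
        intro z hz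
        refine ne_top_of_le_ne_top ?_ (ih z hz).2
        exact (ENNReal.div_lt_top (ENNReal.pow_ne_top (hNfin z hz))
          (Nat.cast_ne_zero.mpr m.factorial_ne_zero)).ne
      have heq : φ (m+1) y = (ψ (m+1) y).toReal := by
        rw [hφ m y]
        have h1 : ∫ z in Set.Iic y, (y - z) * φ m z ∂μ
            = ∫ z in Set.Iic y, (y - z) * (ψ m z).toReal ∂μ := by
          apply setIntegral_congr_fun measurableSet_Iic
          intro z hz
          dsimp only
          rw [(ih z (le_trans hz hy)).1]
        have h2 : ∫ z in Set.Iic y, (y - z) * (ψ m z).toReal ∂μ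
            = (∫⁻ z in Set.Iic y, ENNReal.ofReal ((y - z) * (ψ m z).toReal) ∂μ).toReal := by
          rw [integral_eq_lintegral_of_nonneg_ae]
          · filter_upwards [ae_restrict_mem measurableSet_Iic] with z hz
            have : z ≤ y := hz
            exact mul_nonneg (by linarith) ENNReal.toReal_nonneg
          · exact (((measurable_const.sub measurable_id).mul
              (hψmes m).ennreal_toReal)).aestronglyMeasurable
        have h3 : ∫⁻ z in Set.Iic y, ENNReal.ofReal ((y - z) * (ψ m z).toReal) ∂μ
            = ∫⁻ z in Set.Iic y, ENNReal.ofReal (y - z) * ψ m z ∂μ := by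
          apply setLIntegral_congr_fun measurableSet_Iic
          intro z hz
          dsimp only
          have : z ≤ y := hz
          rw [ENNReal.ofReal_mul (by linarith : (0:ℝ) ≤ y - z),
            ENNReal.ofReal_toReal (hψfin_pt z (le_trans hz hy))]
        rw [h1, h2, h3, hψy]
      refine ⟨heq, ?_⟩
      rw [hψy]
      have hmesyz : Measurable fun z : ℝ => ENNReal.ofReal (y - z) :=
        ENNReal.measurable_ofReal.comp (measurable_const.sub measurable_id)
    -- bound chain
      have hb1 : ∫⁻ z in Set.Iic y, ENNReal.ofReal (y - z) * ψ m z ∂μ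
          ≤ ∫⁻ z in Set.Iic y, (ENNReal.ofReal (y - z)
              * (∫⁻ w, ENNReal.ofReal (z - w) ∂ν) ^ m) * (↑m.factorial)⁻¹ ∂μ := by
        apply setLIntegral_mono ((hmesyz.mul (hNmes.pow_const m)).mul_const _)
        intro z hz
        have hzx : z ≤ x := le_trans hz hy
        have := (ih z hzx).2
        rw [← hNres z hzx] at this
        calc ENNReal.ofReal (y - z) * ψ m z
            ≤ ENNReal.ofReal (y - z) * ((∫⁻ w, ENNReal.ofReal (z - w) ∂ν) ^ m / ↑m.factorial) :=
              mul_le_mul_right this _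
          _ = (ENNReal.ofReal (y - z) * (∫⁻ w, ENNReal.ofReal (z - w) ∂ν) ^ m) * (↑m.factorial)⁻¹ := by
              rw [div_eq_mul_inv, mul_assoc]
      have hb2 : ∫⁻ z in Set.Iic y, (ENNReal.ofReal (y - z)
              * (∫⁻ w, ENNReal.ofReal (z - w) ∂ν) ^ m) * (↑m.factorial)⁻¹ ∂μ
          = (∫⁻ z in Set.Iic y, ENNReal.ofReal (y - z) * N z ^ m ∂μ) * (↑m.factorial)⁻¹ := by
        rw [lintegral_mul_const _ (f := fun z => ENNReal.ofReal (y - z) * (∫⁻ w, ENNReal.ofReal (z - w) ∂ν) ^ m) (hmesyz.mul (hNmes.pow_const m))]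
        congr 1
        apply setLIntegral_congr_fun measurableSet_Iic
        intro z hz
        dsimp only
        rw [hNres z (le_trans hz hy)]
      have hb3 : (∫⁻ z in Set.Iic y, ENNReal.ofReal (y - z) * N z ^ m ∂μ) * (↑m.factorial)⁻¹
          ≤ (N y ^ (m+1) / ((m:ENNReal)+1)) * (↑m.factorial)⁻¹ :=
        mul_le_mul_left (keyMu μ y (hNfin y hy) m) _
      have harith : (N y ^ (m+1) / ((m:ENNReal)+1)) * (↑m.factorial)⁻¹
          = N y ^ (m+1) / ((m+1).factorial : ENNReal) := by
        have hfacc : ((m+1).factorial : ENNReal) = ((m:ENNReal)+1) * (m.factorial : ENNReal) := by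
          rw [Nat.factorial_succ]; push_cast; ring
        have h0 : ((m:ENNReal)+1) ≠ 0 := by simp
        have hmi : (((m:ENNReal)+1) * (m.factorial:ENNReal))⁻¹
            = ((m:ENNReal)+1)⁻¹ * ((m.factorial:ENNReal))⁻¹ :=
          ENNReal.mul_inv (Or.inl h0) (Or.inr (Nat.cast_ne_zero.mpr m.factorial_ne_zero))
        rw [hfacc, div_eq_mul_inv, div_eq_mul_inv, mul_assoc, hmi]
      calc ∫⁻ z in Set.Iic y, ENNReal.ofReal (y - z) * ψ m z ∂μ
          ≤ _ := hb1
        _ = _ := hb2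
        _ ≤ _ := hb3
        _ = _ := harith
  obtain ⟨h1, h2⟩ := main n x le_rfl
  constructor
  · rw [h1]; exact ENNReal.toReal_nonneg
  · rw [h1]
    have hfin : N x ^ n / (n.factorial : ENNReal) ≠ ⊤ :=
      (ENNReal.div_lt_top (ENNReal.pow_ne_top (hNfin x le_rfl))
        (Nat.cast_ne_zero.mpr n.factorial_ne_zero)).ne
    calc (ψ n x).toReal ≤ (N x ^ n / ↑n.factorial).toReal := ENNReal.toReal_mono hfin h2
      _ = Mfun μ x ^ n / n.factorial := by
          rw [ENNReal.toReal_div, ENNReal.toReal_pow, ENNReal.toReal_natCast]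
          rfl
end

section
/- Let μ be an entrance-type string measure with concentration function M, and let φₙ be the iterated integrals φ₀(x) = 1, φₙ(x) = ∫_{(−∞,x]} (x−y) φₙ₋₁(y) dμ(y). Then for every λ ∈ ℝ (or ℂ) and every x < l the series φ_λ(x) := Σ_{n≥0} (−λ)ⁿ φₙ(x) converges absolutely, the function φ_λ satisfies the integral equation φ_λ(x) = 1 − λ ∫_{(−∞,x]} (x−y) φ_λ(y) dμ(y), and |φ_λ(x)| ≤ exp(|λ| M(x)). -/
open MeasureTheory
open scoped ENNReal

section Aux
open Set

variable (g : ℝ → ℝ≥0∞)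

noncomputable def Gfun (x : ℝ) : ℝ≥0∞ := ∫⁻ u in Set.Iic x, g u
noncomputable def Kfun (n : ℕ) (x : ℝ) : ℝ≥0∞ := ∫⁻ s in Set.Iic x, (Gfun g s) ^ n * g s

lemma Gfun_measurable : Measurable (Gfun g) := by
  have : Monotone (Gfun g) := fun a b hab => lintegral_mono_set (Set.Iic_subset_Iic.2 hab)
  exact this.measurable

lemma fubini_step (hg : Measurable g) (n : ℕ) (x : ℝ) :
    Gfun g x * Kfun g n x
      = Kfun g (n + 1) x + ∫⁻ t in Set.Iic x, g t * Kfun g n t := by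
  classical
  have hGm : Measurable (Gfun g) := Gfun_measurable g
  set F : ℝ → ℝ≥0∞ := fun s => (Gfun g s) ^ n * g s with hF
  have hFm : Measurable F := (hGm.pow_const n).mul hg
  set R : ℝ → ℝ≥0∞ := fun s => ∫⁻ t in Set.Ioc s x, g t with hR
  have hRm : Measurable R := by
    have : Antitone R := fun a b hab => lintegral_mono_set (Set.Ioc_subset_Ioc_left hab)
    exact this.measurable
  -- step 1 : LHS = ∫⁻ s in Iic x, (Gfun g x) * F s
  have h1 : Gfun g x * Kfun g n x = ∫⁻ s in Set.Iic x, Gfun g x * F s := by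
    rw [Kfun, lintegral_const_mul _ hFm]
  -- step 2 : for s ≤ x, Gfun g x = Gfun g s + R s
  have h2 : ∀ s ≤ x, Gfun g x = Gfun g s + R s := by
    intro s hs
    rw [Gfun, Gfun, hR, ← lintegral_union measurableSet_Ioc (Set.Iic_disjoint_Ioc le_rfl),
      Set.Iic_union_Ioc_eq_Iic hs]
  have h3 : Gfun g x * Kfun g n x
      = Kfun g (n + 1) x + ∫⁻ s in Set.Iic x, R s * F s := by
    rw [h1, Kfun, ← lintegral_add_left (by fun_prop : Measurable fun s => (Gfun g s)^(n+1) * g s)]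
    refine setLIntegral_congr_fun measurableSet_Iic ?_
    intro s hs
    beta_reduce
    rw [h2 s hs, add_mul, pow_succ, hF]
    ring
  rw [h3]
  congr 1
  -- step 3 : Tonelli swap
  set h : ℝ → ℝ → ℝ≥0∞ := fun s t =>
    Set.indicator {q : ℝ × ℝ | q.1 < q.2 ∧ q.2 ≤ x} (fun q => F q.1 * g q.2) (s, t) with hh
  have hhm : Measurable (Function.uncurry h) := by
    apply Measurable.indicator
    · exact (hFm.comp measurable_fst).mul (hg.comp measurable_snd)
    · exact (measurableSet_lt measurable_fst measurable_snd).inter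
        (measurable_snd measurableSet_Iic)
  have hL : ∀ s : ℝ, ∫⁻ t, h s t = R s * F s := by
    intro s
    have : ∀ t : ℝ, h s t = (Set.Ioc s x).indicator (fun t => F s * g t) t := by
      intro t
      simp only [hh, Set.indicator_apply, Set.mem_setOf_eq, Set.mem_Ioc]
    simp_rw [this]
    rw [lintegral_indicator measurableSet_Ioc, lintegral_const_mul _ hg, hR, mul_comm]
  have hRsupp : ∀ s : ℝ, ¬ s ≤ x → R s * F s = 0 := by
    intro s hs
    have : Set.Ioc s x = ∅ := Set.Ioc_eq_empty (fun hlt => hs hlt.le)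
    rw [hR]; simp [this]
  have hRt : ∀ t : ℝ, ∫⁻ s, h s t
      = Set.indicator (Set.Iic x) (fun t => g t * Kfun g n t) t := by
    intro t
    by_cases ht : t ≤ x
    · have : ∀ s : ℝ, h s t = (Set.Iio t).indicator (fun s => F s * g t) s := by
        intro s
        simp only [hh, Set.indicator_apply, Set.mem_setOf_eq, Set.mem_Iio, and_iff_left ht]
      simp_rw [this]
      rw [lintegral_indicator measurableSet_Iio, lintegral_mul_const _ hFm,
        Set.indicator_of_mem (Set.mem_Iic.2 ht),
        Measure.restrict_congr_set Iio_ae_eq_Iic, mul_comm]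
      rfl
    · have : ∀ s : ℝ, h s t = 0 := by
        intro s
        simp [hh, Set.indicator_apply, Set.mem_setOf_eq, ht]
      simp [this, Set.indicator_of_notMem, ht]
  calc ∫⁻ s in Set.Iic x, R s * F s
      = ∫⁻ s, Set.indicator (Set.Iic x) (fun s => R s * F s) s := by
        rw [lintegral_indicator measurableSet_Iic]
    _ = ∫⁻ s, R s * F s := by
        refine lintegral_congr fun s => ?_
        by_cases hs : s ≤ x
        · simp [Set.indicator_apply, Set.mem_Iic, hs]
        · simp [Set.indicator_apply, Set.mem_Iic, hs, hRsupp s hs]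
    _ = ∫⁻ s, ∫⁻ t, h s t := lintegral_congr fun s => (hL s).symm
    _ = ∫⁻ t, ∫⁻ s, h s t := lintegral_lintegral_swap hhm.aemeasurable
    _ = ∫⁻ t, Set.indicator (Set.Iic x) (fun t => g t * Kfun g n t) t := lintegral_congr hRt
    _ = ∫⁻ t in Set.Iic x, g t * Kfun g n t := by rw [lintegral_indicator measurableSet_Iic]

lemma key_chain (hg : Measurable g) : ∀ (n : ℕ) (x : ℝ),
    ((n : ℝ≥0∞) + 1) * Kfun g n x = (Gfun g x) ^ (n + 1) := by
  intro n
  induction n with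
  | zero => intro x; simp [Kfun, Gfun]
  | succ n ih =>
    intro x
    have h := fubini_step g hg n x
    have hconst : ((n : ℝ≥0∞) + 1) ≠ ⊤ := by simp
    have h2 : ((n : ℝ≥0∞) + 1) * ∫⁻ t in Set.Iic x, g t * Kfun g n t = Kfun g (n + 1) x := by
      rw [← lintegral_const_mul' _ _ hconst, Kfun]
      refine lintegral_congr fun t => ?_
      rw [← mul_assoc, mul_comm ((n : ℝ≥0∞) + 1) (g t), mul_assoc, ih t, mul_comm]
    have lhs : ((n : ℝ≥0∞) + 1) * (Gfun g x * Kfun g n x) = Gfun g x ^ (n + 2) := by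
      rw [← mul_assoc, mul_comm ((n : ℝ≥0∞) + 1) (Gfun g x), mul_assoc, ih x]
      exact (pow_succ' _ _).symm
    have h3 : Gfun g x ^ (n + 2) = ((n : ℝ≥0∞) + 1) * Kfun g (n + 1) x + Kfun g (n + 1) x := by
      rw [← lhs, h, mul_add, h2]
    rw [h3]
    push_cast
    ring

lemma swap_repr (μ : Measure ℝ) (x : ℝ) (hx : μ (Set.Iic x) < ⊤)
    (W : ℝ → ℝ≥0∞) (hW : Measurable W) :
    ∫⁻ y in Set.Iic x, ENNReal.ofReal (x - y) * W y ∂μ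
      = ∫⁻ s in Set.Iic x, (∫⁻ y in Set.Iio s, W y ∂μ) := by
  classical
  have hfin : IsFiniteMeasure (μ.restrict (Set.Iic x)) := by
    constructor; rwa [Measure.restrict_apply_univ]
  set h : ℝ → ℝ → ℝ≥0∞ := fun y s =>
    Set.indicator {q : ℝ × ℝ | q.1 < q.2 ∧ q.2 ≤ x} (fun q => W q.1) (y, s) with hh
  have hhm : Measurable (Function.uncurry h) := by
    apply Measurable.indicator
    · exact hW.comp measurable_fst
    · exact (measurableSet_lt measurable_fst measurable_snd).inter
        (measurable_snd measurableSet_Iic)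
  have step1 : ∫⁻ y in Set.Iic x, ENNReal.ofReal (x - y) * W y ∂μ
      = ∫⁻ y, (∫⁻ s, h y s) ∂(μ.restrict (Set.Iic x)) := by
    refine lintegral_congr_ae ?_
    filter_upwards [ae_restrict_mem measurableSet_Iic] with y hy
    have : ∀ s : ℝ, h y s = (Set.Ioc y x).indicator (fun _ => W y) s := by
      intro s
      simp only [hh, Set.indicator_apply, Set.mem_setOf_eq, Set.mem_Ioc]
    simp_rw [this]
    rw [lintegral_indicator measurableSet_Ioc, setLIntegral_const, Real.volume_Ioc, mul_comm]
  have step2 : ∀ s : ℝ, (∫⁻ y, h y s ∂(μ.restrict (Set.Iic x)))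
      = Set.indicator (Set.Iic x) (fun s => ∫⁻ y in Set.Iio s, W y ∂μ) s := by
    intro s
    by_cases hs : s ≤ x
    · have : ∀ y : ℝ, h y s = (Set.Iio s).indicator W y := by
        intro y
        simp only [hh, Set.indicator_apply, Set.mem_setOf_eq, Set.mem_Iio, and_iff_left hs]
      simp_rw [this]
      rw [lintegral_indicator measurableSet_Iio,
        Measure.restrict_restrict measurableSet_Iio,
        show Set.Iio s ∩ Set.Iic x = Set.Iio s from
          Set.inter_eq_left.2 (fun t ht => le_trans (le_of_lt ht) hs)]
      exact (Set.indicator_of_mem (show s ∈ Set.Iic x from hs)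
        (fun s => ∫⁻ y in Set.Iio s, W y ∂μ)).symm
    · have : ∀ y : ℝ, h y s = 0 := by
        intro y
        simp [hh, Set.indicator_apply, Set.mem_setOf_eq, hs]
      simp [this, Set.indicator_of_notMem, hs]
  rw [step1, lintegral_lintegral_swap hhm.aemeasurable]
  simp_rw [step2]
  rw [lintegral_indicator measurableSet_Iic]


noncomputable def Mbar (μ : Measure ℝ) (x : ℝ) : ℝ≥0∞ :=
  ∫⁻ y in Set.Iic x, ENNReal.ofReal (x - y) ∂μ

lemma Mbar_mono (μ : Measure ℝ) {x y : ℝ} (h : y ≤ x) : Mbar μ y ≤ Mbar μ x := by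
  calc ∫⁻ t in Set.Iic y, ENNReal.ofReal (y - t) ∂μ
      ≤ ∫⁻ t in Set.Iic y, ENNReal.ofReal (x - t) ∂μ :=
        lintegral_mono fun t => ENNReal.ofReal_le_ofReal (by linarith)
    _ ≤ ∫⁻ t in Set.Iic x, ENNReal.ofReal (x - t) ∂μ :=
        lintegral_mono_set (Set.Iic_subset_Iic.2 h)

lemma measurable_mIio (μ : Measure ℝ) : Measurable (fun s => μ (Set.Iio s)) := by
  have : Monotone (fun s => μ (Set.Iio s)) :=
    fun a b hab => measure_mono (Set.Iio_subset_Iio hab)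
  exact this.measurable

lemma Mbar_repr (μ : Measure ℝ) (x : ℝ) (hx : μ (Set.Iic x) < ⊤) :
    Mbar μ x = Gfun (fun s => μ (Set.Iio s)) x := by
  have := swap_repr μ x hx (fun _ => 1) measurable_const
  simp only [mul_one, lintegral_one, Measure.restrict_apply MeasurableSet.univ,
    Set.univ_inter] at this
  exact this

lemma lemB (μ : Measure ℝ) (x : ℝ) (hx : μ (Set.Iic x) < ⊤) (n : ℕ) :
    ((n : ℝ≥0∞) + 1) * ∫⁻ y in Set.Iic x, ENNReal.ofReal (x - y) * (Mbar μ y) ^ n ∂μ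
      ≤ (Mbar μ x) ^ (n + 1) := by
  set g : ℝ → ℝ≥0∞ := fun s => μ (Set.Iio s) with hgdef
  have hg : Measurable g := measurable_mIio μ
  have hMm : Measurable (fun y => Mbar μ y) := by
    have : Monotone (fun y => Mbar μ y) := fun a b hab => Mbar_mono μ hab
    exact this.measurable
  have hfin : ∀ t ≤ x, μ (Set.Iic t) < ⊤ :=
    fun t ht => lt_of_le_of_lt (measure_mono (Set.Iic_subset_Iic.2 ht)) hx
  have hGrepr : ∀ t ≤ x, Mbar μ t = Gfun g t := fun t ht => Mbar_repr μ t (hfin t ht)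
  have hswap := swap_repr μ x hx (fun y => (Mbar μ y) ^ n) (hMm.pow_const n)
  rw [hswap]
  have hbound : ∫⁻ s in Set.Iic x, (∫⁻ y in Set.Iio s, (Mbar μ y) ^ n ∂μ)
      ≤ Kfun g n x := by
    refine setLIntegral_mono ((Gfun_measurable g).pow_const n |>.mul hg) fun s hs => ?_
    calc ∫⁻ y in Set.Iio s, (Mbar μ y) ^ n ∂μ
        ≤ ∫⁻ _ in Set.Iio s, (Mbar μ s) ^ n ∂μ := by
          refine setLIntegral_mono measurable_const fun y hy => ?_
          exact pow_le_pow_left' (Mbar_mono μ (le_of_lt hy)) n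
      _ = (Mbar μ s) ^ n * μ (Set.Iio s) := setLIntegral_const _ _
      _ = (Gfun g s) ^ n * g s := by rw [hGrepr s hs]
  calc ((n : ℝ≥0∞) + 1) * ∫⁻ s in Set.Iic x, (∫⁻ y in Set.Iio s, (Mbar μ y) ^ n ∂μ)
      ≤ ((n : ℝ≥0∞) + 1) * Kfun g n x := mul_le_mul_right hbound _
    _ = (Gfun g x) ^ (n + 1) := key_chain g hg n x
    _ = (Mbar μ x) ^ (n + 1) := by rw [hGrepr x le_rfl]

lemma belowL_mono {μ : Measure ℝ} {x y : ℝ} (h : y ≤ x) (hx : belowL μ x) : belowL μ y := by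
  obtain ⟨z, hz1, hz2⟩ := hx
  exact ⟨z, lt_of_le_of_lt h hz1, hz2⟩

lemma belowL_finite {μ : Measure ℝ} {x : ℝ} (hx : belowL μ x) : μ (Set.Iic x) < ⊤ := by
  obtain ⟨z, hz1, hz2⟩ := hx
  exact lt_of_le_of_lt (measure_mono (Set.Iic_subset_Iic.2 hz1.le)) hz2

lemma Mfun_eq_toReal (μ : Measure ℝ) (x : ℝ) : Mfun μ x = (Mbar μ x).toReal := rfl

lemma Mfun_nonneg (μ : Measure ℝ) (x : ℝ) : 0 ≤ Mfun μ x := ENNReal.toReal_nonneg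

lemma Mbar_ne_top {μ : Measure ℝ} (hμ : IsEntrance μ) {x : ℝ} (hx : belowL μ x) :
    Mbar μ x ≠ ⊤ := (hμ x hx).ne

lemma ofReal_Mfun {μ : Measure ℝ} (hμ : IsEntrance μ) {x : ℝ} (hx : belowL μ x) :
    ENNReal.ofReal (Mfun μ x) = Mbar μ x :=
  ENNReal.ofReal_toReal (Mbar_ne_top hμ hx)

lemma Mfun_mono {μ : Measure ℝ} (hμ : IsEntrance μ) {x y : ℝ} (h : y ≤ x)
    (hx : belowL μ x) : Mfun μ y ≤ Mfun μ x := by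
  rw [Mfun_eq_toReal, Mfun_eq_toReal]
  exact ENNReal.toReal_mono (Mbar_ne_top hμ hx) (Mbar_mono μ h)

lemma kernel_lintegral_le {μ : Measure ℝ} (hμ : IsEntrance μ) {φn : ℝ → ℝ} {n : ℕ}
    {x : ℝ} (hx : belowL μ x)
    (hb : ∀ y ≤ x, |φn y| ≤ Mfun μ y ^ n / n.factorial) :
    ∫⁻ y in Set.Iic x, ENNReal.ofReal ‖(x - y) * φn y‖ ∂μ
      ≤ ENNReal.ofReal (Mfun μ x ^ (n + 1) / (n + 1).factorial) := by
  have hMm : Measurable (fun y => Mbar μ y) := by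
    have : Monotone (fun y => Mbar μ y) := fun a b hab => Mbar_mono μ hab
    exact this.measurable
  have hfact : (0:ℝ) < n.factorial := by positivity
  have step1 : ∫⁻ y in Set.Iic x, ENNReal.ofReal ‖(x - y) * φn y‖ ∂μ
      ≤ ∫⁻ y in Set.Iic x,
          ENNReal.ofReal (1 / n.factorial) * (ENNReal.ofReal (x - y) * (Mbar μ y) ^ n) ∂μ := by
    refine setLIntegral_mono ?_ fun y hy => ?_
    · exact (measurable_const.mul
        (((measurable_const.sub measurable_id).ennreal_ofReal).mul (hMm.pow_const n)))
    · have hy' : y ≤ x := hy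
      have h1 : ‖(x - y) * φn y‖ = (x - y) * |φn y| := by
        rw [Real.norm_eq_abs, abs_mul, abs_of_nonneg (by linarith : (0:ℝ) ≤ x - y)]
      have h2 : (x - y) * |φn y| ≤ (x - y) * (Mfun μ y ^ n / n.factorial) := by
        apply mul_le_mul_of_nonneg_left (hb y hy') (by linarith)
      calc ENNReal.ofReal ‖(x - y) * φn y‖
          ≤ ENNReal.ofReal ((x - y) * (Mfun μ y ^ n / n.factorial)) := by
            rw [h1]; exact ENNReal.ofReal_le_ofReal h2
        _ = ENNReal.ofReal (1 / n.factorial) * (ENNReal.ofReal (x - y) * (Mbar μ y) ^ n) := by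
            rw [show (x - y) * (Mfun μ y ^ n / n.factorial)
                = (1 / n.factorial) * ((x - y) * Mfun μ y ^ n) by ring,
              ENNReal.ofReal_mul (by positivity),
              ENNReal.ofReal_mul (by linarith : (0:ℝ) ≤ x - y),
              ENNReal.ofReal_pow (Mfun_nonneg μ y),
              ofReal_Mfun hμ (belowL_mono hy' hx)]
  have step2 : ∫⁻ y in Set.Iic x,
        ENNReal.ofReal (1 / n.factorial) * (ENNReal.ofReal (x - y) * (Mbar μ y) ^ n) ∂μ
      = ENNReal.ofReal (1 / n.factorial)
        * ∫⁻ y in Set.Iic x, ENNReal.ofReal (x - y) * (Mbar μ y) ^ n ∂μ :=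
    lintegral_const_mul' _ _ ENNReal.ofReal_ne_top
  have step3 : ∫⁻ y in Set.Iic x, ENNReal.ofReal (x - y) * (Mbar μ y) ^ n ∂μ
      ≤ (Mbar μ x) ^ (n + 1) / ((n : ℝ≥0∞) + 1) := by
    rw [ENNReal.le_div_iff_mul_le (Or.inl (by simp)) (Or.inl (by simp))]
    rw [mul_comm]
    exact lemB μ x (belowL_finite hx) n
  have step4 : ENNReal.ofReal (1 / n.factorial) * ((Mbar μ x) ^ (n + 1) / ((n : ℝ≥0∞) + 1))
      = ENNReal.ofReal (Mfun μ x ^ (n + 1) / (n + 1).factorial) := by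
    have hnn : ((n : ℝ≥0∞) + 1) = ENNReal.ofReal ((n : ℝ) + 1) := by
      rw [show ((n : ℝ) + 1) = ((n + 1 : ℕ) : ℝ) by push_cast; ring, ENNReal.ofReal_natCast]
      push_cast; ring
    rw [← ofReal_Mfun hμ hx, ← ENNReal.ofReal_pow (Mfun_nonneg μ x), hnn,
      ← ENNReal.ofReal_div_of_pos (by positivity), ← ENNReal.ofReal_mul (by positivity)]
    congr 1
    have hfe : (((n+1).factorial : ℕ) : ℝ) = ((n:ℝ) + 1) * (n.factorial : ℝ) := by
      rw [Nat.factorial_succ]; push_cast; ring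
    rw [hfe, one_div, inv_mul_eq_div, div_div, mul_comm ((n:ℝ)+1)]
  calc ∫⁻ y in Set.Iic x, ENNReal.ofReal ‖(x - y) * φn y‖ ∂μ
      ≤ _ := step1
    _ = _ := step2
    _ ≤ ENNReal.ofReal (1 / n.factorial) * ((Mbar μ x) ^ (n + 1) / ((n : ℝ≥0∞) + 1)) :=
        mul_le_mul_right step3 _
    _ = _ := step4

lemma phi_main (μ : Measure ℝ) (hμ : IsEntrance μ) (φ : ℕ → ℝ → ℝ)
    (hφ0 : ∀ x : ℝ, φ 0 x = 1)
    (hφ : ∀ (n : ℕ) (x : ℝ), φ (n + 1) x = ∫ y in Set.Iic x, (x - y) * φ n y ∂μ)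
    (x₀ : ℝ) (hx₀ : belowL μ x₀) (n : ℕ) :
    AEStronglyMeasurable (φ n) (μ.restrict (Set.Iic x₀)) ∧
    (∀ x ≤ x₀, |φ n x| ≤ Mfun μ x ^ n / n.factorial) := by
  have hfin : IsFiniteMeasure (μ.restrict (Set.Iic x₀)) := by
    constructor
    rw [Measure.restrict_apply_univ]
    exact belowL_finite hx₀
  induction n with
  | zero =>
    constructor
    · have : φ 0 = fun _ => (1:ℝ) := funext hφ0
      rw [this]; exact aestronglyMeasurable_const
    · intro x _; rw [hφ0 x]; simp
  | succ n ih =>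
    obtain ⟨ihm, ihb⟩ := ih
    set ν := μ.restrict (Set.Iic x₀) with hν
    obtain ⟨ψ, hψm, hψae⟩ := ihm
    -- pointwise description for x ≤ x₀
    have hre : ∀ x ≤ x₀, μ.restrict (Set.Iic x) = ν.restrict (Set.Iic x) := by
      intro x hxle
      rw [hν, Measure.restrict_restrict measurableSet_Iic,
        Set.inter_eq_left.2 (Set.Iic_subset_Iic.2 hxle)]
    have hptw : ∀ x ≤ x₀, φ (n+1) x = ∫ y, (Set.Iic x).indicator (fun y => (x - y) * ψ y) y ∂ν := by
      intro x hxle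
      rw [hφ n x, integral_indicator measurableSet_Iic, ← hre x hxle]
      refine integral_congr_ae ?_
      have : φ n =ᵐ[μ.restrict (Set.Iic x)] ψ := by
        rw [hre x hxle]
        exact hψae.filter_mono (ae_mono Measure.restrict_le_self)
      filter_upwards [this] with y hy
      rw [hy]
    have hF : StronglyMeasurable (Function.uncurry
        (fun x y => (Set.Iic x).indicator (fun y => (x - y) * ψ y) y)) := by
      apply Measurable.stronglyMeasurable
      have : (Function.uncurry (fun x y => (Set.Iic x).indicator (fun y => (x - y) * ψ y) y))
          = Set.indicator {p : ℝ × ℝ | p.2 ≤ p.1} (fun p => (p.1 - p.2) * ψ p.2) := by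
        ext p
        simp only [Function.uncurry, Set.indicator_apply, Set.mem_Iic, Set.mem_setOf_eq]
      rw [this]
      exact (((measurable_fst.sub measurable_snd).mul
        (hψm.measurable.comp measurable_snd))).indicator
        (measurableSet_le measurable_snd measurable_fst)
    have hΨm : StronglyMeasurable
        (fun x => ∫ y, (Set.Iic x).indicator (fun y => (x - y) * ψ y) y ∂ν) :=
      hF.integral_prod_right
    constructor
    · refine ⟨_, hΨm, ?_⟩
      filter_upwards [ae_restrict_mem measurableSet_Iic] with x hx
      exact hptw x hx
    · intro x hxle
      have hbx : belowL μ x := belowL_mono hxle hx₀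
      have hker := kernel_lintegral_le hμ hbx (fun y hy => ihb y (le_trans hy hxle))
      calc |φ (n+1) x| = ‖∫ y in Set.Iic x, (x - y) * φ n y ∂μ‖ := by
            rw [hφ n x, Real.norm_eq_abs]
        _ ≤ (∫⁻ y in Set.Iic x, ENNReal.ofReal ‖(x - y) * φ n y‖ ∂μ).toReal :=
            norm_integral_le_lintegral_norm _
        _ ≤ (ENNReal.ofReal (Mfun μ x ^ (n + 1) / (n + 1).factorial)).toReal :=
            ENNReal.toReal_mono ENNReal.ofReal_ne_top hker
        _ = Mfun μ x ^ (n + 1) / (n + 1).factorial := by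
            rw [ENNReal.toReal_ofReal
              (div_nonneg (pow_nonneg (Mfun_nonneg μ x) _) (by positivity))]

end Aux

theorem stmt_1 (μ : Measure ℝ) (hμ : IsEntrance μ)
    (φ : ℕ → ℝ → ℝ)
    (hφ0 : ∀ x : ℝ, φ 0 x = 1)
    (hφ : ∀ (n : ℕ) (x : ℝ), φ (n + 1) x = ∫ y in Set.Iic x, (x - y) * φ n y ∂μ)
    (lam : ℝ) :
    ∀ x : ℝ, belowL μ x →
      Summable (fun n : ℕ => |(-lam) ^ n * φ n x|) ∧
      (∑' n : ℕ, (-lam) ^ n * φ n x) =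
        1 - lam * ∫ y in Set.Iic x, (x - y) * (∑' n : ℕ, (-lam) ^ n * φ n y) ∂μ ∧
      |∑' n : ℕ, (-lam) ^ n * φ n x| ≤ Real.exp (|lam| * Mfun μ x) := by
  intro x hx
  have hbnd : ∀ (z : ℝ), belowL μ z → ∀ n : ℕ,
      |(-lam) ^ n * φ n z| ≤ (|lam| * Mfun μ z) ^ n / n.factorial := by
    intro z hz n
    have h1 := (phi_main μ hμ φ hφ0 hφ z hz n).2 z le_rfl
    calc |(-lam) ^ n * φ n z| = |lam| ^ n * |φ n z| := by
          rw [abs_mul, abs_pow, abs_neg]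
      _ ≤ |lam| ^ n * (Mfun μ z ^ n / n.factorial) := by
          exact mul_le_mul_of_nonneg_left h1 (by positivity)
      _ = (|lam| * Mfun μ z) ^ n / n.factorial := by
          rw [mul_pow]; ring
  have hBsum : ∀ z : ℝ, Summable (fun n : ℕ => (|lam| * Mfun μ z) ^ n / n.factorial) :=
    fun z => Real.summable_pow_div_factorial _
  have hsumabs : ∀ (z : ℝ), belowL μ z → Summable (fun n : ℕ => |(-lam) ^ n * φ n z|) :=
    fun z hz => Summable.of_nonneg_of_le (fun n => abs_nonneg _) (hbnd z hz) (hBsum z)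
  have hsum : ∀ (z : ℝ), belowL μ z → Summable (fun n : ℕ => (-lam) ^ n * φ n z) :=
    fun z hz => (hsumabs z hz).of_abs
  have hexp : ∀ z : ℝ, Real.exp (|lam| * Mfun μ z)
      = ∑' n : ℕ, (|lam| * Mfun μ z) ^ n / n.factorial := by
    intro z
    rw [Real.exp_eq_exp_ℝ, NormedSpace.exp_eq_tsum_div]
  refine ⟨hsumabs x hx, ?_, ?_⟩
  · -- the integral equation
    set S : ℝ → ℝ := fun y => ∑' n : ℕ, (-lam) ^ n * φ n y with hS
    have hAESM : ∀ n : ℕ, AEStronglyMeasurable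
        (fun y => (x - y) * ((-lam) ^ n * φ n y)) (μ.restrict (Set.Iic x)) := by
      intro n
      exact ((measurable_const.sub measurable_id).aestronglyMeasurable).mul
        (aestronglyMeasurable_const.mul (phi_main μ hμ φ hφ0 hφ x hx n).1)
    have hlint : ∀ n : ℕ, ∫⁻ y in Set.Iic x, ‖(x - y) * ((-lam) ^ n * φ n y)‖₊ ∂μ
        ≤ ENNReal.ofReal (Mfun μ x * ((|lam| * Mfun μ x) ^ n / n.factorial)) := by
      intro n
      have hker := kernel_lintegral_le hμ hx
        (fun y hy => (phi_main μ hμ φ hφ0 hφ x hx n).2 y hy)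
      have heq : ∀ y : ℝ, (‖(x - y) * ((-lam) ^ n * φ n y)‖₊ : ℝ≥0∞)
          = ENNReal.ofReal (|lam| ^ n) * ENNReal.ofReal ‖(x - y) * φ n y‖ := by
        intro y
        rw [← enorm_eq_nnnorm, ← ofReal_norm, ← ENNReal.ofReal_mul (by positivity)]
        congr 1
        rw [Real.norm_eq_abs, Real.norm_eq_abs]
        rw [abs_mul, abs_mul, abs_mul, abs_pow, abs_neg]
        ring
      calc ∫⁻ y in Set.Iic x, ‖(x - y) * ((-lam) ^ n * φ n y)‖₊ ∂μ
          = ENNReal.ofReal (|lam| ^ n)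
            * ∫⁻ y in Set.Iic x, ENNReal.ofReal ‖(x - y) * φ n y‖ ∂μ := by
            simp_rw [heq]
            exact lintegral_const_mul' _ _ ENNReal.ofReal_ne_top
        _ ≤ ENNReal.ofReal (|lam| ^ n)
            * ENNReal.ofReal (Mfun μ x ^ (n + 1) / (n + 1).factorial) :=
            mul_le_mul_right hker _
        _ ≤ ENNReal.ofReal (Mfun μ x * ((|lam| * Mfun μ x) ^ n / n.factorial)) := by
            rw [← ENNReal.ofReal_mul (by positivity)]
            apply ENNReal.ofReal_le_ofReal
            rw [mul_pow]
            have h1 : (0:ℝ) < n.factorial := by positivity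
            have h2 : (n.factorial : ℝ) ≤ (n+1).factorial := by
              exact_mod_cast Nat.factorial_le (Nat.le_succ n)
            have hM := Mfun_nonneg μ x
            have hnum : (0:ℝ) ≤ Mfun μ x * (|lam| ^ n * Mfun μ x ^ n) :=
              mul_nonneg hM (mul_nonneg (by positivity) (pow_nonneg hM n))
            calc |lam| ^ n * (Mfun μ x ^ (n+1) / ((n+1).factorial : ℝ))
                = Mfun μ x * (|lam| ^ n * Mfun μ x ^ n) / ((n+1).factorial : ℝ) := by ring
              _ ≤ Mfun μ x * (|lam| ^ n * Mfun μ x ^ n) / (n.factorial : ℝ) :=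
                  div_le_div_of_nonneg_left hnum h1 h2
              _ = Mfun μ x * (|lam| ^ n * Mfun μ x ^ n / n.factorial) := by ring
    have htsum_ne : (∑' n : ℕ, ∫⁻ y in Set.Iic x, ‖(x - y) * ((-lam) ^ n * φ n y)‖₊ ∂μ) ≠ ⊤ := by
      apply ne_top_of_le_ne_top ?_ (ENNReal.tsum_le_tsum hlint)
      rw [← ENNReal.ofReal_tsum_of_nonneg (fun n => mul_nonneg (Mfun_nonneg μ x)
        (div_nonneg (pow_nonneg (mul_nonneg (abs_nonneg _) (Mfun_nonneg μ x)) n)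
          (by positivity)))
        ((hBsum x).mul_left (Mfun μ x))]
      exact ENNReal.ofReal_ne_top
    have hswap := integral_tsum hAESM htsum_ne
    have hx_eq : ∑' n : ℕ, (-lam) ^ n * φ n x
        = 1 + ∑' n : ℕ, (-lam) ^ (n+1) * φ (n+1) x := by
      rw [Summable.tsum_eq_zero_add (hsum x hx)]
      congr 1
      rw [pow_zero, one_mul, hφ0 x]
    rw [hx_eq]
    have step : ∑' n : ℕ, (-lam) ^ (n+1) * φ (n+1) x
        = (-lam) * ∫ y in Set.Iic x, (x - y) * S y ∂μ := by
      calc ∑' n : ℕ, (-lam) ^ (n+1) * φ (n+1) x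
          = ∑' n : ℕ, (-lam) * ((-lam) ^ n
              * ∫ y in Set.Iic x, (x - y) * φ n y ∂μ) := by
            refine tsum_congr fun n => ?_
            rw [pow_succ, hφ n x]; ring
        _ = (-lam) * ∑' n : ℕ, ((-lam) ^ n * ∫ y in Set.Iic x, (x - y) * φ n y ∂μ) :=
            tsum_mul_left
        _ = (-lam) * ∑' n : ℕ, ∫ y in Set.Iic x, (x - y) * ((-lam) ^ n * φ n y) ∂μ := by
            congr 1
            refine tsum_congr fun n => ?_
            rw [← integral_const_mul]
            refine integral_congr_ae (Filter.Eventually.of_forall fun y => ?_)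
            ring
        _ = (-lam) * ∫ y in Set.Iic x, (∑' n : ℕ, (x - y) * ((-lam) ^ n * φ n y)) ∂μ := by
            rw [hswap]
        _ = (-lam) * ∫ y in Set.Iic x, (x - y) * S y ∂μ := by
            congr 1
            refine integral_congr_ae (Filter.Eventually.of_forall fun y => ?_)
            rw [hS]
            exact tsum_mul_left
    rw [step]
    ring
  · -- the exponential bound
    calc |∑' n : ℕ, (-lam) ^ n * φ n x|
        ≤ ∑' n : ℕ, |(-lam) ^ n * φ n x| := by
          have h := norm_tsum_le_tsum_norm (f := fun n : ℕ => (-lam) ^ n * φ n x)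
            (by simpa only [Real.norm_eq_abs] using hsumabs x hx)
          simpa only [Real.norm_eq_abs] using h
      _ ≤ ∑' n : ℕ, (|lam| * Mfun μ x) ^ n / n.factorial :=
          Summable.tsum_le_tsum (hbnd x hx) (hsumabs x hx) (hBsum x)
      _ = Real.exp (|lam| * Mfun μ x) := (hexp x).symm
end

section
/- Let μ be an entrance-type string measure and λ ∈ ℝ (or ℂ). Then the integral equation φ(x) = 1 − λ ∫_{(−∞,x]} (x−y) φ(y) dμ(y) has at most one solution among locally bounded measurable functions on (−∞,l): if φ and ψ are two locally bounded measurable functions on (−∞,l) both satisfying this equation, then φ = ψ on (−∞,l). -/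
open MeasureTheory

/-- Integrability of the kernel against a bounded measurable function. -/
lemma integrable_ker (μ : Measure ℝ) (x₀ x : ℝ) (hx : x ≤ x₀)
    (hM : (∫⁻ y in Set.Iic x₀, ENNReal.ofReal (x₀ - y) ∂μ) ≠ ⊤)
    (f : ℝ → ℝ) (hf : Measurable f) (C : ℝ) (hC : ∀ y ≤ x₀, |f y| ≤ C) :
    Integrable (fun y => (x - y) * f y) (μ.restrict (Set.Iic x)) := by
  have hC0 : 0 ≤ C := le_trans (abs_nonneg _) (hC x₀ le_rfl)
  refine ⟨((measurable_const.sub measurable_id).mul hf).aestronglyMeasurable, ?_⟩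
  rw [hasFiniteIntegral_iff_norm]
  calc ∫⁻ y in Set.Iic x, ENNReal.ofReal ‖(x - y) * f y‖ ∂μ
      ≤ ∫⁻ y in Set.Iic x, ENNReal.ofReal C * ENNReal.ofReal (x₀ - y) ∂μ := by
        refine setLIntegral_mono
          (measurable_const.mul ((measurable_const.sub measurable_id).ennreal_ofReal)) ?_
        intro y hy
        have hy' : y ≤ x := hy
        have hyx₀ : y ≤ x₀ := hy'.trans hx
        rw [← ENNReal.ofReal_mul hC0]
        apply ENNReal.ofReal_le_ofReal
        have h1 : ‖(x - y) * f y‖ = (x - y) * |f y| := by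
          rw [norm_mul, Real.norm_eq_abs, Real.norm_eq_abs, abs_of_nonneg (by linarith)]
        rw [h1]
        calc (x - y) * |f y| ≤ (x₀ - y) * C :=
              mul_le_mul (by linarith) (hC y hyx₀) (abs_nonneg _) (by linarith)
          _ = C * (x₀ - y) := mul_comm _ _
    _ = ENNReal.ofReal C * ∫⁻ y in Set.Iic x, ENNReal.ofReal (x₀ - y) ∂μ :=
        lintegral_const_mul _ ((measurable_const.sub measurable_id).ennreal_ofReal)
    _ ≤ ENNReal.ofReal C * ∫⁻ y in Set.Iic x₀, ENNReal.ofReal (x₀ - y) ∂μ := by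
        gcongr
    _ < ⊤ := ENNReal.mul_lt_top ENNReal.ofReal_lt_top hM.lt_top

/-- Key contraction lemma: if `δ` satisfies the homogeneous equation up to `x₀`, vanishes on
`Z`, and the mass of the kernel on `S ⊇ (Iio x \ Z)` is small, then `δ` vanishes on `Iic b`. -/
lemma key_zero (μ : Measure ℝ) (lam x₀ C : ℝ) (δ : ℝ → ℝ)
    (hC : ∀ y ≤ x₀, |δ y| ≤ C)
    (hδeq : ∀ x ≤ x₀, δ x = -lam * ∫ y in Set.Iic x, (x - y) * δ y ∂μ)
    (b : ℝ) (hb : b ≤ x₀) (Z S : Set ℝ) (hS : MeasurableSet S)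
    (hZ : ∀ y ∈ Z, δ y = 0)
    (hsub : ∀ x ≤ b, Set.Iio x \ Z ⊆ S)
    (hfin : (∫⁻ y in S, ENNReal.ofReal (x₀ - y) ∂μ) ≠ ⊤)
    (hsmall : |lam| * (∫⁻ y in S, ENNReal.ofReal (x₀ - y) ∂μ).toReal ≤ 1/2) :
    ∀ x ≤ b, δ x = 0 := by
  set K := ∫⁻ y in S, ENNReal.ofReal (x₀ - y) ∂μ with hK
  have hC0 : 0 ≤ C := le_trans (abs_nonneg _) (hC x₀ le_rfl)
  have main : ∀ n : ℕ, ∀ x ≤ b, |δ x| ≤ C / 2 ^ n := by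
    intro n
    induction n with
    | zero => intro x hx; simpa using hC x (hx.trans hb)
    | succ n ih =>
      intro x hx
      have hxx₀ : x ≤ x₀ := hx.trans hb
      have hCn : 0 ≤ C / 2 ^ n := by positivity
      rw [hδeq x hxx₀, abs_mul, abs_neg]
      have hnorm : |∫ y in Set.Iic x, (x - y) * δ y ∂μ|
          ≤ (∫⁻ y in Set.Iic x, ENNReal.ofReal ‖(x - y) * δ y‖ ∂μ).toReal := by
        simpa [Real.norm_eq_abs] using
          norm_integral_le_lintegral_norm (μ := μ.restrict (Set.Iic x))
            (fun y => (x - y) * δ y)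
      have hLb : (∫⁻ y in Set.Iic x, ENNReal.ofReal ‖(x - y) * δ y‖ ∂μ)
          ≤ ENNReal.ofReal (C / 2 ^ n) * K := by
        have hmeasg : Measurable (fun y : ℝ => ENNReal.ofReal (x₀ - y)) :=
          (measurable_const.sub measurable_id').ennreal_ofReal
        rw [hK, ← lintegral_const_mul _ hmeasg,
          ← lintegral_indicator measurableSet_Iic, ← lintegral_indicator hS]
        apply lintegral_mono
        intro y
        by_cases hy : y ∈ Set.Iic x
        · rw [Set.indicator_of_mem hy]
          by_cases hyS : y ∈ S
          · rw [Set.indicator_of_mem hyS, ← ENNReal.ofReal_mul hCn]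
            apply ENNReal.ofReal_le_ofReal
            have hy' : y ≤ x := hy
            have h1 : ‖(x - y) * δ y‖ = (x - y) * |δ y| := by
              rw [norm_mul, Real.norm_eq_abs, Real.norm_eq_abs, abs_of_nonneg (by linarith)]
            rw [h1]
            calc (x - y) * |δ y| ≤ (x₀ - y) * (C / 2 ^ n) :=
                  mul_le_mul (by linarith) (ih y (hy'.trans hx)) (abs_nonneg _) (by linarith)
              _ = (C / 2 ^ n) * (x₀ - y) := mul_comm _ _
          · have hzero : (x - y) * δ y = 0 := by
              rcases lt_or_eq_of_le (Set.mem_Iic.mp hy) with h | h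
              · by_cases hyZ : y ∈ Z
                · rw [hZ y hyZ, mul_zero]
                · exact absurd (hsub x hx ⟨h, hyZ⟩) hyS
              · rw [h, sub_self, zero_mul]
            simp [hzero]
        · rw [Set.indicator_of_notMem hy]
          exact zero_le
      have hmulne : ENNReal.ofReal (C / 2 ^ n) * K ≠ ⊤ :=
        ENNReal.mul_ne_top ENNReal.ofReal_ne_top hfin
      have hstep : |∫ y in Set.Iic x, (x - y) * δ y ∂μ| ≤ C / 2 ^ n * K.toReal := by
        calc |∫ y in Set.Iic x, (x - y) * δ y ∂μ|
            ≤ (ENNReal.ofReal (C / 2 ^ n) * K).toReal :=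
              hnorm.trans (ENNReal.toReal_mono hmulne hLb)
          _ = C / 2 ^ n * K.toReal := by
              rw [ENNReal.toReal_mul, ENNReal.toReal_ofReal hCn]
      calc |lam| * |∫ y in Set.Iic x, (x - y) * δ y ∂μ|
          ≤ |lam| * (C / 2 ^ n * K.toReal) :=
            mul_le_mul_of_nonneg_left hstep (abs_nonneg _)
        _ = C / 2 ^ n * (|lam| * K.toReal) := by ring
        _ ≤ C / 2 ^ n * (1 / 2) := mul_le_mul_of_nonneg_left hsmall hCn
        _ = C / 2 ^ (n + 1) := by rw [pow_succ]; ring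
  intro x hx
  have ht : Filter.Tendsto (fun n : ℕ => C / 2 ^ n) Filter.atTop (nhds 0) := by
    have := (tendsto_pow_atTop_nhds_zero_of_lt_one (by norm_num : (0:ℝ) ≤ 1/2)
      (by norm_num : (1:ℝ)/2 < 1)).const_mul C
    simpa [div_eq_mul_inv, mul_zero, one_div, inv_pow] using this
  have h0 : |δ x| ≤ 0 := ge_of_tendsto' ht (fun n => main n x hx)
  exact abs_eq_zero.mp (le_antisymm h0 (abs_nonneg _))

theorem stmt_2 (μ : Measure ℝ) (hμ : IsEntrance μ) (lam : ℝ)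
    (φ ψ : ℝ → ℝ)
    (hφmeas : Measurable φ) (hψmeas : Measurable ψ)
    -- local boundedness on `(-∞, l)`
    (hφbdd : ∀ x, belowL μ x → ∃ C, ∀ y ≤ x, |φ y| ≤ C)
    (hψbdd : ∀ x, belowL μ x → ∃ C, ∀ y ≤ x, |ψ y| ≤ C)
    -- both satisfy the integral equation on `(-∞, l)`
    (hφ : ∀ x, belowL μ x → φ x = 1 - lam * ∫ y in Set.Iic x, (x - y) * φ y ∂μ)
    (hψ : ∀ x, belowL μ x → ψ x = 1 - lam * ∫ y in Set.Iic x, (x - y) * ψ y ∂μ) :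
    ∀ x, belowL μ x → φ x = ψ x := by
  intro x₀ hx₀
  have hbelow : ∀ x ≤ x₀, belowL μ x := by
    intro x hx
    obtain ⟨y, hy1, hy2⟩ := hx₀
    exact ⟨y, hx.trans_lt hy1, hy2⟩
  have hM : (∫⁻ y in Set.Iic x₀, ENNReal.ofReal (x₀ - y) ∂μ) ≠ ⊤ := (hμ x₀ hx₀).ne
  obtain ⟨Cφ, hCφ⟩ := hφbdd x₀ hx₀
  obtain ⟨Cψ, hCψ⟩ := hψbdd x₀ hx₀
  -- the difference and its bound
  have hCδ : ∀ y ≤ x₀, |φ y - ψ y| ≤ Cφ + Cψ := by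
    intro y hy
    calc |φ y - ψ y| ≤ |φ y| + |ψ y| := abs_sub _ _
      _ ≤ Cφ + Cψ := add_le_add (hCφ y hy) (hCψ y hy)
  -- the homogeneous integral equation for the difference
  have hδeq : ∀ x ≤ x₀,
      φ x - ψ x = -lam * ∫ y in Set.Iic x, (x - y) * (φ y - ψ y) ∂μ := by
    intro x hx
    have hiφ := integrable_ker μ x₀ x hx hM φ hφmeas Cφ hCφ
    have hiψ := integrable_ker μ x₀ x hx hM ψ hψmeas Cψ hCψ
    have hsplit : ∫ y in Set.Iic x, (x - y) * (φ y - ψ y) ∂μ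
        = (∫ y in Set.Iic x, (x - y) * φ y ∂μ) - ∫ y in Set.Iic x, (x - y) * ψ y ∂μ := by
      rw [← integral_sub hiφ hiψ]
      apply integral_congr_ae
      filter_upwards with y
      ring
    rw [hsplit, hφ x (hbelow x hx), hψ x (hbelow x hx)]
    ring
  -- the finite measure `ν = (x₀ - y) dμ`
  set ν : Measure ℝ := μ.withDensity (fun y => ENNReal.ofReal (x₀ - y)) with hν
  have hνapp : ∀ S : Set ℝ, MeasurableSet S →
      ν S = ∫⁻ y in S, ENNReal.ofReal (x₀ - y) ∂μ := by
    intro S hS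
    rw [hν, withDensity_apply _ hS]
  have hνIic : ν (Set.Iic x₀) ≠ ⊤ := by rw [hνapp _ measurableSet_Iic]; exact hM
  -- the smallness threshold
  set ε : ℝ := 1 / (2 * (|lam| + 1)) with hε
  have hεpos : 0 < ε := by positivity
  have hsmall_aux : ∀ S : Set ℝ, ν S ≤ ENNReal.ofReal ε →
      |lam| * (ν S).toReal ≤ 1 / 2 := by
    intro S hle
    have h1 : (ν S).toReal ≤ ε := ENNReal.toReal_le_of_le_ofReal hεpos.le hle
    have h2 : (0:ℝ) < |lam| + 1 := by positivity
    calc |lam| * (ν S).toReal ≤ |lam| * ε :=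
          mul_le_mul_of_nonneg_left h1 (abs_nonneg _)
      _ ≤ 1 / 2 := by
          rw [hε]
          rw [mul_one_div, div_le_div_iff₀ (by positivity) (by norm_num)]
          nlinarith [abs_nonneg lam]
  -- Step 1: find `a₀` far to the left with small mass
  have hstep1 : ∃ a₀ : ℝ, a₀ ≤ x₀ ∧ ν (Set.Iio a₀) < ENNReal.ofReal ε := by
    have hmono1 : Antitone (fun n : ℕ => Set.Iio (x₀ - (n:ℝ))) := by
      intro m n hmn
      apply Set.Iio_subset_Iio
      have : (m:ℝ) ≤ n := Nat.cast_le.mpr hmn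
      linarith
    have hiInter1 : ⋂ n : ℕ, Set.Iio (x₀ - (n:ℝ)) = ∅ := by
      ext y
      simp only [Set.mem_iInter, Set.mem_Iio, Set.mem_empty_iff_false, iff_false, not_forall,
        not_lt]
      obtain ⟨n, hn⟩ := exists_nat_ge (x₀ - y)
      exact ⟨n, by linarith⟩
    have hfin1 : ν (Set.Iio (x₀ - (0:ℕ))) ≠ ⊤ := by
      refine ne_top_of_le_ne_top hνIic (measure_mono ?_)
      intro y hy
      simp only [Set.mem_Iio, Nat.cast_zero, sub_zero] at hy
      exact le_of_lt hy
    have ht1 := tendsto_measure_iInter_atTop (μ := ν)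
      (fun n => measurableSet_Iio.nullMeasurableSet) hmono1 ⟨0, hfin1⟩
    rw [hiInter1, measure_empty] at ht1
    have hev := ht1.eventually_lt_const (ENNReal.ofReal_pos.mpr hεpos)
    obtain ⟨n, hn⟩ := hev.exists
    exact ⟨x₀ - n, by simp, hn⟩
  obtain ⟨a₀, ha₀le, ha₀small⟩ := hstep1
  -- the set of points up to which the difference vanishes
  set A : Set ℝ := {a | a ≤ x₀ ∧ ∀ y ≤ a, φ y - ψ y = 0} with hA
  have ha₀A : a₀ ∈ A := by
    refine ⟨ha₀le, ?_⟩
    apply key_zero μ lam x₀ (Cφ + Cψ) _ hCδ hδeq a₀ ha₀le ∅ (Set.Iio a₀) measurableSet_Iio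
      (by simp) (fun x hx => by
        intro y hy
        exact lt_of_lt_of_le hy.1 hx)
    · rw [← hνapp _ measurableSet_Iio]
      exact (ha₀small.trans_le le_top).ne
    · rw [← hνapp _ measurableSet_Iio]
      exact hsmall_aux _ ha₀small.le
  have hAne : A.Nonempty := ⟨a₀, ha₀A⟩
  have hAbdd : BddAbove A := ⟨x₀, fun a ha => ha.1⟩
  set s := sSup A with hs
  have hsle : s ≤ x₀ := csSup_le hAne (fun a ha => ha.1)
  have hzero_lt : ∀ y < s, φ y - ψ y = 0 := by
    intro y hy
    obtain ⟨a, haA, hya⟩ := exists_lt_of_lt_csSup hAne hy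
    exact haA.2 y hya.le
  have hsA : ∀ x ≤ s, φ x - ψ x = 0 := by
    apply key_zero μ lam x₀ (Cφ + Cψ) _ hCδ hδeq s hsle (Set.Iio s) ∅ MeasurableSet.empty
      hzero_lt
      (fun x hx => by
        intro y hy
        exact absurd (lt_of_lt_of_le hy.1 hx) hy.2)
    · simp
    · simp
  have hsx₀ : s = x₀ := by
    refine le_antisymm hsle ?_
    by_contra h
    push_neg at h
    -- Step 3: extend past `s` by a small interval
    have hd : 0 < x₀ - s := by linarith
    have hbdef : ∀ n : ℕ, s + (x₀ - s) / (n + 1) ≤ x₀ := by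
      intro n
      have : (x₀ - s) / (n + 1) ≤ (x₀ - s) := by
        apply div_le_self hd.le
        have : (0:ℝ) ≤ (n:ℝ) := Nat.cast_nonneg n
        linarith
      linarith
    have hmono2 : Antitone (fun n : ℕ => Set.Ioo s (s + (x₀ - s) / (n + 1))) := by
      intro m n hmn
      apply Set.Ioo_subset_Ioo_right
      have hm : (0:ℝ) < (m:ℝ) + 1 := by positivity
      have hcast : (m:ℝ) + 1 ≤ (n:ℝ) + 1 := by
        have : (m:ℝ) ≤ (n:ℝ) := by exact_mod_cast hmn
        linarith
      have := div_le_div_of_nonneg_left hd.le hm hcast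
      linarith
    have hiInter2 : ⋂ n : ℕ, Set.Ioo s (s + (x₀ - s) / (n + 1)) = ∅ := by
      ext y
      simp only [Set.mem_iInter, Set.mem_Ioo, Set.mem_empty_iff_false, iff_false, not_forall]
      by_cases hys : s < y
      · obtain ⟨n, hn⟩ := exists_nat_ge ((x₀ - s) / (y - s))
        refine ⟨n, ?_⟩
        rintro ⟨-, h2⟩
        have hyspos : 0 < y - s := by linarith
        have h3 : (x₀ - s) ≤ (y - s) * n := by
          rw [div_le_iff₀ hyspos] at hn
          linarith [hn]
        have h4 : y - s < (x₀ - s) / (n + 1) := by linarith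
        rw [lt_div_iff₀ (by positivity)] at h4
        nlinarith
      · exact ⟨0, fun hmem => hys hmem.1⟩
    have hfin2 : ∀ n : ℕ, ν (Set.Ioo s (s + (x₀ - s) / (n + 1))) ≠ ⊤ := by
      intro n
      refine ne_top_of_le_ne_top hνIic (measure_mono ?_)
      intro y hy
      exact le_trans hy.2.le (hbdef n)
    have ht2 := tendsto_measure_iInter_atTop (μ := ν)
      (fun n => measurableSet_Ioo.nullMeasurableSet) hmono2 ⟨0, hfin2 0⟩
    rw [hiInter2, measure_empty] at ht2
    obtain ⟨n, hn⟩ := (ht2.eventually_lt_const (ENNReal.ofReal_pos.mpr hεpos)).exists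
    set b := s + (x₀ - s) / (n + 1) with hb
    have hsb : s < b := by
      rw [hb]
      have : (0:ℝ) < (x₀ - s) / (n + 1) := by positivity
      linarith
    have hbx₀ : b ≤ x₀ := hbdef n
    have hbA : b ∈ A := by
      refine ⟨hbx₀, ?_⟩
      apply key_zero μ lam x₀ (Cφ + Cψ) _ hCδ hδeq b hbx₀ (Set.Iic s) (Set.Ioo s b)
        measurableSet_Ioo (fun y hy => hsA y hy)
        (fun x hx => by
          intro y hy
          exact ⟨lt_of_not_ge hy.2, lt_of_lt_of_le hy.1 hx⟩)
      · rw [← hνapp _ measurableSet_Ioo]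
        exact (hn.trans_le le_top).ne
      · rw [← hνapp _ measurableSet_Ioo]
        exact hsmall_aux _ hn.le
    have : b ≤ s := le_csSup hAbdd hbA
    linarith
  have := hsA x₀ hsx₀.ge
  linarith
end

section
/- Let μ be an entrance-type string measure with supp μ ≠ ∅ and let λ < 0. Then: (i) if a < l satisfies m(a) = μ((−∞,a]) > 0, then φ_λ(x) ≥ 1 + (−λ)(x−a) m(a) for every x ∈ [a, l); and consequently (ii) for every x < l the integral ∫_x^l φ_λ(y)⁻² dy is finite. -/
open MeasureTheory
open scoped ENNReal

lemma ennreal_le_two_mul (a b t : ℝ≥0∞) (ha : a ≠ ⊤) (ht : t ≤ 1/2) (h : a ≤ b + t * a) :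
    a ≤ 2 * b := by
  have hta : t * a ≤ (1/2) * a := mul_le_mul_left ht a
  have h1 : a ≤ b + (1/2) * a := h.trans (add_le_add_right hta b)
  have h2 : a + a ≤ (2 * b) + a := by
    calc a + a ≤ (b + (1/2)*a) + (b + (1/2)*a) := add_le_add h1 h1
    _ = (b + b) + ((1/2)*a + (1/2)*a) := by ring
    _ = 2*b + a := by
        congr 1
        · ring
        · rw [← add_mul]
          norm_num [ENNReal.inv_two_add_inv_two]
  exact (WithTop.add_le_add_iff_right ha).mp h2

lemma ennreal_zero_of_le_mul (a t : ℝ≥0∞) (ha : a ≠ ⊤) (ht : t ≤ 1/2) (h : a ≤ t * a) :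
    a = 0 := by
  have := ennreal_le_two_mul a 0 t ha ht (by simpa using h)
  simpa using this

lemma gronwall_aux (ν : Measure ℝ) (g : ℝ → ℝ≥0∞) (hg : Measurable g)
    (I : Set ℝ) (hI : MeasurableSet I) (t : ℝ) (hIt : I ⊆ Set.Iic t)
    (C θ : ℝ≥0∞) (hC : C ≠ ⊤) (hθ0 : θ ≠ 0) (hθκ : θ * ν I ≤ 1/2)
    (hfin : ∀ x ∈ I, g x < ⊤)
    (hineq : ∀ x ∈ I, g x ≤ C + θ * ∫⁻ y in I ∩ Set.Iic x, g y ∂ν)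
    (hsave : ∀ x ∈ I, 0 < g x → ∀ y, y < x → (∫⁻ z in I ∩ Set.Iic y, g z ∂ν) < ⊤) :
    (∫⁻ y in I, g y ∂ν) ≤ 2 * (C * ν I) := by
  classical
  set H : ℝ → ℝ≥0∞ := fun x => ∫⁻ y in I ∩ Set.Iic x, g y ∂ν with hH
  have Hmono : Monotone H := fun x y hxy =>
    lintegral_mono_set (Set.inter_subset_inter_right _ (Set.Iic_subset_Iic.mpr hxy))
  have HIt : (∫⁻ y in I, g y ∂ν) = H t := by
    rw [hH]
    congr 1
    rw [Set.inter_eq_left.mpr hIt]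
  have hκ : ν I ≠ ⊤ := by
    intro h
    rw [h, ENNReal.mul_top hθ0] at hθκ
    exact (by norm_num : ¬ ((⊤:ℝ≥0∞) ≤ 1/2)) hθκ
  -- step b
  have stepb : ∀ x, H x ≠ ⊤ → H x ≤ 2 * (C * ν I) := by
    intro x hx
    have hb : H x ≤ C * ν I + (θ * ν I) * H x := by
      have h1 : H x ≤ ∫⁻ y in I ∩ Set.Iic x, (C + θ * H x) ∂ν := by
        refine setLIntegral_mono measurable_const (fun y hy => ?_)
        refine (hineq y hy.1).trans (add_le_add_right (mul_le_mul_right ?_ θ) C)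
        exact Hmono hy.2
      have h2 : (∫⁻ _ in I ∩ Set.Iic x, (C + θ * H x) ∂ν) = (C + θ * H x) * ν (I ∩ Set.Iic x) := by
        rw [setLIntegral_const]
      have h3 : (C + θ * H x) * ν (I ∩ Set.Iic x) ≤ (C + θ * H x) * ν I :=
        mul_le_mul_right (measure_mono Set.inter_subset_left) _
      calc H x ≤ (C + θ * H x) * ν I := (h1.trans_eq h2).trans h3
      _ = C * ν I + (θ * ν I) * H x := by ring
    exact ennreal_le_two_mul _ _ _ hx hθκ hb
  rw [HIt]
  refine stepb t ?_
  by_contra hHt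
  by_cases hex : ∃ y₀, H y₀ ≠ ⊤
  · obtain ⟨y₀, hy₀⟩ := hex
    have hSSne : H t = ⊤ := hHt
    set SS : Set ℝ := {x | H x = ⊤} with hSS
    have htSS : t ∈ SS := hSSne
    have hbdd : ∀ x ∈ SS, y₀ ≤ x := by
      intro x hx
      by_contra hlt
      push_neg at hlt
      exact hy₀ (top_le_iff.mp (hx ▸ Hmono hlt.le))
    have hbddB : BddBelow SS := ⟨y₀, fun x hx => hbdd x hx⟩
    set d : ℝ := sInf SS with hd'
    have hd_lt : ∀ x, x < d → H x ≠ ⊤ := by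
      intro x hxd hx
      exact absurd (csInf_le hbddB (hx : x ∈ SS)) (not_le.mpr hxd)
    have hdt : d ≤ t := csInf_le hbddB htSS
    -- bridging measure
    set ρ : Measure ℝ := (ν.restrict I).withDensity g with hρdef
    have hρ : ∀ A : Set ℝ, MeasurableSet A → ρ A = ∫⁻ y in I ∩ A, g y ∂ν := by
      intro A hA
      rw [hρdef, withDensity_apply _ hA, Measure.restrict_restrict hA, Set.inter_comm]
    by_cases hd : H d = ⊤
    · -- continuity from below contradiction
      have bound2 : ρ (Set.Iio d) ≤ 2 * (C * ν I) := by
        have hset : Set.Iio d = ⋃ n : ℕ, Set.Iic (d - 1/(n+1)) := by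
          ext z
          simp only [Set.mem_Iio, Set.mem_iUnion, Set.mem_Iic]
          constructor
          · intro hz
            obtain ⟨n, hn⟩ := exists_nat_one_div_lt (sub_pos.mpr hz)
            exact ⟨n, by push_cast at hn ⊢; linarith⟩
          · rintro ⟨n, hn⟩
            have : (0:ℝ) < 1/(n+1) := by positivity
            linarith
        have hdir : Directed (fun x1 x2 : Set ℝ => x1 ⊆ x2) (fun n : ℕ => Set.Iic (d - 1/(n+1))) := by
          intro m n
          rcases le_total (m:ℕ) n with h | h
          · exact ⟨n, Set.Iic_subset_Iic.mpr (by
              have : (1:ℝ)/(n+1) ≤ 1/(m+1) := by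
                apply one_div_le_one_div_of_le <;> push_cast <;> [positivity; exact_mod_cast by exact_mod_cast add_le_add (by exact_mod_cast h) le_rfl]
              linarith), Set.Subset.rfl⟩
          · exact ⟨m, Set.Subset.rfl, Set.Iic_subset_Iic.mpr (by
              have : (1:ℝ)/(m+1) ≤ 1/(n+1) := by
                apply one_div_le_one_div_of_le <;> push_cast <;> [positivity; exact_mod_cast by exact_mod_cast add_le_add (by exact_mod_cast h) le_rfl]
              linarith)⟩
        rw [hset, Directed.measure_iUnion hdir]
        refine iSup_le (fun n => ?_)
        have h1 : ρ (Set.Iic (d - 1/(n+1))) = H (d - 1/(n+1)) := hρ _ measurableSet_Iic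
        rw [h1]
        refine stepb _ (hd_lt _ ?_)
        have : (0:ℝ) < 1/(n+1) := by positivity
        linarith
      have bound1 : ρ {d} < ⊤ := by
        by_cases hdI : d ∈ I
        · have : ρ {d} = ∫⁻ y in I ∩ {d}, g y ∂ν := hρ _ (measurableSet_singleton d)
          rw [this, Set.inter_eq_right.mpr (by simpa using hdI)]
          rw [lintegral_singleton]
          exact ENNReal.mul_lt_top (hfin d hdI) ((measure_mono (Set.singleton_subset_iff.mpr hdI)).trans_lt (lt_top_iff_ne_top.mpr hκ))
        · have : ρ {d} = ∫⁻ y in I ∩ {d}, g y ∂ν := hρ _ (measurableSet_singleton d)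
          rw [this]
          have he : I ∩ {d} = ∅ := by
            ext z; simp only [Set.mem_inter_iff, Set.mem_singleton_iff, Set.mem_empty_iff_false, iff_false]
            rintro ⟨hz, rfl⟩; exact hdI hz
          rw [he]
          simp
      have : H d < ⊤ := by
        have h1 : H d = ρ (Set.Iic d) := (hρ _ measurableSet_Iic).symm
        have h2 : ρ (Set.Iic d) = ρ (Set.Iio d) + ρ {d} := by
          rw [← Set.Iio_union_right, measure_union (by simp) (measurableSet_singleton d)]
        rw [h1, h2]
        exact ENNReal.add_lt_top.mpr ⟨bound2.trans_lt (by
          refine ENNReal.mul_lt_top (by norm_num) (ENNReal.mul_lt_top hC.lt_top hκ.lt_top)), bound1⟩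
      exact this.ne hd
    · -- d not in SS; everything above d has H = ⊤ but g = 0 above d
      have hup : ∀ x, d < x → H x = ⊤ := by
        intro x hdx
        obtain ⟨s, hsSS, hsx⟩ := exists_lt_of_csInf_lt ⟨t, htSS⟩ hdx
        exact top_le_iff.mp ((hsSS : H s = ⊤) ▸ Hmono hsx.le)
      have hg0 : ∀ x ∈ I, d < x → g x = 0 := by
        intro x hx hdx
        by_contra h0
        have hpos : 0 < g x := pos_iff_ne_zero.mpr h0
        have h1 := hsave x hx hpos ((d+x)/2) (by linarith)
        exact h1.ne (hup ((d+x)/2) (by linarith))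
      have hsplit : H t = H d + ∫⁻ y in I ∩ Set.Ioc d t, g y ∂ν := by
        show (∫⁻ y in I ∩ Set.Iic t, g y ∂ν) = (∫⁻ y in I ∩ Set.Iic d, g y ∂ν) + _
        have : I ∩ Set.Iic t = (I ∩ Set.Iic d) ∪ (I ∩ Set.Ioc d t) := by
          rw [← Set.inter_union_distrib_left, Set.Iic_union_Ioc_eq_Iic hdt]
        rw [this, lintegral_union (hI.inter measurableSet_Ioc)
          (Set.disjoint_of_subset Set.inter_subset_right Set.inter_subset_right
            (Set.Iic_disjoint_Ioc le_rfl))]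
      have hzero : (∫⁻ y in I ∩ Set.Ioc d t, g y ∂ν) = 0 := by
        rw [setLIntegral_congr_fun (hI.inter measurableSet_Ioc)
          (fun y hy => hg0 y hy.1 hy.2.1)]
        simp
      rw [hsplit, hzero, add_zero] at hHt
      exact hd hHt
  · push_neg at hex
    have hg0 : ∀ x ∈ I, g x = 0 := by
      intro x hx
      by_contra h0
      have hpos : 0 < g x := pos_iff_ne_zero.mpr h0
      exact (hsave x hx hpos (x-1) (by linarith)).ne (hex (x-1))
    have h0 : H t = 0 := by
      show (∫⁻ y in I ∩ Set.Iic t, g y ∂ν) = 0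
      rw [setLIntegral_congr_fun (hI.inter measurableSet_Iic)
        (fun y hy => hg0 y hy.1)]
      simp
    rw [hHt] at h0
    exact ENNReal.top_ne_zero h0


namespace Stmt3aux

noncomputable def psi (μ : Measure ℝ) (φ : ℝ → ℝ) (x : ℝ) : ℝ :=
  ∫ y in Set.Iic x, (x - y) * φ y ∂μ

lemma belowL_mono (μ : Measure ℝ) {x y : ℝ} (h : belowL μ y) (hxy : x ≤ y) : belowL μ x := by
  obtain ⟨w, hw1, hw2⟩ := h; exact ⟨w, lt_of_le_of_lt hxy hw1, hw2⟩

lemma belowL_finite (μ : Measure ℝ) {x : ℝ} (h : belowL μ x) : μ (Set.Iic x) < ⊤ := by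
  obtain ⟨w, hw1, hw2⟩ := h
  exact (measure_mono (Set.Iic_subset_Iic.mpr hw1.le)).trans_lt hw2

lemma belowL_exists_gt (μ : Measure ℝ) {x : ℝ} (h : belowL μ x) :
    ∃ u, x < u ∧ belowL μ u ∧ μ (Set.Iic u) < ⊤ := by
  obtain ⟨w, hw1, hw2⟩ := h
  refine ⟨(x+w)/2, by linarith, ⟨w, by linarith, hw2⟩, ?_⟩
  exact (measure_mono (Set.Iic_subset_Iic.mpr (by linarith))).trans_lt hw2

lemma ae_Iic (μ : Measure ℝ) {x : ℝ} {P : ℝ → Prop} (h : ∀ z ≤ x, P z) :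
    ∀ᵐ z ∂(μ.restrict (Set.Iic x)), P z :=
  (ae_restrict_iff' measurableSet_Iic).mpr (ae_of_all _ h)

lemma entrance_int {μ : Measure ℝ} (hμ : IsEntrance μ) {x : ℝ} (hx : belowL μ x) :
    Integrable (fun z => x - z) (μ.restrict (Set.Iic x)) := by
  refine ⟨(measurable_const.sub measurable_id).aestronglyMeasurable, ?_⟩
  refine (hasFiniteIntegral_iff_ofReal (ae_Iic μ (fun z hz => by simp at hz ⊢; linarith))).mpr ?_
  have heq : (∫⁻ z in Set.Iic x, ENNReal.ofReal (x - z) ∂μ) < ⊤ := hμ x hx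
  exact heq

lemma phi_eq {μ : Measure ℝ} {lam : ℝ} {φ : ℝ → ℝ}
    (hφ : ∀ x, belowL μ x → φ x = 1 - lam * ∫ y in Set.Iic x, (x - y) * φ y ∂μ)
    {x : ℝ} (hx : belowL μ x) : φ x = 1 + (-lam) * psi μ φ x := by
  rw [hφ x hx]; unfold psi; ring

lemma integrable_of_psi_ne {μ : Measure ℝ} {φ : ℝ → ℝ} {x : ℝ} (hψ : psi μ φ x ≠ 0) :
    Integrable (fun z => (x - z) * φ z) (μ.restrict (Set.Iic x)) := by
  by_contra h
  exact hψ (integral_undef h)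

lemma ofReal_abs_psi_le (μ : Measure ℝ) (φ : ℝ → ℝ) (x : ℝ) :
    ENNReal.ofReal |psi μ φ x| ≤ ∫⁻ z in Set.Iic x, ENNReal.ofReal ((x - z) * |φ z|) ∂μ := by
  rw [← Real.enorm_eq_ofReal_abs]
  refine (enorm_integral_le_lintegral_enorm _).trans (le_of_eq ?_)
  refine setLIntegral_congr_fun measurableSet_Iic (fun z hz => ?_)
  rw [Real.enorm_eq_ofReal_abs, abs_mul, abs_of_nonneg (sub_nonneg.mpr (hz : z ≤ x))]

lemma fbound {μ : Measure ℝ} (hμ : IsEntrance μ) {lam : ℝ} (hlam : lam < 0) {φ : ℝ → ℝ}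
    (hφ : ∀ x, belowL μ x → φ x = 1 - lam * ∫ y in Set.Iic x, (x - y) * φ y ∂μ)
    (hφmeas : Measurable φ) {x : ℝ} (hx : belowL μ x) :
    ENNReal.ofReal (max (1 - φ x) 0) ≤
      ENNReal.ofReal (-lam) * ∫⁻ z in Set.Iic x, ENNReal.ofReal ((x - z) * max (1 - φ z) 0) ∂μ := by
  by_cases h0 : max (1 - φ x) 0 = 0
  · simp [h0]
  · have hfx : 0 < 1 - φ x := by
      by_contra hc
      push_neg at hc
      exact h0 (max_eq_right hc)
    have hψneg : psi μ φ x < 0 := by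
      have := phi_eq hφ hx
      nlinarith [this]
    have hint : Integrable (fun z => (x - z) * φ z) (μ.restrict (Set.Iic x)) :=
      integrable_of_psi_ne hψneg.ne
    have hint2 : Integrable (fun z => x - z) (μ.restrict (Set.Iic x)) := entrance_int hμ hx
    have hint1 : Integrable (fun z => (x - z) * (φ z - 1)) (μ.restrict (Set.Iic x)) := by
      have : (fun z => (x - z) * (φ z - 1)) = fun z => (x - z) * φ z - (x - z) := by
        funext z; ring
      rw [this]; exact hint.sub hint2
    -- k z = (x - z) * max (1 - φ z) 0 is integrable: it is max (-(h1 z)) 0 on Iic x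
    have hk : Integrable (fun z => (x - z) * max (1 - φ z) 0) (μ.restrict (Set.Iic x)) := by
      have he : ∀ᵐ z ∂(μ.restrict (Set.Iic x)),
          (fun a => (-((x - a) * (φ a - 1))) ⊔ 0) z = (x - z) * max (1 - φ z) 0 := by
        refine ae_Iic μ (fun z hz => ?_)
        have hxz : (0:ℝ) ≤ x - z := by linarith
        show max (-((x - z) * (φ z - 1))) 0 = (x - z) * max (1 - φ z) 0
        rw [show -((x - z) * (φ z - 1)) = (x - z) * (1 - φ z) by ring]
        rcases le_total (1 - φ z) 0 with h | h
        · rw [max_eq_right h, max_eq_right (by nlinarith), mul_zero]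
        · rw [max_eq_left h, max_eq_left (by nlinarith)]
      exact (hint1.neg.pos_part).congr he
    have hknn : 0 ≤ᵐ[μ.restrict (Set.Iic x)] (fun z => (x - z) * max (1 - φ z) 0) :=
      ae_Iic μ (fun z hz => mul_nonneg (by linarith) (le_max_right _ _))
    -- ψ x ≥ -∫ k
    have hpsi_ge : -(psi μ φ x) ≤ ∫ z in Set.Iic x, (x - z) * max (1 - φ z) 0 ∂μ := by
      have hsplit : psi μ φ x = (∫ z in Set.Iic x, (x - z) * (φ z - 1) ∂μ) +
          ∫ z in Set.Iic x, (x - z) ∂μ := by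
        unfold psi
        rw [← integral_add hint1 hint2]
        congr 1; funext z; ring
      have h2nn : 0 ≤ ∫ z in Set.Iic x, (x - z) ∂μ :=
        setIntegral_nonneg measurableSet_Iic (fun z hz => by simp at hz; linarith)
      have hmono : ∫ z in Set.Iic x, (-((x - z) * max (1 - φ z) 0)) ∂μ ≤
          ∫ z in Set.Iic x, (x - z) * (φ z - 1) ∂μ := by
        refine integral_mono_ae hk.neg hint1 ?_
        refine ae_Iic μ (fun z hz => ?_)
        have hxz : (0:ℝ) ≤ x - z := by linarith
        have h5 : (1 - φ z) ≤ max (1 - φ z) 0 := le_max_left _ _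
        have h6 := mul_le_mul_of_nonneg_left h5 hxz
        show -((x - z) * ((1 - φ z) ⊔ 0)) ≤ (x - z) * (φ z - 1)
        have : max (1 - φ z) 0 = (1 - φ z) ⊔ 0 := rfl
        nlinarith [h6]
      rw [integral_neg] at hmono
      linarith [hsplit, h2nn, hmono]
    have hfeq : max (1 - φ x) 0 = (-lam) * (-(psi μ φ x)) := by
      have := phi_eq hφ hx
      rw [max_eq_left hfx.le]
      nlinarith [this]
    rw [hfeq]
    rw [ENNReal.ofReal_mul (by linarith : (0:ℝ) ≤ -lam)]
    refine mul_le_mul_right ?_ _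
    calc ENNReal.ofReal (-(psi μ φ x)) ≤
        ENNReal.ofReal (∫ z in Set.Iic x, (x - z) * max (1 - φ z) 0 ∂μ) :=
          ENNReal.ofReal_le_ofReal hpsi_ge
    _ = ∫⁻ z in Set.Iic x, ENNReal.ofReal ((x - z) * max (1 - φ z) 0) ∂μ :=
          ofReal_integral_eq_lintegral_ofReal hk hknn


def Good (μ : Measure ℝ) (φ : ℝ → ℝ) (x : ℝ) : Prop :=
  (∀ z, z ≤ x → 1 ≤ φ z) ∧ (∫⁻ z in Set.Iic x, ENNReal.ofReal ((x - z) * φ z) ∂μ) < ⊤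

lemma good_mono {μ : Measure ℝ} {φ : ℝ → ℝ} (hφmeas : Measurable φ) {x y : ℝ}
    (h : Good μ φ y) (hxy : x ≤ y) : Good μ φ x := by
  refine ⟨fun z hz => h.1 z (hz.trans hxy), ?_⟩
  refine lt_of_le_of_lt ?_ h.2
  calc (∫⁻ z in Set.Iic x, ENNReal.ofReal ((x - z) * φ z) ∂μ)
      ≤ ∫⁻ z in Set.Iic x, ENNReal.ofReal ((y - z) * φ z) ∂μ := by
        refine setLIntegral_mono (((measurable_const.sub measurable_id).mul hφmeas).ennreal_ofReal)
          (fun z hz => ENNReal.ofReal_le_ofReal ?_)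
        have h1 : (1:ℝ) ≤ φ z := h.1 z ((hz : z ≤ x).trans hxy)
        have h2 : x - z ≤ y - z := by linarith
        nlinarith
    _ ≤ ∫⁻ z in Set.Iic y, ENNReal.ofReal ((y - z) * φ z) ∂μ :=
        lintegral_mono_set (Set.Iic_subset_Iic.mpr hxy)

lemma good_psi_eq {μ : Measure ℝ} {φ : ℝ → ℝ} (hφmeas : Measurable φ) {x : ℝ}
    (h1 : ∀ z, z ≤ x → 1 ≤ φ z)
    (h2 : (∫⁻ z in Set.Iic x, ENNReal.ofReal ((x - z) * φ z) ∂μ) ≠ ⊤) :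
    ENNReal.ofReal (psi μ φ x) = ∫⁻ z in Set.Iic x, ENNReal.ofReal ((x - z) * φ z) ∂μ := by
  have hnn : 0 ≤ᵐ[μ.restrict (Set.Iic x)] fun z => (x - z) * φ z :=
    ae_Iic μ (fun z hz => mul_nonneg (sub_nonneg.mpr hz) (zero_le_one.trans (h1 z hz)))
  have hmeas : AEStronglyMeasurable (fun z => (x - z) * φ z) (μ.restrict (Set.Iic x)) :=
    ((measurable_const.sub measurable_id).mul hφmeas).aestronglyMeasurable
  unfold psi
  rw [integral_eq_lintegral_of_nonneg_ae hnn hmeas, ENNReal.ofReal_toReal h2]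

lemma good_integrable {μ : Measure ℝ} {φ : ℝ → ℝ} (hφmeas : Measurable φ) {x : ℝ}
    (h1 : ∀ z, z ≤ x → 1 ≤ φ z)
    (h2 : (∫⁻ z in Set.Iic x, ENNReal.ofReal ((x - z) * φ z) ∂μ) ≠ ⊤) :
    Integrable (fun z => (x - z) * φ z) (μ.restrict (Set.Iic x)) := by
  have hnn : 0 ≤ᵐ[μ.restrict (Set.Iic x)] fun z => (x - z) * φ z :=
    ae_Iic μ (fun z hz => mul_nonneg (sub_nonneg.mpr hz) (zero_le_one.trans (h1 z hz)))
  have hmeas : AEStronglyMeasurable (fun z => (x - z) * φ z) (μ.restrict (Set.Iic x)) :=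
    ((measurable_const.sub measurable_id).mul hφmeas).aestronglyMeasurable
  exact ⟨hmeas, (hasFiniteIntegral_iff_ofReal hnn).mpr h2.lt_top⟩

lemma int_abs_lt {μ : Measure ℝ} {φ : ℝ → ℝ} {x : ℝ} (hψ : psi μ φ x ≠ 0) :
    (∫⁻ z in Set.Iic x, ENNReal.ofReal ((x - z) * |φ z|) ∂μ) < ⊤ := by
  have hint := integrable_of_psi_ne hψ
  have h2 := hint.2
  rw [hasFiniteIntegral_iff_norm] at h2
  refine lt_of_le_of_lt (le_of_eq ?_) h2
  refine setLIntegral_congr_fun measurableSet_Iic (fun z hz => ?_)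
  rw [Real.norm_eq_abs, abs_mul, abs_of_nonneg (sub_nonneg.mpr (hz : z ≤ x))]


lemma ofReal_quarter : ENNReal.ofReal (1/4 : ℝ) = 1/4 := by
  rw [ENNReal.ofReal_div_of_pos (by norm_num)]
  norm_num

set_option maxHeartbeats 2000000 in
lemma claim1 (μ : Measure ℝ) (hμ : IsEntrance μ) (lam : ℝ) (hlam : lam < 0)
    (φ : ℝ → ℝ) (hφmeas : Measurable φ)
    (hφ : ∀ x, belowL μ x → φ x = 1 - lam * ∫ y in Set.Iic x, (x - y) * φ y ∂μ) :
    ∀ x, belowL μ x → Good μ φ x := by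
  have hlam' : 0 < -lam := by linarith
  set c : ℝ≥0∞ := ENNReal.ofReal (-lam) with hcdef
  have hc0 : c ≠ 0 := by
    simp only [hcdef, ne_eq, ENNReal.ofReal_eq_zero, not_le]; exact hlam'
  have hcTop : c ≠ ⊤ := ENNReal.ofReal_ne_top
  set g : ℝ → ℝ≥0∞ := fun z => ENNReal.ofReal (|φ z - 1| / (-lam)) with hgdef
  have hgmeas : Measurable g := ((hφmeas.sub measurable_const).abs.div_const _).ennreal_ofReal
  have measK : ∀ b : ℝ, Measurable (fun z : ℝ => ENNReal.ofReal (b - z)) :=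
    fun b => (measurable_const.sub measurable_id).ennreal_ofReal
  have measKabs : ∀ b : ℝ, Measurable (fun z : ℝ => ENNReal.ofReal ((b - z) * |φ z|)) :=
    fun b => ((measurable_const.sub measurable_id).mul hφmeas.abs).ennreal_ofReal
  have measKphi : ∀ b : ℝ, Measurable (fun z : ℝ => ENNReal.ofReal ((b - z) * φ z)) :=
    fun b => ((measurable_const.sub measurable_id).mul hφmeas).ennreal_ofReal
  have measF : Measurable (fun z : ℝ => ENNReal.ofReal (max (1 - φ z) 0)) :=
    ((measurable_const.sub hφmeas).max measurable_const).ennreal_ofReal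
  have measφ : Measurable (fun z : ℝ => ENNReal.ofReal (φ z)) := hφmeas.ennreal_ofReal
  have measKg : ∀ b : ℝ, Measurable (fun z : ℝ => ENNReal.ofReal (b - z) * g z) :=
    fun b => (measK b).mul hgmeas
  have measKcg : ∀ b : ℝ, Measurable (fun z : ℝ => ENNReal.ofReal (b - z) * (c * g z)) :=
    fun b => (measK b).mul (hgmeas.const_mul c)
  have measKF : ∀ b : ℝ, Measurable
      (fun z : ℝ => ENNReal.ofReal (b - z) * ENNReal.ofReal (max (1 - φ z) 0)) :=
    fun b => (measK b).mul measF
  have measKsum : ∀ b : ℝ, Measurable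
      (fun z : ℝ => ENNReal.ofReal (b - z) + ENNReal.ofReal (b - z) * (c * g z)) :=
    fun b => (measK b).add ((measK b).mul (hgmeas.const_mul c))
  have cg : ∀ z, c * g z = ENNReal.ofReal |φ z - 1| := by
    intro z
    rw [hgdef, hcdef, ← ENNReal.ofReal_mul hlam'.le]
    congr 1
    rw [mul_comm, div_mul_eq_mul_div, mul_div_assoc, div_self (by linarith : -lam ≠ 0), mul_one]
  have phi_abs_le : ∀ z, ENNReal.ofReal |φ z| ≤ 1 + c * g z := by
    intro z
    rw [cg]
    calc ENNReal.ofReal |φ z| ≤ ENNReal.ofReal (1 + |φ z - 1|) := by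
          refine ENNReal.ofReal_le_ofReal ?_
          calc |φ z| = |1 + (φ z - 1)| := by ring_nf
          _ ≤ |(1:ℝ)| + |φ z - 1| := abs_add_le _ _
          _ = 1 + |φ z - 1| := by norm_num
    _ ≤ 1 + ENNReal.ofReal |φ z - 1| := by
          rw [ENNReal.ofReal_add (by norm_num) (abs_nonneg _)]
          simp
  have F_le_cg : ∀ z, ENNReal.ofReal (max (1 - φ z) 0) ≤ c * g z := by
    intro z; rw [cg]
    refine ENNReal.ofReal_le_ofReal (max_le ?_ (abs_nonneg _))
    rw [abs_sub_comm]; exact le_abs_self _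
  have g_eq_psi : ∀ z, belowL μ z → g z = ENNReal.ofReal |psi μ φ z| := by
    intro z hz
    show ENNReal.ofReal (|φ z - 1| / (-lam)) = ENNReal.ofReal |psi μ φ z|
    congr 1
    rw [phi_eq hφ hz]
    rw [show (1 + (-lam) * psi μ φ z - 1) = (-lam) * psi μ φ z by ring]
    rw [abs_mul, abs_of_nonneg hlam'.le]
    rw [mul_comm, mul_div_assoc, div_self (by linarith : -lam ≠ 0), mul_one]
  have g_pos_psi_ne : ∀ z, belowL μ z → 0 < g z → psi μ φ z ≠ 0 := by
    intro z hz hpos h0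
    rw [g_eq_psi z hz, h0] at hpos
    simp at hpos
  have g_le_main : ∀ w, belowL μ w →
      g w ≤ ∫⁻ z in Set.Iic w, ENNReal.ofReal ((w - z) * |φ z|) ∂μ := by
    intro w hw
    rw [g_eq_psi w hw]
    exact ofReal_abs_psi_le μ φ w
  have int_lt : ∀ w, belowL μ w → 0 < g w →
      (∫⁻ z in Set.Iic w, ENNReal.ofReal ((w - z) * |φ z|) ∂μ) < ⊤ := by
    intro w hw hpos
    exact int_abs_lt (g_pos_psi_ne w hw hpos)
  by_contra hcon
  push_neg at hcon
  obtain ⟨x₀, hx₀L, hx₀bad⟩ := hcon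
  by_cases hexg : ∃ x₁, belowL μ x₁ ∧ Good μ φ x₁
  · -- CASE B : there is a good point
    obtain ⟨x₁g, hx₁gL, hx₁gGood⟩ := hexg
    set Bad : Set ℝ := {x | belowL μ x ∧ ¬ Good μ φ x} with hBaddef
    have hx₀Bad : x₀ ∈ Bad := ⟨hx₀L, hx₀bad⟩
    have hBddB : BddBelow Bad := by
      refine ⟨x₁g, fun x hx => ?_⟩
      by_contra hlt
      push_neg at hlt
      exact hx.2 (good_mono hφmeas hx₁gGood hlt.le)
    set r : ℝ := sInf Bad with hrdef
    have hrx₀ : r ≤ x₀ := csInf_le hBddB hx₀Bad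
    have hrL : belowL μ r := belowL_mono μ hx₀L hrx₀
    have hgoodlt : ∀ x, x < r → belowL μ x → Good μ φ x := by
      intro x hxr hxL
      by_contra hbad
      exact absurd (csInf_le hBddB ⟨hxL, hbad⟩) (not_le.mpr hxr)
    obtain ⟨u, hru, huL, hufin⟩ := belowL_exists_gt μ hrL
    set mU : ℝ≥0∞ := μ (Set.Iic u) with hminf
    have hmUtop : mU ≠ ⊤ := hufin.ne
    set δ : ℝ := min ((u - r)/2) (1/(8 * ((-lam) * (mU.toReal + 1)))) with hδdef
    have hmR : (0:ℝ) ≤ mU.toReal := ENNReal.toReal_nonneg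
    have hδpos : 0 < δ := by
      refine lt_min (by linarith) ?_
      have h8 : (0:ℝ) < 8 * ((-lam) * (mU.toReal + 1)) := by nlinarith
      positivity
    have hδu : 2*δ ≤ u - r := by
      have h := min_le_left ((u - r)/2) (1/(8 * ((-lam) * (mU.toReal + 1))))
      rw [← hδdef] at h
      linarith
    have hδ2 : ENNReal.ofReal (2*δ*(-lam)) * mU ≤ 1/4 := by
      have hδle : δ ≤ 1/(8 * ((-lam) * (mU.toReal + 1))) := by
        have h := min_le_right ((u - r)/2) (1/(8 * ((-lam) * (mU.toReal + 1))))
        rw [← hδdef] at h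
        exact h
      have h8 : (0:ℝ) < 8 * ((-lam) * (mU.toReal + 1)) := by nlinarith
      have h2 : δ * (8 * ((-lam) * (mU.toReal + 1))) ≤ 1 := by
        rw [← le_div_iff₀ h8]
        simpa using hδle
      have key : 2*δ*(-lam) * mU.toReal ≤ 1/4 := by
        nlinarith [mul_pos hδpos hlam', mul_nonneg (mul_pos hδpos hlam').le hmR]
      calc ENNReal.ofReal (2*δ*(-lam)) * mU
          = ENNReal.ofReal (2*δ*(-lam)) * ENNReal.ofReal mU.toReal := by
            rw [ENNReal.ofReal_toReal hmUtop]
      _ = ENNReal.ofReal (2*δ*(-lam) * mU.toReal) := by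
            rw [← ENNReal.ofReal_mul (by nlinarith : (0:ℝ) ≤ 2*δ*(-lam))]
      _ ≤ ENNReal.ofReal (1/4) := ENNReal.ofReal_le_ofReal key
      _ = 1/4 := ofReal_quarter
    set r'' : ℝ := r - δ/2 with hr''def
    have hr''L : belowL μ r'' := belowL_mono μ hrL (by rw [hr''def]; linarith)
    have hGr'' : Good μ φ r'' := hgoodlt r'' (by rw [hr''def]; linarith) hr''L
    have h1'' : ∀ z, z ≤ r'' → 1 ≤ φ z := hGr''.1
    set A'' : ℝ≥0∞ := ∫⁻ z in Set.Iic r'', ENNReal.ofReal ((r'' - z) * φ z) ∂μ with hA''def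
    have hA''top : A'' ≠ ⊤ := hGr''.2.ne
    set B'' : ℝ≥0∞ := ∫⁻ z in Set.Iic r'', ENNReal.ofReal (φ z) ∂μ with hB''def
    have hpsi'' : ∀ z, z ≤ r'' → ENNReal.ofReal (φ z) ≤ 1 + c * A'' := by
      intro z hz
      have hzL : belowL μ z := belowL_mono μ hr''L hz
      have hGz : Good μ φ z := good_mono hφmeas hGr'' hz
      have hpsieq := good_psi_eq hφmeas hGz.1 hGz.2.ne
      have hple : ENNReal.ofReal (psi μ φ z) ≤ A'' := by
        rw [hpsieq, hA''def]
        calc (∫⁻ w in Set.Iic z, ENNReal.ofReal ((z - w) * φ w) ∂μ)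
            ≤ ∫⁻ w in Set.Iic z, ENNReal.ofReal ((r'' - w) * φ w) ∂μ := by
              refine setLIntegral_mono (measKphi r'') (fun w hw => ENNReal.ofReal_le_ofReal ?_)
              have hwz : w ≤ z := hw
              have h1 : (1:ℝ) ≤ φ w := h1'' w (hwz.trans hz)
              nlinarith
        _ ≤ _ := lintegral_mono_set (Set.Iic_subset_Iic.mpr hz)
      calc ENNReal.ofReal (φ z) = ENNReal.ofReal (1 + (-lam) * psi μ φ z) := by
            rw [← phi_eq hφ hzL]
      _ ≤ ENNReal.ofReal 1 + ENNReal.ofReal ((-lam) * psi μ φ z) := ENNReal.ofReal_add_le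
      _ = 1 + c * ENNReal.ofReal (psi μ φ z) := by
            rw [ENNReal.ofReal_one, hcdef, ENNReal.ofReal_mul hlam'.le]
      _ ≤ 1 + c * A'' := add_le_add_right (mul_le_mul_right hple c) 1
    have hB''le : B'' ≤ (1 + c * A'') * μ (Set.Iic r'') := by
      rw [hB''def]
      calc (∫⁻ z in Set.Iic r'', ENNReal.ofReal (φ z) ∂μ)
          ≤ ∫⁻ _ in Set.Iic r'', (1 + c * A'') ∂μ :=
            setLIntegral_mono measurable_const (fun z hz => hpsi'' z hz)
      _ = (1 + c * A'') * μ (Set.Iic r'') := setLIntegral_const _ _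
    have hB''top : B'' ≠ ⊤ := by
      refine (hB''le.trans_lt (ENNReal.mul_lt_top ?_ (belowL_finite μ hr''L))).ne
      exact ENNReal.add_lt_top.mpr ⟨ENNReal.one_lt_top,
        ENNReal.mul_lt_top hcTop.lt_top hA''top.lt_top⟩
    obtain ⟨x_b, hx_bBad, hx_blt⟩ : ∃ x_b ∈ Bad, x_b < r + δ/2 :=
      exists_lt_of_csInf_lt ⟨x₀, hx₀Bad⟩ (by linarith : r < r + δ/2)
    have hrx_b : r ≤ x_b := csInf_le hBddB hx_bBad
    have hx_bL : belowL μ x_b := hx_bBad.1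
    have hx_bu : x_b ≤ u := by linarith
    have hr''x_b : r'' < x_b := by rw [hr''def]; linarith
    have hIsubIicu : Set.Ioc r'' x_b ⊆ Set.Iic u := fun z hz => le_trans hz.2 hx_bu
    have hμI : μ (Set.Ioc r'' x_b) ≤ mU := by rw [hminf]; exact measure_mono hIsubIicu
    have hμItop : μ (Set.Ioc r'' x_b) ≠ ⊤ := (hμI.trans_lt hmUtop.lt_top).ne
    set θ : ℝ≥0∞ := ENNReal.ofReal (2*δ*(-lam)) with hθdef
    have hθ0 : θ ≠ 0 := by
      rw [hθdef]
      simp only [ne_eq, ENNReal.ofReal_eq_zero, not_le]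
      nlinarith
    have hθc : θ = ENNReal.ofReal (2*δ) * c := by
      rw [hθdef, hcdef, ← ENNReal.ofReal_mul (by linarith : (0:ℝ) ≤ 2*δ)]
    have hθκ : θ * μ (Set.Ioc r'' x_b) ≤ 1/2 := by
      refine le_trans (mul_le_mul_right hμI θ) (le_trans hδ2 (by norm_num))
    have hwidth : ∀ w, w ≤ x_b → w - r'' ≤ 2*δ := by
      intro w hw
      rw [hr''def]
      linarith
    have hTerm1 : ∀ w, w ≤ x_b → (∫⁻ z in Set.Iic r'', ENNReal.ofReal ((w - z) * φ z) ∂μ)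
        ≤ A'' + ENNReal.ofReal (2*δ) * B'' := by
      intro w hw
      calc (∫⁻ z in Set.Iic r'', ENNReal.ofReal ((w - z) * φ z) ∂μ)
          ≤ ∫⁻ z in Set.Iic r'', (ENNReal.ofReal ((r'' - z) * φ z)
              + ENNReal.ofReal (2*δ) * ENNReal.ofReal (φ z)) ∂μ := by
            refine setLIntegral_mono ((measKphi r'').add (measφ.const_mul _)) (fun z hz => ?_)
            have hz' : z ≤ r'' := hz
            have hphi0 : (0:ℝ) ≤ φ z := le_trans zero_le_one (h1'' z hz')
            have hw2δ := hwidth w hw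
            calc ENNReal.ofReal ((w - z) * φ z)
                ≤ ENNReal.ofReal ((r'' - z) * φ z + 2*δ * φ z) :=
                  ENNReal.ofReal_le_ofReal (by nlinarith)
            _ ≤ ENNReal.ofReal ((r'' - z) * φ z) + ENNReal.ofReal (2*δ * φ z) :=
                  ENNReal.ofReal_add_le
            _ = ENNReal.ofReal ((r'' - z) * φ z) + ENNReal.ofReal (2*δ) * ENNReal.ofReal (φ z) := by
                  rw [ENNReal.ofReal_mul (by linarith : (0:ℝ) ≤ 2*δ)]
      _ = A'' + ENNReal.ofReal (2*δ) * B'' := by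
            rw [lintegral_add_left (measKphi r''), lintegral_const_mul _ measφ]
    have hTerm2pt : ∀ w, w ≤ x_b → ∀ z ∈ Set.Ioc r'' w,
        ENNReal.ofReal ((w - z) * |φ z|) ≤ ENNReal.ofReal (2*δ) + θ * g z := by
      intro w hw z hz
      have hz1 : r'' < z := hz.1
      have hz2 : z ≤ w := hz.2
      have hw2δ := hwidth w hw
      calc ENNReal.ofReal ((w - z) * |φ z|)
          = ENNReal.ofReal (w - z) * ENNReal.ofReal |φ z| :=
            ENNReal.ofReal_mul (by linarith)
      _ ≤ ENNReal.ofReal (2*δ) * (1 + c * g z) :=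
            mul_le_mul' (ENNReal.ofReal_le_ofReal (by linarith)) (phi_abs_le z)
      _ = ENNReal.ofReal (2*δ) + (ENNReal.ofReal (2*δ) * c) * g z := by ring
      _ = ENNReal.ofReal (2*δ) + θ * g z := by rw [hθc]
    have hineq : ∀ w ∈ Set.Ioc r'' x_b, g w ≤
        (A'' + ENNReal.ofReal (2*δ) * B'' + ENNReal.ofReal (2*δ) * mU)
          + θ * ∫⁻ z in Set.Ioc r'' x_b ∩ Set.Iic w, g z ∂μ := by
      intro w hw
      have hwL : belowL μ w := belowL_mono μ hx_bL hw.2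
      have hIw : Set.Ioc r'' x_b ∩ Set.Iic w = Set.Ioc r'' w := by
        rw [Set.Ioc_inter_Iic, min_eq_right hw.2]
      rw [hIw]
      have hsplit : Set.Iic w = Set.Iic r'' ∪ Set.Ioc r'' w :=
        (Set.Iic_union_Ioc_eq_Iic hw.1.le).symm
      refine (g_le_main w hwL).trans ?_
      rw [hsplit, lintegral_union measurableSet_Ioc (Set.Iic_disjoint_Ioc le_rfl)]
      have hpiece1 : (∫⁻ z in Set.Iic r'', ENNReal.ofReal ((w - z) * |φ z|) ∂μ)
          ≤ A'' + ENNReal.ofReal (2*δ) * B'' := by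
        refine le_trans (le_of_eq (setLIntegral_congr_fun measurableSet_Iic
          (fun z hz => ?_))) (hTerm1 w hw.2)
        have h1 : (1:ℝ) ≤ φ z := h1'' z hz
        rw [abs_of_nonneg (by linarith : (0:ℝ) ≤ φ z)]
      have hpiece2 : (∫⁻ z in Set.Ioc r'' w, ENNReal.ofReal ((w - z) * |φ z|) ∂μ)
          ≤ ENNReal.ofReal (2*δ) * mU + θ * ∫⁻ z in Set.Ioc r'' w, g z ∂μ := by
        calc (∫⁻ z in Set.Ioc r'' w, ENNReal.ofReal ((w - z) * |φ z|) ∂μ)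
            ≤ ∫⁻ z in Set.Ioc r'' w, (ENNReal.ofReal (2*δ) + θ * g z) ∂μ :=
              setLIntegral_mono (measurable_const.add (hgmeas.const_mul θ))
                (hTerm2pt w hw.2)
        _ = ENNReal.ofReal (2*δ) * μ (Set.Ioc r'' w) + θ * ∫⁻ z in Set.Ioc r'' w, g z ∂μ := by
              rw [lintegral_add_left measurable_const, setLIntegral_const,
                lintegral_const_mul θ hgmeas]
        _ ≤ ENNReal.ofReal (2*δ) * mU + θ * ∫⁻ z in Set.Ioc r'' w, g z ∂μ := by
              refine add_le_add_left (mul_le_mul_right ?_ _) _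
              rw [hminf]
              refine measure_mono (fun z hz => ?_)
              exact le_trans hz.2 (le_trans hw.2 hx_bu)
      refine le_trans (add_le_add hpiece1 hpiece2) (le_of_eq (by ring))
    have hsave : ∀ w ∈ Set.Ioc r'' x_b, 0 < g w → ∀ y, y < w →
        (∫⁻ z in Set.Ioc r'' x_b ∩ Set.Iic y, g z ∂μ) < ⊤ := by
      intro w hw hpos y hy
      have hwL : belowL μ w := belowL_mono μ hx_bL hw.2
      by_cases hyr : y ≤ r''
      · have hempty : Set.Ioc r'' x_b ∩ Set.Iic y = ∅ := by
          ext z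
          simp only [Set.mem_inter_iff, Set.mem_Ioc, Set.mem_Iic, Set.mem_empty_iff_false,
            iff_false, not_and]
          rintro ⟨h1, h2⟩ h3
          linarith
        rw [hempty]
        simp
      · push_neg at hyr
        have hwy : (0:ℝ) < w - y := by linarith
        have hpt : ∀ z ∈ Set.Ioc r'' x_b ∩ Set.Iic y, g z ≤
            ENNReal.ofReal (1/((w - y)*(-lam))) * ENNReal.ofReal ((w - z) * |φ z|)
              + ENNReal.ofReal (1/(-lam)) := by
          intro z hz
          have hzy : z ≤ y := hz.2
          have habs : (0:ℝ) ≤ |φ z| := abs_nonneg _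
          have h2 : |φ z| * (w - y) ≤ (w - z) * |φ z| := by nlinarith
          have hreal : |φ z - 1| / (-lam) ≤
              ((w - z) * |φ z|) * (1/((w - y)*(-lam))) + 1/(-lam) := by
            have h1 : |φ z - 1| ≤ |φ z| + 1 := by
              calc |φ z - 1| ≤ |φ z| + |(1:ℝ)| := abs_sub _ _
              _ = |φ z| + 1 := by norm_num
            have h3 : |φ z - 1| / (-lam) ≤ (|φ z| + 1) / (-lam) := by gcongr
            refine h3.trans ?_
            rw [add_div]
            refine add_le_add ?_ le_rfl
            rw [div_le_iff₀ hlam']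
            rw [show ((w - z) * |φ z|) * (1/((w - y)*(-lam))) * (-lam)
                = ((w - z) * |φ z|) / (w - y) by
              rw [one_div, mul_inv]
              rw [show ((w - z) * |φ z|) * ((w - y)⁻¹ * (-lam)⁻¹) * (-lam)
                  = ((w - z) * |φ z|) * (w - y)⁻¹ * ((-lam)⁻¹ * (-lam)) by ring]
              rw [inv_mul_cancel₀ (ne_of_gt hlam'), mul_one, ← div_eq_mul_inv]]
            rw [le_div_iff₀ hwy]
            linarith
          calc g z = ENNReal.ofReal (|φ z - 1| / (-lam)) := rfl
          _ ≤ ENNReal.ofReal (((w - z) * |φ z|) * (1/((w - y)*(-lam))) + 1/(-lam)) :=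
                ENNReal.ofReal_le_ofReal hreal
          _ ≤ ENNReal.ofReal (((w - z) * |φ z|) * (1/((w - y)*(-lam))))
                + ENNReal.ofReal (1/(-lam)) := ENNReal.ofReal_add_le
          _ = ENNReal.ofReal (1/((w - y)*(-lam))) * ENNReal.ofReal ((w - z) * |φ z|)
                + ENNReal.ofReal (1/(-lam)) := by
                rw [ENNReal.ofReal_mul (by nlinarith : (0:ℝ) ≤ (w - z) * |φ z|), mul_comm]
        have hsub : Set.Ioc r'' x_b ∩ Set.Iic y ⊆ Set.Iic w :=
          fun z hz => le_trans hz.2 hy.le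
        calc (∫⁻ z in Set.Ioc r'' x_b ∩ Set.Iic y, g z ∂μ)
            ≤ ∫⁻ z in Set.Ioc r'' x_b ∩ Set.Iic y,
                (ENNReal.ofReal (1/((w - y)*(-lam))) * ENNReal.ofReal ((w - z) * |φ z|)
                  + ENNReal.ofReal (1/(-lam))) ∂μ :=
              setLIntegral_mono (((measKabs w).const_mul _).add measurable_const) hpt
        _ ≤ ∫⁻ z in Set.Iic w,
                (ENNReal.ofReal (1/((w - y)*(-lam))) * ENNReal.ofReal ((w - z) * |φ z|)
                  + ENNReal.ofReal (1/(-lam))) ∂μ := lintegral_mono_set hsub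
        _ = ENNReal.ofReal (1/((w - y)*(-lam)))
              * (∫⁻ z in Set.Iic w, ENNReal.ofReal ((w - z) * |φ z|) ∂μ)
              + ENNReal.ofReal (1/(-lam)) * μ (Set.Iic w) := by
              rw [lintegral_add_left ((measKabs w).const_mul _),
                lintegral_const_mul _ (measKabs w), setLIntegral_const]
        _ < ⊤ := by
              refine ENNReal.add_lt_top.mpr ⟨?_, ?_⟩
              · exact ENNReal.mul_lt_top ENNReal.ofReal_lt_top (int_lt w hwL hpos)
              · exact ENNReal.mul_lt_top ENNReal.ofReal_lt_top (belowL_finite μ hwL)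
    have hCtop : (A'' + ENNReal.ofReal (2*δ) * B'' + ENNReal.ofReal (2*δ) * mU) ≠ ⊤ := by
      refine ENNReal.add_ne_top.mpr ⟨ENNReal.add_ne_top.mpr ⟨hA''top, ?_⟩, ?_⟩
      · exact (ENNReal.mul_lt_top ENNReal.ofReal_lt_top hB''top.lt_top).ne
      · exact (ENNReal.mul_lt_top ENNReal.ofReal_lt_top hmUtop.lt_top).ne
    have hgron := gronwall_aux μ g hgmeas (Set.Ioc r'' x_b) measurableSet_Ioc x_b
      (fun z hz => hz.2)
      (A'' + ENNReal.ofReal (2*δ) * B'' + ENNReal.ofReal (2*δ) * mU) θ hCtop hθ0 hθκ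
      (fun x _ => ENNReal.ofReal_lt_top) hineq hsave
    have hρItop : (∫⁻ z in Set.Ioc r'' x_b, g z ∂μ) ≠ ⊤ := by
      refine (lt_of_le_of_lt hgron ?_).ne
      refine ENNReal.mul_lt_top (by norm_num) ?_
      exact ENNReal.mul_lt_top hCtop.lt_top hμItop.lt_top
    have hTle : (∫⁻ z in Set.Ioc r'' x_b, ENNReal.ofReal (max (1 - φ z) 0) ∂μ)
        ≤ c * ∫⁻ z in Set.Ioc r'' x_b, g z ∂μ := by
      rw [← lintegral_const_mul c hgmeas]
      exact setLIntegral_mono (hgmeas.const_mul c) (fun z _ => F_le_cg z)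
    have hTtop : (∫⁻ z in Set.Ioc r'' x_b, ENNReal.ofReal (max (1 - φ z) 0) ∂μ) ≠ ⊤ := by
      refine (lt_of_le_of_lt hTle ?_).ne
      exact ENNReal.mul_lt_top hcTop.lt_top hρItop.lt_top
    have hFw : ∀ w ∈ Set.Ioc r'' x_b, ENNReal.ofReal (max (1 - φ w) 0)
        ≤ θ * ∫⁻ z in Set.Ioc r'' x_b, ENNReal.ofReal (max (1 - φ z) 0) ∂μ := by
      intro w hw
      have hwL : belowL μ w := belowL_mono μ hx_bL hw.2
      refine (fbound hμ hlam hφ hφmeas hwL).trans ?_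
      have hsplit : Set.Iic w = Set.Iic r'' ∪ Set.Ioc r'' w :=
        (Set.Iic_union_Ioc_eq_Iic hw.1.le).symm
      have hz1 : (∫⁻ z in Set.Iic r'', ENNReal.ofReal ((w - z) * max (1 - φ z) 0) ∂μ) = 0 := by
        have hae : ∀ᵐ z ∂μ, z ∈ Set.Iic r'' →
            ENNReal.ofReal ((w - z) * max (1 - φ z) 0) = 0 := by
          refine ae_of_all _ (fun z hz => ?_)
          have hmz : max (1 - φ z) 0 = 0 := max_eq_right (by linarith [h1'' z hz])
          rw [hmz, mul_zero, ENNReal.ofReal_zero]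
        rw [setLIntegral_congr_fun_ae measurableSet_Iic hae, lintegral_zero]
      calc c * ∫⁻ z in Set.Iic w, ENNReal.ofReal ((w - z) * max (1 - φ z) 0) ∂μ
          = c * ∫⁻ z in Set.Ioc r'' w, ENNReal.ofReal ((w - z) * max (1 - φ z) 0) ∂μ := by
            rw [hsplit, lintegral_union measurableSet_Ioc (Set.Iic_disjoint_Ioc le_rfl), hz1,
              zero_add]
      _ ≤ c * ∫⁻ z in Set.Ioc r'' w,
              ENNReal.ofReal (2*δ) * ENNReal.ofReal (max (1 - φ z) 0) ∂μ := by
            refine mul_le_mul_right (setLIntegral_mono (measF.const_mul _) (fun z hz => ?_)) c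
            have hz2 : z ≤ w := hz.2
            have hz1' : r'' < z := hz.1
            have hw2δ := hwidth w hw.2
            rw [ENNReal.ofReal_mul (by linarith : (0:ℝ) ≤ w - z)]
            refine mul_le_mul' (ENNReal.ofReal_le_ofReal (by linarith)) le_rfl
      _ = (ENNReal.ofReal (2*δ) * c)
            * ∫⁻ z in Set.Ioc r'' w, ENNReal.ofReal (max (1 - φ z) 0) ∂μ := by
            rw [lintegral_const_mul _ measF]
            ring
      _ ≤ θ * ∫⁻ z in Set.Ioc r'' x_b, ENNReal.ofReal (max (1 - φ z) 0) ∂μ := by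
            rw [hθc]
            refine mul_le_mul_right (lintegral_mono_set (Set.Ioc_subset_Ioc_right hw.2)) _
    have hT0 : (∫⁻ z in Set.Ioc r'' x_b, ENNReal.ofReal (max (1 - φ z) 0) ∂μ) = 0 := by
      refine ennreal_zero_of_le_mul _ (θ * μ (Set.Ioc r'' x_b)) hTtop hθκ ?_
      calc (∫⁻ z in Set.Ioc r'' x_b, ENNReal.ofReal (max (1 - φ z) 0) ∂μ)
          ≤ ∫⁻ _ in Set.Ioc r'' x_b,
              (θ * ∫⁻ z in Set.Ioc r'' x_b, ENNReal.ofReal (max (1 - φ z) 0) ∂μ) ∂μ :=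
            setLIntegral_mono measurable_const (fun z hz => hFw z hz)
      _ = (θ * ∫⁻ z in Set.Ioc r'' x_b, ENNReal.ofReal (max (1 - φ z) 0) ∂μ)
            * μ (Set.Ioc r'' x_b) := setLIntegral_const _ _
      _ = (θ * μ (Set.Ioc r'' x_b))
            * ∫⁻ z in Set.Ioc r'' x_b, ENNReal.ofReal (max (1 - φ z) 0) ∂μ := by ring
    have hphiI : ∀ w ∈ Set.Ioc r'' x_b, 1 ≤ φ w := by
      intro w hw
      have h1 := hFw w hw
      rw [hT0, mul_zero, nonpos_iff_eq_zero] at h1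
      have h3 : 1 - φ w ≤ 0 := le_trans (le_max_left _ _) (ENNReal.ofReal_eq_zero.mp h1)
      linarith
    refine hx_bBad.2 ⟨?_, ?_⟩
    · intro z hz
      rcases le_or_gt z r'' with h | h
      · exact h1'' z h
      · exact hphiI z ⟨h, hz⟩
    · have hsplit : Set.Iic x_b = Set.Iic r'' ∪ Set.Ioc r'' x_b :=
        (Set.Iic_union_Ioc_eq_Iic hr''x_b.le).symm
      rw [hsplit, lintegral_union measurableSet_Ioc (Set.Iic_disjoint_Ioc le_rfl)]
      refine ENNReal.add_lt_top.mpr ⟨?_, ?_⟩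
      · refine (hTerm1 x_b le_rfl).trans_lt ?_
        exact ENNReal.add_lt_top.mpr ⟨hA''top.lt_top,
          ENNReal.mul_lt_top ENNReal.ofReal_lt_top hB''top.lt_top⟩
      · calc (∫⁻ z in Set.Ioc r'' x_b, ENNReal.ofReal ((x_b - z) * φ z) ∂μ)
            ≤ ∫⁻ z in Set.Ioc r'' x_b, (ENNReal.ofReal (2*δ) + θ * g z) ∂μ := by
              refine setLIntegral_mono (measurable_const.add (hgmeas.const_mul θ))
                (fun z hz => ?_)
              refine le_trans (ENNReal.ofReal_le_ofReal ?_) (hTerm2pt x_b le_rfl z hz)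
              have hz2 : z ≤ x_b := hz.2
              exact mul_le_mul_of_nonneg_left (le_abs_self _) (by linarith)
        _ = ENNReal.ofReal (2*δ) * μ (Set.Ioc r'' x_b)
              + θ * ∫⁻ z in Set.Ioc r'' x_b, g z ∂μ := by
              rw [lintegral_add_left measurable_const, setLIntegral_const,
                lintegral_const_mul θ hgmeas]
        _ < ⊤ := by
              refine ENNReal.add_lt_top.mpr ⟨?_, ?_⟩
              · exact ENNReal.mul_lt_top ENNReal.ofReal_lt_top hμItop.lt_top
              · exact ENNReal.mul_lt_top ENNReal.ofReal_lt_top hρItop.lt_top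

  · -- CASE A : no good point
    push_neg at hexg
    set σ : Measure ℝ := (μ.restrict (Set.Iic x₀)).withDensity
      (fun z => ENNReal.ofReal (x₀ - z)) with hσdef
    have hσA : ∀ A : Set ℝ, MeasurableSet A → A ⊆ Set.Iic x₀ →
        σ A = ∫⁻ z in A, ENNReal.ofReal (x₀ - z) ∂μ := by
      intro A hA hsub
      rw [hσdef, withDensity_apply _ hA, Measure.restrict_restrict hA, Set.inter_eq_left.mpr hsub]
    have hσtop : σ (Set.Iic x₀) ≠ ⊤ := by
      rw [hσA _ measurableSet_Iic subset_rfl]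
      exact (hμ x₀ hx₀L).ne
    have htend : Filter.Tendsto (fun n : ℕ => σ (Set.Iic (x₀ - n))) Filter.atTop (nhds 0) := by
      have h1 : (⋂ n : ℕ, Set.Iic (x₀ - n)) = ∅ := by
        ext z
        simp only [Set.mem_iInter, Set.mem_Iic, Set.mem_empty_iff_false, iff_false, not_forall,
          not_le]
        obtain ⟨n, hn⟩ := exists_nat_gt (x₀ - z)
        exact ⟨n, by linarith⟩
      have h2 := tendsto_measure_iInter_atTop (μ := σ) (s := fun n : ℕ => Set.Iic (x₀ - n))
        (fun n => measurableSet_Iic.nullMeasurableSet)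
        (fun m n hmn => Set.Iic_subset_Iic.mpr (by
          have : (m:ℝ) ≤ n := Nat.cast_le.mpr hmn
          linarith))
        ⟨0, by simpa using hσtop⟩
      rw [h1] at h2
      simpa [Function.comp_def] using h2
    have hεpos : (0:ℝ≥0∞) < ENNReal.ofReal (1 / (4 * (-lam))) := by
      rw [ENNReal.ofReal_pos]; positivity
    obtain ⟨n, hn⟩ : ∃ n : ℕ, σ (Set.Iic (x₀ - n)) < ENNReal.ofReal (1 / (4 * (-lam))) :=
      (htend.eventually_lt_const hεpos).exists
    set x₁ : ℝ := x₀ - n with hx₁def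
    have hx₁x₀ : x₁ ≤ x₀ := by
      rw [hx₁def]
      have : (0:ℝ) ≤ n := Nat.cast_nonneg n
      linarith
    have hx₁L : belowL μ x₁ := belowL_mono μ hx₀L hx₁x₀
    set M' : ℝ≥0∞ := ∫⁻ z in Set.Iic x₁, ENNReal.ofReal (x₁ - z) ∂μ with hM'def
    have hM'top : M' ≠ ⊤ := (hμ x₁ hx₁L).ne
    have hM'le : M' ≤ σ (Set.Iic x₁) := by
      rw [hσA _ measurableSet_Iic (Set.Iic_subset_Iic.mpr hx₁x₀), hM'def]
      refine setLIntegral_mono ((measurable_const.sub measurable_id).ennreal_ofReal)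
        (fun z hz => ENNReal.ofReal_le_ofReal (by linarith))
    have hsmall : c * M' ≤ 1/4 := by
      calc c * M' ≤ c * ENNReal.ofReal (1/(4*(-lam))) :=
            mul_le_mul_right (hM'le.trans hn.le) c
      _ = ENNReal.ofReal ((-lam) * (1/(4*(-lam)))) := by
            rw [hcdef, ← ENNReal.ofReal_mul hlam'.le]
      _ = ENNReal.ofReal (1/4) := by
            congr 1
            rw [show (-lam) * (1/(4*(-lam))) = (4 * (-lam))/(4 * (-lam)) * (1/4) by ring]
            rw [div_self (ne_of_gt (by nlinarith : (0:ℝ) < 4 * (-lam))), one_mul]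
      _ = 1/4 := ofReal_quarter
    set ν : Measure ℝ := μ.withDensity (fun z => ENNReal.ofReal (x₁ - z)) with hνdef
    have hν : ∀ (A : Set ℝ), MeasurableSet A → ∀ (h : ℝ → ℝ≥0∞), Measurable h →
        (∫⁻ z in A, h z ∂ν) = ∫⁻ z in A, ENNReal.ofReal (x₁ - z) * h z ∂μ := by
      intro A hA h hh
      rw [hνdef, restrict_withDensity hA, lintegral_withDensity_eq_lintegral_mul _
        (measK x₁) hh]
      rfl
    have hνI : ν (Set.Iic x₁) = M' := by
      rw [hνdef, withDensity_apply _ measurableSet_Iic, hM'def]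
    have hineq : ∀ w ∈ Set.Iic x₁, g w ≤ M' + c * ∫⁻ z in Set.Iic x₁ ∩ Set.Iic w, g z ∂ν := by
      intro w hw
      have hwx₁ : w ≤ x₁ := hw
      have hwL : belowL μ w := belowL_mono μ hx₁L hwx₁
      have hIw : Set.Iic x₁ ∩ Set.Iic w = Set.Iic w := by
        rw [Set.Iic_inter_Iic, min_eq_right hwx₁]
      rw [hIw]
      refine (g_le_main w hwL).trans ?_
      have step1 : (∫⁻ z in Set.Iic w, ENNReal.ofReal ((w - z) * |φ z|) ∂μ)
          ≤ ∫⁻ z in Set.Iic w,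
              (ENNReal.ofReal (x₁ - z) + ENNReal.ofReal (x₁ - z) * (c * g z)) ∂μ := by
        refine setLIntegral_mono (measKsum x₁) (fun z hz => ?_)
        have hzw : z ≤ w := hz
        calc ENNReal.ofReal ((w - z) * |φ z|)
            = ENNReal.ofReal (w - z) * ENNReal.ofReal |φ z| :=
              ENNReal.ofReal_mul (by linarith)
        _ ≤ ENNReal.ofReal (x₁ - z) * (1 + c * g z) :=
              mul_le_mul' (ENNReal.ofReal_le_ofReal (by linarith)) (phi_abs_le z)
        _ = ENNReal.ofReal (x₁ - z) + ENNReal.ofReal (x₁ - z) * (c * g z) := by ring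
      refine step1.trans ?_
      rw [lintegral_add_left (measK x₁)]
      refine add_le_add ?_ ?_
      · rw [hM'def]
        exact lintegral_mono_set (Set.Iic_subset_Iic.mpr hwx₁)
      · rw [hν _ measurableSet_Iic g hgmeas]
        have hcomm : ∀ z : ℝ, ENNReal.ofReal (x₁ - z) * (c * g z)
            = c * (ENNReal.ofReal (x₁ - z) * g z) := fun z => by ring
        simp_rw [hcomm]
        rw [lintegral_const_mul c (measKg x₁)]
    have hsave : ∀ w ∈ Set.Iic x₁, 0 < g w → ∀ y, y < w →
        (∫⁻ z in Set.Iic x₁ ∩ Set.Iic y, g z ∂ν) < ⊤ := by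
      intro w hw hpos y hy
      have hwx₁ : w ≤ x₁ := hw
      have hwL : belowL μ w := belowL_mono μ hx₁L hwx₁
      have hIy : Set.Iic x₁ ∩ Set.Iic y = Set.Iic y := by
        rw [Set.Iic_inter_Iic, min_eq_right (by linarith)]
      rw [hIy, hν _ measurableSet_Iic g hgmeas]
      set K : ℝ := (x₁ - y) / ((w - y) * (-lam)) with hKdef
      have hwy : (0:ℝ) < w - y := by linarith
      have hK0 : 0 ≤ K := by
        rw [hKdef]
        have : (0:ℝ) ≤ x₁ - y := by linarith
        positivity
      have hpt : ∀ z ∈ Set.Iic y, ENNReal.ofReal (x₁ - z) * g z ≤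
          ENNReal.ofReal K * (ENNReal.ofReal ((w - z) * |φ z|) + ENNReal.ofReal (w - z)) := by
        intro z hz
        have hzy : z ≤ y := hz
        have haff : (x₁ - z) ≤ ((x₁ - y)/(w - y)) * (w - z) := by
          rw [div_mul_eq_mul_div, le_div_iff₀ hwy]
          nlinarith
        calc ENNReal.ofReal (x₁ - z) * g z
            = ENNReal.ofReal ((x₁ - z) * (|φ z - 1| / (-lam))) := by
              rw [hgdef, ← ENNReal.ofReal_mul (by linarith : (0:ℝ) ≤ x₁ - z)]
        _ ≤ ENNReal.ofReal (K * ((w - z) * |φ z| + (w - z))) := by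
              refine ENNReal.ofReal_le_ofReal ?_
              have h1 : |φ z - 1| ≤ |φ z| + 1 := by
                calc |φ z - 1| ≤ |φ z| + |(1:ℝ)| := abs_sub _ _
                _ = |φ z| + 1 := by norm_num
              have h2 : (x₁ - z) * (|φ z - 1| / (-lam)) ≤
                  (((x₁ - y)/(w - y)) * (w - z)) * ((|φ z| + 1)/(-lam)) := by
                have hxy1 : (0:ℝ) ≤ x₁ - y := by linarith
                refine mul_le_mul haff (by gcongr) (by positivity) ?_
                have h3 : (0:ℝ) ≤ (x₁ - y)/(w - y) := by positivity
                have h4 : (0:ℝ) ≤ w - z := by linarith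
                exact mul_nonneg h3 h4
              refine h2.trans (le_of_eq ?_)
              rw [hKdef]
              field_simp
        _ ≤ ENNReal.ofReal K * (ENNReal.ofReal ((w - z) * |φ z|) + ENNReal.ofReal (w - z)) := by
              rw [ENNReal.ofReal_mul hK0]
              exact mul_le_mul_right (ENNReal.ofReal_add_le) _
      calc (∫⁻ z in Set.Iic y, ENNReal.ofReal (x₁ - z) * g z ∂μ)
          ≤ ∫⁻ z in Set.Iic y, ENNReal.ofReal K *
              (ENNReal.ofReal ((w - z) * |φ z|) + ENNReal.ofReal (w - z)) ∂μ :=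
            setLIntegral_mono (((measKabs w).add (measK w)).const_mul _) hpt
      _ = ENNReal.ofReal K * ∫⁻ z in Set.Iic y,
              (ENNReal.ofReal ((w - z) * |φ z|) + ENNReal.ofReal (w - z)) ∂μ := by
            rw [lintegral_const_mul' _ _ ENNReal.ofReal_ne_top]
      _ ≤ ENNReal.ofReal K * ((∫⁻ z in Set.Iic w, ENNReal.ofReal ((w - z) * |φ z|) ∂μ)
              + ∫⁻ z in Set.Iic w, ENNReal.ofReal (w - z) ∂μ) := by
            refine mul_le_mul_right ?_ _
            rw [lintegral_add_left (measKabs w)]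
            exact add_le_add (lintegral_mono_set (Set.Iic_subset_Iic.mpr hy.le))
              (lintegral_mono_set (Set.Iic_subset_Iic.mpr hy.le))
      _ < ⊤ := by
            refine ENNReal.mul_lt_top ENNReal.ofReal_lt_top ?_
            exact ENNReal.add_lt_top.mpr ⟨int_lt w hwL hpos, hμ w hwL⟩
    have hgron := gronwall_aux ν g hgmeas (Set.Iic x₁) measurableSet_Iic x₁ subset_rfl
      M' c hM'top hc0
      (by rw [hνI]; exact hsmall.trans (by norm_num))
      (fun x _ => ENNReal.ofReal_lt_top) hineq hsave
    have hρItop : (∫⁻ z in Set.Iic x₁, g z ∂ν) ≠ ⊤ := by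
      refine (lt_of_le_of_lt hgron ?_).ne
      rw [hνI]
      exact ENNReal.mul_lt_top (by norm_num) (ENNReal.mul_lt_top hM'top.lt_top hM'top.lt_top)
    have hTle : (∫⁻ z in Set.Iic x₁, ENNReal.ofReal (max (1 - φ z) 0) ∂ν)
        ≤ c * ∫⁻ z in Set.Iic x₁, g z ∂ν := by
      rw [← lintegral_const_mul c hgmeas]
      exact setLIntegral_mono (hgmeas.const_mul c) (fun z _ => F_le_cg z)
    have hTtop : (∫⁻ z in Set.Iic x₁, ENNReal.ofReal (max (1 - φ z) 0) ∂ν) ≠ ⊤ := by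
      refine (lt_of_le_of_lt hTle ?_).ne
      exact ENNReal.mul_lt_top hcTop.lt_top hρItop.lt_top
    have hFw : ∀ w, w ≤ x₁ → ENNReal.ofReal (max (1 - φ w) 0)
        ≤ c * ∫⁻ z in Set.Iic x₁, ENNReal.ofReal (max (1 - φ z) 0) ∂ν := by
      intro w hw
      have hwL := belowL_mono μ hx₁L hw
      refine (fbound hμ hlam hφ hφmeas hwL).trans ?_
      refine mul_le_mul_right ?_ c
      calc (∫⁻ z in Set.Iic w, ENNReal.ofReal ((w - z) * max (1 - φ z) 0) ∂μ)
          ≤ ∫⁻ z in Set.Iic w,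
              ENNReal.ofReal (x₁ - z) * ENNReal.ofReal (max (1 - φ z) 0) ∂μ := by
            refine setLIntegral_mono (measKF x₁) (fun z hz => ?_)
            have hzw : z ≤ w := hz
            rw [ENNReal.ofReal_mul (by linarith : (0:ℝ) ≤ w - z)]
            exact mul_le_mul' (ENNReal.ofReal_le_ofReal (by linarith)) le_rfl
      _ = ∫⁻ z in Set.Iic w, ENNReal.ofReal (max (1 - φ z) 0) ∂ν :=
            (hν _ measurableSet_Iic _ measF).symm
      _ ≤ _ := lintegral_mono_set (Set.Iic_subset_Iic.mpr hw)
    have hT0 : (∫⁻ z in Set.Iic x₁, ENNReal.ofReal (max (1 - φ z) 0) ∂ν) = 0 := by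
      refine ennreal_zero_of_le_mul _ (c * M') hTtop (hsmall.trans (by norm_num)) ?_
      calc (∫⁻ z in Set.Iic x₁, ENNReal.ofReal (max (1 - φ z) 0) ∂ν)
          ≤ ∫⁻ _ in Set.Iic x₁,
              (c * ∫⁻ z in Set.Iic x₁, ENNReal.ofReal (max (1 - φ z) 0) ∂ν) ∂ν :=
            setLIntegral_mono measurable_const (fun z hz => hFw z hz)
      _ = (c * ∫⁻ z in Set.Iic x₁, ENNReal.ofReal (max (1 - φ z) 0) ∂ν) * ν (Set.Iic x₁) :=
            setLIntegral_const _ _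
      _ = (c * M') * (∫⁻ z in Set.Iic x₁, ENNReal.ofReal (max (1 - φ z) 0) ∂ν) := by
            rw [hνI]; ring
    have hphi1 : ∀ w, w ≤ x₁ → 1 ≤ φ w := by
      intro w hw
      have h1 := hFw w hw
      rw [hT0, mul_zero, nonpos_iff_eq_zero] at h1
      have h2 := ENNReal.ofReal_eq_zero.mp h1
      have h3 : 1 - φ w ≤ 0 := le_trans (le_max_left _ _) h2
      linarith
    refine hexg x₁ hx₁L ⟨hphi1, ?_⟩
    calc (∫⁻ z in Set.Iic x₁, ENNReal.ofReal ((x₁ - z) * φ z) ∂μ)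
        ≤ ∫⁻ z in Set.Iic x₁,
            (ENNReal.ofReal (x₁ - z) + ENNReal.ofReal (x₁ - z) * (c * g z)) ∂μ := by
          refine setLIntegral_mono (measKsum x₁) (fun z hz => ?_)
          have hzx : z ≤ x₁ := hz
          calc ENNReal.ofReal ((x₁ - z) * φ z)
              ≤ ENNReal.ofReal ((x₁ - z) * |φ z|) :=
                ENNReal.ofReal_le_ofReal
                  (mul_le_mul_of_nonneg_left (le_abs_self _) (by linarith))
          _ = ENNReal.ofReal (x₁ - z) * ENNReal.ofReal |φ z| :=
                ENNReal.ofReal_mul (by linarith)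
          _ ≤ ENNReal.ofReal (x₁ - z) * (1 + c * g z) := mul_le_mul_right (phi_abs_le z) _
          _ = _ := by ring
    _ = M' + ∫⁻ z in Set.Iic x₁, ENNReal.ofReal (x₁ - z) * (c * g z) ∂μ := by
          rw [lintegral_add_left (measK x₁)]
    _ = M' + c * ∫⁻ z in Set.Iic x₁, g z ∂ν := by
          congr 1
          rw [hν _ measurableSet_Iic g hgmeas]
          have hcomm : ∀ z : ℝ, ENNReal.ofReal (x₁ - z) * (c * g z)
              = c * (ENNReal.ofReal (x₁ - z) * g z) := fun z => by ring
          simp_rw [hcomm]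
          rw [lintegral_const_mul c (measKg x₁)]
    _ < ⊤ := by
          refine ENNReal.add_lt_top.mpr ⟨hM'top.lt_top, ?_⟩
          exact ENNReal.mul_lt_top hcTop.lt_top hρItop.lt_top

end Stmt3aux


set_option maxHeartbeats 1000000 in
theorem stmt_3 (μ : Measure ℝ) (hμ : IsEntrance μ)
    (hsupp : μ ≠ 0)  -- `supp μ ≠ ∅`
    (lam : ℝ) (hlam : lam < 0)
    (φ : ℝ → ℝ) (hφmeas : Measurable φ)
    (hφ : ∀ x, belowL μ x → φ x = 1 - lam * ∫ y in Set.Iic x, (x - y) * φ y ∂μ) :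
    -- (i)
    (∀ a, belowL μ a → 0 < μ (Set.Iic a) →
      ∀ x, a ≤ x → belowL μ x →
        1 + (-lam) * (x - a) * (μ (Set.Iic a)).toReal ≤ φ x) ∧
    -- (ii): `∫_x^l φ_λ(y)⁻² dy < ∞`
    (∀ x, belowL μ x →
      (∫⁻ y in {y : ℝ | x < y ∧ belowL μ y}, ENNReal.ofReal ((φ y ^ 2)⁻¹)) < ⊤) := by
  have hlam' : (0:ℝ) < -lam := by linarith
  have hclaim := Stmt3aux.claim1 μ hμ lam hlam φ hφmeas hφ
  have hφ1 : ∀ y, belowL μ y → 1 ≤ φ y := fun y hy => (hclaim y hy).1 y le_rfl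
  -- part (i)
  have hpart1 : ∀ a, belowL μ a → 0 < μ (Set.Iic a) →
      ∀ x, a ≤ x → belowL μ x →
        1 + (-lam) * (x - a) * (μ (Set.Iic a)).toReal ≤ φ x := by
    intro a haL hma x hax hxL
    have hGood := hclaim x hxL
    have hphieq := Stmt3aux.phi_eq hφ hxL
    have hpsieq := Stmt3aux.good_psi_eq hφmeas hGood.1 hGood.2.ne
    have hma_fin : μ (Set.Iic a) ≠ ⊤ := (Stmt3aux.belowL_finite μ haL).ne
    have hlow : ENNReal.ofReal (x - a) * μ (Set.Iic a) ≤ ENNReal.ofReal (Stmt3aux.psi μ φ x) := by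
      rw [hpsieq]
      calc ENNReal.ofReal (x - a) * μ (Set.Iic a)
          = ∫⁻ _ in Set.Iic a, ENNReal.ofReal (x - a) ∂μ := (setLIntegral_const _ _).symm
      _ ≤ ∫⁻ z in Set.Iic a, ENNReal.ofReal ((x - z) * φ z) ∂μ := by
            refine setLIntegral_mono
              (((measurable_const.sub measurable_id).mul hφmeas).ennreal_ofReal)
              (fun z hz => ENNReal.ofReal_le_ofReal ?_)
            have hza : z ≤ a := hz
            have h1 : 1 ≤ φ z := hGood.1 z (hza.trans hax)
            nlinarith
      _ ≤ ∫⁻ z in Set.Iic x, ENNReal.ofReal ((x - z) * φ z) ∂μ :=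
            lintegral_mono_set (Set.Iic_subset_Iic.mpr hax)
    have hψge : (x - a) * (μ (Set.Iic a)).toReal ≤ Stmt3aux.psi μ φ x := by
      have h1 := ENNReal.toReal_mono ENNReal.ofReal_ne_top hlow
      have hψ0 : 0 ≤ Stmt3aux.psi μ φ x := by
        refine setIntegral_nonneg measurableSet_Iic (fun z hz => ?_)
        have h2 : 1 ≤ φ z := hGood.1 z hz
        have h3 : z ≤ x := hz
        nlinarith
      rw [ENNReal.toReal_mul, ENNReal.toReal_ofReal (by linarith : (0:ℝ) ≤ x - a),
        ENNReal.toReal_ofReal hψ0] at h1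
      exact h1
    rw [hphieq]
    nlinarith [hψge]
  refine ⟨hpart1, ?_⟩
  intro x hxL
  have hbound1 : ∀ y, belowL μ y → ENNReal.ofReal ((φ y ^ 2)⁻¹) ≤ 1 := by
    intro y hy
    have h1 := hφ1 y hy
    rw [← ENNReal.ofReal_one]
    refine ENNReal.ofReal_le_ofReal ?_
    rw [inv_le_one_iff₀]
    right
    nlinarith
  by_cases hall : ∀ a, belowL μ a → μ (Set.Iic a) = 0
  · -- all mass is at the right end : the set of points below l is bounded
    have hbdd : ∃ b, ∀ y, belowL μ y → y ≤ b := by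
      by_contra hnb
      push_neg at hnb
      refine hsupp ?_
      have huniv : μ Set.univ = 0 := by
        have hU : (Set.univ : Set ℝ) = ⋃ n : ℕ, Set.Iic (n : ℝ) := by
          ext z
          simp only [Set.mem_univ, Set.mem_iUnion, Set.mem_Iic, true_iff]
          obtain ⟨n, hn⟩ := exists_nat_ge z
          exact ⟨n, hn⟩
        have hzero : ∀ n : ℕ, μ (Set.Iic (n : ℝ)) = 0 := by
          intro n
          obtain ⟨y, hyL, hny⟩ := hnb (n : ℝ)
          exact hall _ (Stmt3aux.belowL_mono μ hyL hny.le)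
        rw [hU]
        refine le_antisymm (le_trans (measure_iUnion_le _) ?_) (zero_le)
        simp [hzero]
      exact Measure.measure_univ_eq_zero.mp huniv
    obtain ⟨b, hb⟩ := hbdd
    have hsub : {y : ℝ | x < y ∧ belowL μ y} ⊆ Set.Ioc x b :=
      fun y hy => ⟨hy.1, hb y hy.2⟩
    calc (∫⁻ y in {y : ℝ | x < y ∧ belowL μ y}, ENNReal.ofReal ((φ y ^ 2)⁻¹))
        ≤ ∫⁻ _ in {y : ℝ | x < y ∧ belowL μ y}, 1 :=
          setLIntegral_mono measurable_const (fun y hy => hbound1 y hy.2)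
    _ ≤ ∫⁻ _ in Set.Ioc x b, 1 := lintegral_mono_set hsub
    _ = volume (Set.Ioc x b) := setLIntegral_one _
    _ < ⊤ := by
          rw [Real.volume_Ioc]
          exact ENNReal.ofReal_lt_top
  · push_neg at hall
    obtain ⟨a, haL, hma⟩ := hall
    have hma_fin : μ (Set.Iic a) ≠ ⊤ := (Stmt3aux.belowL_finite μ haL).ne
    have hm0 : 0 < (μ (Set.Iic a)).toReal := ENNReal.toReal_pos hma hma_fin
    set m : ℝ := (μ (Set.Iic a)).toReal with hmdef
    set k : ℝ := (-lam) * m with hkdef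
    have hk0 : 0 < k := mul_pos hlam' hm0
    set b : ℝ := max a x with hbdef
    -- measurability of the region
    have hDmeas : MeasurableSet {y : ℝ | belowL μ y} := by
      by_cases hD1 : ∀ y : ℝ, belowL μ y
      · have : {y : ℝ | belowL μ y} = Set.univ := Set.eq_univ_of_forall hD1
        rw [this]; exact MeasurableSet.univ
      · push_neg at hD1
        obtain ⟨y₀, hy₀⟩ := hD1
        by_cases hD0 : ∃ y : ℝ, belowL μ y
        · obtain ⟨y₁, hy₁⟩ := hD0
          have hbddD : ∀ y, belowL μ y → y ≤ y₀ := by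
            intro y hy
            by_contra hlt
            push_neg at hlt
            exact hy₀ (Stmt3aux.belowL_mono μ hy hlt.le)
          have hBdd : BddAbove {y : ℝ | belowL μ y} := ⟨y₀, fun y hy => hbddD y hy⟩
          set sb : ℝ := sSup {y : ℝ | belowL μ y} with hsbdef
          by_cases hsb : belowL μ sb
          · have : {y : ℝ | belowL μ y} = Set.Iic sb := by
              ext z
              simp only [Set.mem_setOf_eq, Set.mem_Iic]
              exact ⟨fun h => le_csSup hBdd h, fun h => Stmt3aux.belowL_mono μ hsb h⟩
            rw [this]; exact measurableSet_Iic
          · have : {y : ℝ | belowL μ y} = Set.Iio sb := by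
              ext z
              simp only [Set.mem_setOf_eq, Set.mem_Iio]
              constructor
              · intro h
                rcases lt_or_eq_of_le (le_csSup hBdd h) with h' | h'
                · exact h'
                · rw [h'] at h
                  exact absurd h hsb
              · intro h
                obtain ⟨d, hd, hzd⟩ := exists_lt_of_lt_csSup
                  (⟨y₁, hy₁⟩ : Set.Nonempty {y : ℝ | belowL μ y}) h
                exact Stmt3aux.belowL_mono μ hd hzd.le
            rw [this]; exact measurableSet_Iio
        · push_neg at hD0
          have : {y : ℝ | belowL μ y} = ∅ := by
            ext z; simp only [Set.mem_setOf_eq, Set.mem_empty_iff_false, iff_false]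
            exact hD0 z
          rw [this]; exact MeasurableSet.empty
    have hSmeas : MeasurableSet {y : ℝ | x < y ∧ belowL μ y} := by
      have : {y : ℝ | x < y ∧ belowL μ y} = Set.Ioi x ∩ {y : ℝ | belowL μ y} := rfl
      rw [this]
      exact measurableSet_Ioi.inter hDmeas
    -- the dominating integrable function
    have hint0 : Integrable (fun t : ℝ => (1 + t^2)⁻¹) volume := integrable_inv_one_add_sq
    have hint1 : Integrable (fun t : ℝ => (1 + (t - k*b)^2)⁻¹) volume :=
      hint0.comp_sub_right (k*b)
    have hint2 : Integrable (fun y : ℝ => (1 + (k*y - k*b)^2)⁻¹) volume := by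
      have h := hint1.comp_mul_left' (ne_of_gt hk0)
      exact h
    have hint3 : Integrable (fun y : ℝ => (1 + (k*(y - b))^2)⁻¹) volume := by
      refine hint2.congr (ae_of_all _ (fun y => ?_))
      ring_nf
    -- split the region at b
    have hxb : x ≤ b := le_max_right a x
    have hab : a ≤ b := le_max_left a x
    have hsplitS : {y : ℝ | x < y ∧ belowL μ y} =
        ({y : ℝ | x < y ∧ belowL μ y} ∩ Set.Iic b) ∪
          ({y : ℝ | x < y ∧ belowL μ y} ∩ Set.Ioi b) := by
      rw [← Set.inter_union_distrib_left, Set.Iic_union_Ioi, Set.inter_univ]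
    rw [hsplitS, lintegral_union (hSmeas.inter measurableSet_Ioi)
      (Set.disjoint_of_subset Set.inter_subset_right Set.inter_subset_right
        (Set.Iic_disjoint_Ioi le_rfl))]
    refine ENNReal.add_lt_top.mpr ⟨?_, ?_⟩
    · calc (∫⁻ y in {y : ℝ | x < y ∧ belowL μ y} ∩ Set.Iic b, ENNReal.ofReal ((φ y ^ 2)⁻¹))
          ≤ ∫⁻ _ in {y : ℝ | x < y ∧ belowL μ y} ∩ Set.Iic b, 1 :=
            setLIntegral_mono measurable_const (fun y hy => hbound1 y hy.1.2)
      _ ≤ ∫⁻ _ in Set.Ioc x b, 1 :=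
            lintegral_mono_set (fun y hy => ⟨hy.1.1, hy.2⟩)
      _ = volume (Set.Ioc x b) := setLIntegral_one _
      _ < ⊤ := by
            rw [Real.volume_Ioc]
            exact ENNReal.ofReal_lt_top
    · have hptS : ∀ y ∈ {y : ℝ | x < y ∧ belowL μ y} ∩ Set.Ioi b,
          ENNReal.ofReal ((φ y ^ 2)⁻¹) ≤ ENNReal.ofReal ((1 + (k*(y - b))^2)⁻¹) := by
        intro y hy
        have hyb : b < y := hy.2
        have hyL : belowL μ y := hy.1.2
        have hφy := hpart1 a haL (pos_iff_ne_zero.mpr hma) y (by linarith [hab]) hyL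
        refine ENNReal.ofReal_le_ofReal ?_
        have h1 : 1 + k*(y - b) ≤ φ y := by
          have h2 : k*(y - b) ≤ (-lam) * (y - a) * m := by
            rw [hkdef]
            have : y - b ≤ y - a := by linarith [hab]
            nlinarith
          calc 1 + k*(y - b) ≤ 1 + (-lam) * (y - a) * m := by linarith
          _ ≤ φ y := hφy
        have h3 : (0:ℝ) < 1 + k*(y - b) := by nlinarith
        have h4 : 1 + (k*(y - b))^2 ≤ φ y ^ 2 := by nlinarith
        have h5 : (0:ℝ) < 1 + (k*(y - b))^2 := by positivity
        exact inv_anti₀ h5 h4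
      calc (∫⁻ y in {y : ℝ | x < y ∧ belowL μ y} ∩ Set.Ioi b, ENNReal.ofReal ((φ y ^ 2)⁻¹))
          ≤ ∫⁻ y in {y : ℝ | x < y ∧ belowL μ y} ∩ Set.Ioi b,
              ENNReal.ofReal ((1 + (k*(y - b))^2)⁻¹) := by
            refine setLIntegral_mono ?_ hptS
            exact (Measurable.inv (measurable_const.add
              (((measurable_id.sub measurable_const).const_mul k).pow measurable_const))).ennreal_ofReal
      _ ≤ ∫⁻ y, ENNReal.ofReal ((1 + (k*(y - b))^2)⁻¹) := setLIntegral_le_lintegral _ _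
      _ ≤ ∫⁻ y, ENNReal.ofReal ‖(1 + (k*(y - b))^2)⁻¹‖ := by
            refine lintegral_mono (fun y => ENNReal.ofReal_le_ofReal (le_abs_self _))
      _ < ⊤ := by
            have h6 := hint3.2
            rw [hasFiniteIntegral_iff_norm] at h6
            exact h6
end

section
/- Let mₙ and m be nondecreasing right-continuous functions from ℝ to [0,∞] and suppose mₙ converges to m in the sense that m̂ₙ(x) → m̂(x) at every point x of continuity of m̂, where m̂ := (2/π) arctan(m) (with the convention arctan(∞) = π/2). Set l := sup{x : m(x) < ∞} and lₙ := sup{x : mₙ(x) < ∞}. Then liminf_{n→∞} lₙ ≥ l. -/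
open MeasureTheory Filter

/-- `m̂ = (2/π) arctan m`, with the convention `arctan ∞ = π/2`, i.e. `m̂ = 1` where `m = ∞`. -/
noncomputable def mhat (m : ℝ → ENNReal) (x : ℝ) : ℝ :=
  if m x = ⊤ then 1 else (2 / Real.pi) * Real.arctan (m x).toReal

/-- `l = sup {x | m(x) < ∞}`, as an extended real number. -/
noncomputable def lengthOf (m : ℝ → ENNReal) : EReal :=
  sSup (Real.toEReal '' {x : ℝ | m x < ⊤})

lemma mhat_lt_one {m : ℝ → ENNReal} {x : ℝ} (h : m x ≠ ⊤) : mhat m x < 1 := by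
  rw [mhat, if_neg h]
  have h1 : Real.arctan (m x).toReal < Real.pi / 2 := Real.arctan_lt_pi_div_two _
  have h2 : (0:ℝ) < 2 / Real.pi := by positivity
  calc (2 / Real.pi) * Real.arctan (m x).toReal < (2 / Real.pi) * (Real.pi / 2) := by
        exact mul_lt_mul_of_pos_left h1 h2
    _ = 1 := by field_simp

lemma mhat_mono {m : ℝ → ENNReal} (hm : Monotone m) : Monotone (mhat m) := by
  intro a b hab
  simp only [mhat]
  by_cases hb : m b = ⊤
  · rw [if_pos hb]
    by_cases ha : m a = ⊤
    · rw [if_pos ha]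
    · rw [if_neg ha]
      have := mhat_lt_one ha
      rw [mhat, if_neg ha] at this
      exact this.le
  · have ha : m a ≠ ⊤ := fun h => hb (top_le_iff.1 (h ▸ hm hab))
    rw [if_neg ha, if_neg hb]
    have : (0:ℝ) ≤ 2 / Real.pi := by positivity
    refine mul_le_mul_of_nonneg_left ?_ this
    exact Real.arctan_strictMono.monotone (ENNReal.toReal_mono hb (hm hab))

theorem stmt_4 (m : ℝ → ENNReal) (mseq : ℕ → ℝ → ENNReal)
    (hm_mono : Monotone m)
    (hm_rc : ∀ x : ℝ, ContinuousWithinAt m (Set.Ici x) x)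
    (hmseq_mono : ∀ n, Monotone (mseq n))
    (hmseq_rc : ∀ n, ∀ x : ℝ, ContinuousWithinAt (mseq n) (Set.Ici x) x)
    (hconv : ∀ x : ℝ, ContinuousAt (mhat m) x →
      Tendsto (fun n => mhat (mseq n) x) atTop (nhds (mhat m x))) :
    lengthOf m ≤ liminf (fun n => lengthOf (mseq n)) atTop := by
  set L := liminf (fun n => lengthOf (mseq n)) atTop with hL
  rw [lengthOf]
  refine sSup_le ?_
  rintro _ ⟨x, hx, rfl⟩
  simp only [Set.mem_setOf_eq] at hx
  -- suffices : every real z < x satisfies z ≤ L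
  refine le_of_forall_lt fun c hc => ?_
  obtain ⟨z, hcz, hzx⟩ := EReal.exists_between_coe_real hc
  have hzx' : z < x := by exact_mod_cast hzx
  -- find a continuity point of mhat m in Ioo z x
  have hcnt : Set.Countable {y | ¬ ContinuousAt (mhat m) y} :=
    (mhat_mono hm_mono).countable_not_continuousAt
  have hdense : Dense {y | ¬ ContinuousAt (mhat m) y}ᶜ := hcnt.dense_compl ℝ
  obtain ⟨w, hw1, hw2⟩ := hdense.exists_mem_open isOpen_Ioo (Set.nonempty_Ioo.2 hzx')
  simp only [Set.mem_compl_iff, Set.mem_setOf_eq, not_not] at hw1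
  obtain ⟨hzw, hwx⟩ := hw2
  -- m w < ⊤ so mhat m w < 1
  have hmw : m w ≠ ⊤ := fun h => hx.ne (top_le_iff.1 (h ▸ hm_mono hwx.le))
  have hlt : mhat m w < 1 := mhat_lt_one hmw
  have hev : ∀ᶠ n in atTop, mhat (mseq n) w < 1 :=
    (hconv w hw1).eventually_lt_const hlt
  have hev2 : ∀ᶠ n in atTop, (w : EReal) ≤ lengthOf (mseq n) := by
    filter_upwards [hev] with n hn
    refine le_sSup ⟨w, ?_, rfl⟩
    simp only [Set.mem_setOf_eq, lt_top_iff_ne_top]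
    intro h
    rw [mhat, if_pos h] at hn
    exact lt_irrefl _ hn
  have hwL : (w : EReal) ≤ L := le_liminf_of_le (by isBoundedDefault) hev2
  calc c < (z : EReal) := hcz
    _ < (w : EReal) := by exact_mod_cast hzw
    _ ≤ L := hwL
end

section
/- Let φ satisfy (S.1) and (S.2) and be extended linearly to [1,∞). Then: (i) C₊(x) := sup_{y>0} φ(xy)/φ(y) is finite for every x > 0; (ii) C₊ is submultiplicative: C₊(xy) ≤ C₊(x) C₊(y) for all x, y > 0; (iii) setting α₊ := sup_{x>1} log C₊(eˣ)/x ∈ [0,∞), one has C₊(x) ≤ x^{α₊} for every x ≥ e, and φ(x) ≥ φ(1) x^{α₊} for every x ∈ (0, 1/e]. -/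
open Filter

/-- `C₊(x) = sup_{y > 0} φ(xy)/φ(y)`. -/
noncomputable def Cplus (φ : ℝ → ℝ) (x : ℝ) : ℝ :=
  sSup ((fun y => φ (x * y) / φ y) '' Set.Ioi (0:ℝ))

/-- `α₊ = sup_{x > 1} log C₊(eˣ) / x`. -/
noncomputable def Aplus (φ : ℝ → ℝ) : ℝ :=
  sSup {r : ℝ | ∃ x : ℝ, 1 < x ∧ r = Real.log (Cplus φ (Real.exp x)) / x}

lemma stmt7_phi_pos {φ : ℝ → ℝ} (h0 : φ 0 = 0) (hmono : StrictMonoOn φ (Set.Ici 0)) :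
    ∀ y : ℝ, 0 < y → 0 < φ y := by
  intro y hy
  have := hmono (Set.mem_Ici.mpr le_rfl) (Set.mem_Ici.mpr hy.le) hy
  simpa [h0] using this

lemma stmt7_bdd {φ : ℝ → ℝ}
    (h0 : φ 0 = 0)
    (hmono : StrictMonoOn φ (Set.Ici 0))
    (hlin : ∀ x : ℝ, 1 ≤ x → φ x = φ 1 + (φ 2 - φ 1) * (x - 1))
    (hS2 : ∀ x : ℝ, 0 < x → ∃ C : ℝ, ∀ᶠ y in nhdsWithin 0 (Set.Ioi 0), φ (x * y) / φ y ≤ C) :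
    ∀ x : ℝ, 0 < x → BddAbove ((fun y => φ (x * y) / φ y) '' Set.Ioi (0:ℝ)) := by
  intro x hx
  have hpos := stmt7_phi_pos h0 hmono
  have hmono' : MonotoneOn φ (Set.Ici 0) := hmono.monotoneOn
  rcases le_or_gt x 1 with hx1 | hx1
  · refine ⟨1, ?_⟩
    rintro r ⟨y, hy, rfl⟩
    have hy : (0:ℝ) < y := hy
    have hle : φ (x * y) ≤ φ y :=
      hmono' (Set.mem_Ici.mpr (by positivity)) (Set.mem_Ici.mpr hy.le) (by nlinarith)
    exact (div_le_one (hpos y hy)).mpr hle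
  · obtain ⟨C, hC⟩ := hS2 x hx
    rw [eventually_nhdsWithin_iff, Metric.eventually_nhds_iff] at hC
    obtain ⟨δ, hδ, hCδ⟩ := hC
    set m := φ 2 - φ 1 with hm
    have hm0 : 0 < m :=
      sub_pos.mpr (hmono (Set.mem_Ici.mpr zero_le_one) (Set.mem_Ici.mpr (by norm_num)) one_lt_two)
    have hφ1 : 0 < φ 1 := hpos 1 one_pos
    refine ⟨max C (max (φ x / φ (δ / 2)) (x * (1 + m / φ 1))), ?_⟩
    rintro r ⟨y, hy, rfl⟩
    have hy : (0:ℝ) < y := hy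
    simp only
    rcases lt_or_ge y (δ / 2) with hyδ | hyδ
    · have hd : dist y 0 < δ := by
        rw [Real.dist_eq, sub_zero, abs_of_pos hy]; linarith
      exact le_max_of_le_left (hCδ hd hy)
    rcases le_or_gt y 1 with hy1 | hy1
    · have h1 : φ (x * y) ≤ φ x :=
        hmono' (Set.mem_Ici.mpr (by positivity)) (Set.mem_Ici.mpr hx.le) (by nlinarith)
      have h2 : φ (δ / 2) ≤ φ y :=
        hmono' (Set.mem_Ici.mpr (by positivity)) (Set.mem_Ici.mpr hy.le) hyδ
      have h3 : φ (x * y) / φ y ≤ φ x / φ (δ / 2) :=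
        div_le_div₀ (le_of_lt (hpos x hx)) h1 (hpos _ (by positivity)) h2
      exact le_max_of_le_right (le_max_of_le_left h3)
    · have hxy1 : (1:ℝ) ≤ x * y := by nlinarith
      have e1 : φ (x * y) = φ 1 + m * (x * y - 1) := hlin _ hxy1
      have e2 : φ y = φ 1 + m * (y - 1) := hlin _ hy1.le
      have hD : 0 < φ y := hpos y hy
      refine le_max_of_le_right (le_max_of_le_right ?_)
      rw [div_le_iff₀ hD, e1, e2]
      have h1 : φ 1 + m * (x * y - 1) ≤ x * (φ 1 + m * (y - 1)) + x * m := by nlinarith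
      have h2 : x * m ≤ x * m * (φ 1 + m * (y - 1)) / φ 1 := by
        rw [le_div_iff₀ hφ1]
        nlinarith [mul_nonneg (mul_nonneg (mul_nonneg hx.le hm0.le) hm0.le)
          (by linarith : (0:ℝ) ≤ y - 1)]
      have h3 : x * (1 + m / φ 1) * (φ 1 + m * (y - 1)) =
          x * (φ 1 + m * (y - 1)) + x * m * (φ 1 + m * (y - 1)) / φ 1 := by
        field_simp
      linarith

theorem stmt_7 (φ : ℝ → ℝ)
    -- (S.1), with the linear extension to `[1,∞)` (slope `φ(2) - φ(1) = φ′(1-)`)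
    (h0 : φ 0 = 0)
    (hmono : StrictMonoOn φ (Set.Ici 0))
    (hconv : ConvexOn ℝ (Set.Ici 0) φ)
    (hlin : ∀ x : ℝ, 1 ≤ x → φ x = φ 1 + (φ 2 - φ 1) * (x - 1))
    -- (S.2): `limsup_{y ↓ 0} φ(xy)/φ(y) < ∞` for each `x > 0`
    (hS2 : ∀ x : ℝ, 0 < x → ∃ C : ℝ, ∀ᶠ y in nhdsWithin 0 (Set.Ioi 0), φ (x * y) / φ y ≤ C) :
    -- (i)
    (∀ x : ℝ, 0 < x → BddAbove ((fun y => φ (x * y) / φ y) '' Set.Ioi (0:ℝ))) ∧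
    -- (ii)
    (∀ x : ℝ, 0 < x → ∀ y : ℝ, 0 < y → Cplus φ (x * y) ≤ Cplus φ x * Cplus φ y) ∧
    -- (iii)
    ((0 ≤ Aplus φ ∧ BddAbove {r : ℝ | ∃ x : ℝ, 1 < x ∧ r = Real.log (Cplus φ (Real.exp x)) / x}) ∧
      (∀ x : ℝ, Real.exp 1 ≤ x → Cplus φ x ≤ x ^ Aplus φ) ∧
      (∀ x : ℝ, 0 < x → x ≤ (Real.exp 1)⁻¹ → φ 1 * x ^ Aplus φ ≤ φ x)) := by
  have hpos := stmt7_phi_pos h0 hmono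
  have hmono' : MonotoneOn φ (Set.Ici 0) := hmono.monotoneOn
  have part1 := stmt7_bdd h0 hmono hlin hS2
  -- basic facts about Cplus
  have hele : ∀ x : ℝ, 0 < x → ∀ y : ℝ, 0 < y → φ (x * y) / φ y ≤ Cplus φ x := by
    intro x hx y hy
    exact le_csSup (part1 x hx) ⟨y, hy, rfl⟩
  have hCle : ∀ x : ℝ, 0 < x → ∀ B : ℝ, (∀ y : ℝ, 0 < y → φ (x * y) / φ y ≤ B) →
      Cplus φ x ≤ B := by
    intro x hx B hB
    refine csSup_le ⟨φ (x * 1) / φ 1, ⟨1, Set.mem_Ioi.mpr one_pos, rfl⟩⟩ ?_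
    rintro r ⟨y, hy, rfl⟩
    exact hB y hy
  have hφ1 : 0 < φ 1 := hpos 1 one_pos
  have hCpos : ∀ x : ℝ, 0 < x → 0 < Cplus φ x := by
    intro x hx
    have h1 : φ (x * 1) / φ 1 ≤ Cplus φ x := hele x hx 1 one_pos
    have h2 : 0 < φ (x * 1) / φ 1 := div_pos (hpos _ (by positivity)) hφ1
    linarith
  have hCmono : ∀ x x' : ℝ, 0 < x → x ≤ x' → Cplus φ x ≤ Cplus φ x' := by
    intro x x' hx hxx'
    have hx' : 0 < x' := lt_of_lt_of_le hx hxx'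
    refine hCle x hx _ ?_
    intro y hy
    have h1 : φ (x * y) ≤ φ (x' * y) :=
      hmono' (Set.mem_Ici.mpr (by positivity)) (Set.mem_Ici.mpr (by positivity))
        (by nlinarith)
    exact le_trans ((div_le_div_iff_of_pos_right (hpos y hy)).mpr h1) (hele x' hx' y hy)
  -- (ii)
  have part2 : ∀ x : ℝ, 0 < x → ∀ y : ℝ, 0 < y → Cplus φ (x * y) ≤ Cplus φ x * Cplus φ y := by
    intro x hx y hy
    refine hCle _ (mul_pos hx hy) _ ?_
    intro z hz
    have hyz : 0 < y * z := mul_pos hy hz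
    have h1 : φ (y * z) ≠ 0 := (hpos _ hyz).ne'
    have h2 : φ z ≠ 0 := (hpos z hz).ne'
    have e : φ (x * y * z) / φ z = φ (x * (y * z)) / φ (y * z) * (φ (y * z) / φ z) := by
      rw [mul_assoc]
      field_simp
    rw [e]
    exact mul_le_mul (hele x hx _ hyz) (hele y hy z hz)
      (div_nonneg (hpos _ hyz).le (hpos z hz).le) (hCpos x hx).le
  -- one ≤ Cplus for arguments ≥ 1
  have hC1 : ∀ t : ℝ, 1 ≤ t → 1 ≤ Cplus φ t := by
    intro t ht
    have h1 : φ (t * 1) / φ 1 ≤ Cplus φ t := hele t (by linarith) 1 one_pos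
    have h2 : (1:ℝ) ≤ φ (t * 1) / φ 1 := by
      rw [le_div_iff₀ hφ1, one_mul]
      exact hmono' (Set.mem_Ici.mpr zero_le_one) (Set.mem_Ici.mpr (by positivity))
        (by rw [mul_one]; exact ht)
    linarith
  have hE : (1:ℝ) ≤ Real.exp 1 := Real.one_le_exp zero_le_one
  have hL : 0 ≤ Real.log (Cplus φ (Real.exp 1)) := Real.log_nonneg (hC1 _ hE)
  -- power bound
  have hpow : ∀ n : ℕ, Cplus φ (Real.exp 1 ^ n) ≤ Cplus φ (Real.exp 1) ^ n := by
    intro n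
    induction n with
    | zero =>
      simp only [pow_zero]
      refine hCle 1 one_pos 1 ?_
      intro y hy
      rw [one_mul]
      exact (div_self (hpos y hy).ne').le
    | succ n ih =>
      rw [pow_succ, pow_succ]
      calc Cplus φ (Real.exp 1 ^ n * Real.exp 1)
          ≤ Cplus φ (Real.exp 1 ^ n) * Cplus φ (Real.exp 1) :=
            part2 _ (by positivity) _ (Real.exp_pos 1)
        _ ≤ Cplus φ (Real.exp 1) ^ n * Cplus φ (Real.exp 1) :=
            mul_le_mul_of_nonneg_right ih (hCpos _ (Real.exp_pos 1)).le
  -- boundedness of the Aplus index set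
  set S := {r : ℝ | ∃ x : ℝ, 1 < x ∧ r = Real.log (Cplus φ (Real.exp x)) / x} with hS
  have hSne : S.Nonempty := ⟨Real.log (Cplus φ (Real.exp 2)) / 2, 2, one_lt_two, rfl⟩
  have hSbdd : BddAbove S := by
    refine ⟨2 * Real.log (Cplus φ (Real.exp 1)), ?_⟩
    rintro r ⟨x, hx1, rfl⟩
    have hx0 : (0:ℝ) < x := by linarith
    set n := ⌈x⌉₊ with hn
    have hxn : x ≤ (n : ℝ) := Nat.le_ceil x
    have hn2x : (n : ℝ) ≤ 2 * x := by
      have := Nat.ceil_lt_add_one hx0.le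
      linarith
    have hexp : Real.exp x ≤ Real.exp 1 ^ n := by
      rw [← Real.exp_nat_mul]
      exact Real.exp_le_exp.mpr (by simpa using hxn)
    have h1 : Cplus φ (Real.exp x) ≤ Cplus φ (Real.exp 1) ^ n :=
      le_trans (hCmono _ _ (Real.exp_pos x) hexp) (hpow n)
    have h2 : Real.log (Cplus φ (Real.exp x)) ≤ (n : ℝ) * Real.log (Cplus φ (Real.exp 1)) := by
      calc Real.log (Cplus φ (Real.exp x)) ≤ Real.log (Cplus φ (Real.exp 1) ^ n) :=
            Real.log_le_log (hCpos _ (Real.exp_pos x)) h1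
        _ = (n : ℝ) * Real.log (Cplus φ (Real.exp 1)) := by rw [Real.log_pow]
    rw [div_le_iff₀ hx0]
    have h3 : (n : ℝ) * Real.log (Cplus φ (Real.exp 1)) ≤
        2 * x * Real.log (Cplus φ (Real.exp 1)) := mul_le_mul_of_nonneg_right hn2x hL
    nlinarith
  have hA0 : 0 ≤ Aplus φ := by
    have hmem : Real.log (Cplus φ (Real.exp 2)) / 2 ∈ S := ⟨2, one_lt_two, rfl⟩
    have h1 : Real.log (Cplus φ (Real.exp 2)) / 2 ≤ Aplus φ := le_csSup hSbdd hmem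
    have h2 : 0 ≤ Real.log (Cplus φ (Real.exp 2)) / 2 :=
      div_nonneg (Real.log_nonneg (hC1 _ (Real.one_le_exp (by norm_num)))) (by norm_num)
    linarith
  -- key log bound : log (Cplus φ (exp s)) ≤ Aplus φ * s for s ≥ 1
  have hkey : ∀ s : ℝ, 1 ≤ s → Real.log (Cplus φ (Real.exp s)) ≤ Aplus φ * s := by
    intro s hs
    have hs0 : (0:ℝ) < s := by linarith
    have hAs : 0 ≤ Aplus φ * s := mul_nonneg hA0 hs0.le
    refine le_of_forall_pos_le_add ?_
    intro ε hε
    have hden : (0:ℝ) < Aplus φ * s + 1 := by linarith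
    have hd0 : 0 < ε / (Aplus φ * s + 1) := div_pos hε hden
    have ht1 : 1 < 1 + ε / (Aplus φ * s + 1) := by linarith
    set t : ℝ := 1 + ε / (Aplus φ * s + 1) with ht
    clear_value t
    have hst : 1 < s * t := by nlinarith
    have hmem : Real.log (Cplus φ (Real.exp (s * t))) / (s * t) ∈ S := ⟨s * t, hst, rfl⟩
    have h1 : Real.log (Cplus φ (Real.exp (s * t))) / (s * t) ≤ Aplus φ := le_csSup hSbdd hmem
    have hst0 : 0 < s * t := by linarith
    have h2 : Real.log (Cplus φ (Real.exp (s * t))) ≤ Aplus φ * (s * t) := by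
      rw [div_le_iff₀ hst0] at h1
      linarith
    have h3 : Cplus φ (Real.exp s) ≤ Cplus φ (Real.exp (s * t)) :=
      hCmono _ _ (Real.exp_pos s) (Real.exp_le_exp.mpr (by nlinarith))
    have h4 : Real.log (Cplus φ (Real.exp s)) ≤ Aplus φ * (s * t) :=
      le_trans (Real.log_le_log (hCpos _ (Real.exp_pos s)) h3) h2
    have h5 : Aplus φ * (s * t) = Aplus φ * s + Aplus φ * s * (ε / (Aplus φ * s + 1)) := by
      rw [ht]; ring
    have h6 : Aplus φ * s * (ε / (Aplus φ * s + 1)) ≤ ε := by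
      rw [← mul_div_assoc, div_le_iff₀ hden]
      nlinarith
    linarith
  -- (iii) second part
  have part3b : ∀ x : ℝ, Real.exp 1 ≤ x → Cplus φ x ≤ x ^ Aplus φ := by
    intro x hx
    have hx0 : 0 < x := lt_of_lt_of_le (Real.exp_pos 1) hx
    have hs : 1 ≤ Real.log x := by
      rw [Real.le_log_iff_exp_le hx0]; exact hx
    have h1 : Real.log (Cplus φ x) ≤ Aplus φ * Real.log x := by
      have := hkey (Real.log x) hs
      rwa [Real.exp_log hx0] at this
    calc Cplus φ x = Real.exp (Real.log (Cplus φ x)) := (Real.exp_log (hCpos x hx0)).symm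
      _ ≤ Real.exp (Aplus φ * Real.log x) := Real.exp_le_exp.mpr h1
      _ = x ^ Aplus φ := by rw [Real.rpow_def_of_pos hx0, mul_comm]
  refine ⟨part1, part2, ⟨hA0, hSbdd⟩, part3b, ?_⟩
  -- (iii) third part
  intro x hx0 hxe
  have hxinv : Real.exp 1 ≤ x⁻¹ := by
    rw [le_inv_comm₀ (Real.exp_pos 1) hx0] at *
    exact hxe
  have h1 : Cplus φ x⁻¹ ≤ x⁻¹ ^ Aplus φ := part3b _ hxinv
  have h2 : φ (x⁻¹ * x) / φ x ≤ Cplus φ x⁻¹ := hele x⁻¹ (by positivity) x hx0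
  rw [inv_mul_cancel₀ hx0.ne'] at h2
  have h3 : φ 1 / φ x ≤ (x ^ Aplus φ)⁻¹ := by
    rw [← Real.inv_rpow hx0.le]
    linarith
  have hrp : 0 < x ^ Aplus φ := Real.rpow_pos_of_pos hx0 _
  rw [div_le_iff₀ (hpos x hx0), inv_mul_eq_div, le_div_iff₀ hrp] at h3
  linarith
end

section
/- Let φ satisfy (S.1) and (S.2), extended linearly to [1,∞), and set C₊(x) := sup_{y>0} φ(xy)/φ(y) < ∞. Let (Yₙ)_{n≥1} be identically distributed nonnegative random variables with finite mean μ > 0, let (λₙ)_{n≥1} be nonnegative reals with Σₙ λₙ < ∞, and set X = Σₙ λₙ Yₙ. Then E[φ(X)] ≤ E[C₊(Y₁/μ)] · φ(E[X]). -/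
open MeasureTheory

section aux
variable {φ : ℝ → ℝ}

lemma phi_nonneg (h0 : φ 0 = 0) (hmono : StrictMonoOn φ (Set.Ici 0)) {t : ℝ} (ht : 0 ≤ t) :
    0 ≤ φ t := by
  rcases eq_or_lt_of_le ht with h | h
  · simp [← h, h0]
  · have := hmono (Set.self_mem_Ici) (Set.mem_Ici.mpr ht) h
    simpa [h0] using this.le

lemma phi_pos (h0 : φ 0 = 0) (hmono : StrictMonoOn φ (Set.Ici 0)) {t : ℝ} (ht : 0 < t) :
    0 < φ t := by
  have := hmono (Set.self_mem_Ici) (Set.mem_Ici.mpr ht.le) ht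
  simpa [h0] using this

lemma slope_mono (h0 : φ 0 = 0) (hconv : ConvexOn ℝ (Set.Ici 0) φ) {a b : ℝ}
    (ha : 0 < a) (hab : a ≤ b) : φ a / a ≤ φ b / b := by
  have hb : 0 < b := ha.trans_le hab
  have key : φ a ≤ (a / b) * φ b := by
    have h := hconv.2 (Set.self_mem_Ici) (Set.mem_Ici.mpr hb.le)
      (show (0:ℝ) ≤ 1 - a / b by
        have : a / b ≤ 1 := (div_le_one hb).mpr hab
        linarith)
      (show (0:ℝ) ≤ a / b from div_nonneg ha.le hb.le)
      (by ring)
    have hx : (1 - a / b) • (0:ℝ) + (a / b) • b = a := by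
      rw [smul_zero, zero_add, smul_eq_mul]
      exact div_mul_cancel₀ a hb.ne'
    rw [hx] at h
    simpa [h0] using h
  rw [div_le_div_iff₀ ha hb]
  calc φ a * b ≤ ((a / b) * φ b) * b := by nlinarith
    _ = φ b * a := by field_simp

lemma phi_mono (hmono : StrictMonoOn φ (Set.Ici 0)) : MonotoneOn φ (Set.Ici 0) :=
  hmono.monotoneOn

lemma cplus_bdd (h0 : φ 0 = 0) (hmono : StrictMonoOn φ (Set.Ici 0))
    (hconv : ConvexOn ℝ (Set.Ici 0) φ)
    (hlin : ∀ x : ℝ, 1 ≤ x → φ x = φ 1 + (φ 2 - φ 1) * (x - 1))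
    (hS2 : ∀ x : ℝ, 0 < x → ∃ C : ℝ, ∀ᶠ y in nhdsWithin 0 (Set.Ioi 0), φ (x * y) / φ y ≤ C)
    {x : ℝ} (hx : 0 ≤ x) :
    BddAbove ((fun y => φ (x * y) / φ y) '' Set.Ioi 0) := by
  rcases le_or_gt x 1 with hx1 | hx1
  · refine ⟨1, ?_⟩
    rintro v ⟨y, hy, rfl⟩
    have hy' : (0:ℝ) < y := hy
    have hxy : 0 ≤ x * y := mul_nonneg hx hy'.le
    have h1 : φ (x * y) ≤ φ y :=
      phi_mono hmono (Set.mem_Ici.mpr hxy) (Set.mem_Ici.mpr hy'.le)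
        (by nlinarith)
    exact (div_le_one (phi_pos h0 hmono hy')).mpr h1
  · obtain ⟨C, hC⟩ := hS2 x (by linarith)
    rw [eventually_nhdsWithin_iff, Metric.eventually_nhds_iff] at hC
    obtain ⟨ε, hε, hCε⟩ := hC
    have hφε : 0 < φ ε := phi_pos h0 hmono hε
    have h21 : 0 < φ 2 - φ 1 := by
      have := hmono (Set.mem_Ici.mpr zero_le_one) (Set.mem_Ici.mpr (by norm_num : (0:ℝ) ≤ 2))
        one_lt_two
      linarith
    refine ⟨max C (φ 1 / φ ε + (φ 2 - φ 1) * x * (ε / φ ε)), ?_⟩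
    rintro v ⟨y, hy, rfl⟩
    have hy' : (0:ℝ) < y := hy
    rcases lt_or_ge y ε with hyε | hyε
    · exact le_max_of_le_left (hCε (by simpa [abs_of_pos hy'] using hyε) hy)
    · refine le_max_of_le_right ?_
      have hxypos : 0 < x * y := mul_pos (by linarith) hy'
      -- φ (x*y) ≤ φ 1 + (φ 2 - φ 1) * (x * y)
      have hub : φ (x * y) ≤ φ 1 + (φ 2 - φ 1) * (x * y) := by
        rcases le_or_gt 1 (x * y) with h1 | h1
        · rw [hlin _ h1]; nlinarith
        · have : φ (x * y) ≤ φ 1 :=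
            phi_mono hmono (Set.mem_Ici.mpr hxypos.le) (Set.mem_Ici.mpr zero_le_one) h1.le
          nlinarith
      have hφy : 0 < φ y := phi_pos h0 hmono hy'
      have hslope : φ ε / ε ≤ φ y / y := slope_mono h0 hconv hε hyε
      -- hence y / φ y ≤ ε / φ ε
      have hyphi : y / φ y ≤ ε / φ ε := by
        rw [div_le_div_iff₀ hφy hφε]
        rw [div_le_div_iff₀ hε hy'] at hslope
        linarith
      have hφyε : φ ε ≤ φ y :=
        phi_mono hmono (Set.mem_Ici.mpr hε.le) (Set.mem_Ici.mpr hy'.le) hyε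
      have hφ1 : 0 ≤ φ 1 := phi_nonneg h0 hmono zero_le_one
      calc φ (x * y) / φ y ≤ (φ 1 + (φ 2 - φ 1) * (x * y)) / φ y := by
            exact div_le_div_of_nonneg_right hub hφy.le
        _ = φ 1 / φ y + (φ 2 - φ 1) * x * (y / φ y) := by field_simp
        _ ≤ φ 1 / φ ε + (φ 2 - φ 1) * x * (ε / φ ε) := by
            have h1 : φ 1 / φ y ≤ φ 1 / φ ε := by
              exact div_le_div_of_nonneg_left hφ1 hφε hφyε
            have h2 : (φ 2 - φ 1) * x * (y / φ y) ≤ (φ 2 - φ 1) * x * (ε / φ ε) := by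
              apply mul_le_mul_of_nonneg_left hyphi
              positivity
            linarith

lemma cplus_nonneg (h0 : φ 0 = 0) (hmono : StrictMonoOn φ (Set.Ici 0))
    (hconv : ConvexOn ℝ (Set.Ici 0) φ)
    (hlin : ∀ x : ℝ, 1 ≤ x → φ x = φ 1 + (φ 2 - φ 1) * (x - 1))
    (hS2 : ∀ x : ℝ, 0 < x → ∃ C : ℝ, ∀ᶠ y in nhdsWithin 0 (Set.Ioi 0), φ (x * y) / φ y ≤ C)
    {x : ℝ} (hx : 0 ≤ x) : 0 ≤ Cplus φ x := by
  have hmem : φ (x * 1) / φ 1 ∈ (fun y => φ (x * y) / φ y) '' Set.Ioi (0:ℝ) :=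
    ⟨1, Set.mem_Ioi.mpr one_pos, rfl⟩
  have h1 : 0 ≤ φ (x * 1) / φ 1 :=
    div_nonneg (phi_nonneg h0 hmono (by nlinarith)) (phi_nonneg h0 hmono zero_le_one)
  exact h1.trans (le_csSup (cplus_bdd h0 hmono hconv hlin hS2 hx) hmem)

lemma cplus_key (h0 : φ 0 = 0) (hmono : StrictMonoOn φ (Set.Ici 0))
    (hconv : ConvexOn ℝ (Set.Ici 0) φ)
    (hlin : ∀ x : ℝ, 1 ≤ x → φ x = φ 1 + (φ 2 - φ 1) * (x - 1))
    (hS2 : ∀ x : ℝ, 0 < x → ∃ C : ℝ, ∀ᶠ y in nhdsWithin 0 (Set.Ioi 0), φ (x * y) / φ y ≤ C)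
    {x y : ℝ} (hx : 0 ≤ x) (hy : 0 < y) : φ (x * y) ≤ Cplus φ x * φ y := by
  have h1 : φ (x * y) / φ y ≤ Cplus φ x :=
    le_csSup (cplus_bdd h0 hmono hconv hlin hS2 hx) ⟨y, Set.mem_Ioi.mpr hy, rfl⟩
  exact (div_le_iff₀ (phi_pos h0 hmono hy)).mp h1

lemma cplus_mono (h0 : φ 0 = 0) (hmono : StrictMonoOn φ (Set.Ici 0))
    (hconv : ConvexOn ℝ (Set.Ici 0) φ)
    (hlin : ∀ x : ℝ, 1 ≤ x → φ x = φ 1 + (φ 2 - φ 1) * (x - 1))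
    (hS2 : ∀ x : ℝ, 0 < x → ∃ C : ℝ, ∀ᶠ y in nhdsWithin 0 (Set.Ioi 0), φ (x * y) / φ y ≤ C) :
    MonotoneOn (Cplus φ) (Set.Ici 0) := by
  rintro a (ha : 0 ≤ a) b (hb : 0 ≤ b) hab
  apply Real.sSup_le _ (cplus_nonneg h0 hmono hconv hlin hS2 hb)
  rintro v ⟨y, hy, rfl⟩
  have hy' : (0:ℝ) < y := hy
  have h1 : φ (a * y) ≤ φ (b * y) :=
    phi_mono hmono (Set.mem_Ici.mpr (mul_nonneg ha hy'.le))
      (Set.mem_Ici.mpr (mul_nonneg hb hy'.le)) (by nlinarith)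
  calc φ (a * y) / φ y ≤ φ (b * y) / φ y :=
        div_le_div_of_nonneg_right h1 (phi_pos h0 hmono hy').le
    _ ≤ Cplus φ b := le_csSup (cplus_bdd h0 hmono hconv hlin hS2 hb) ⟨y, hy, rfl⟩

lemma phi_cont (h0 : φ 0 = 0) (hmono : StrictMonoOn φ (Set.Ici 0))
    (hconv : ConvexOn ℝ (Set.Ici 0) φ) {t : ℝ} (ht : 0 ≤ t) :
    ContinuousWithinAt φ (Set.Ici 0) t := by
  rcases eq_or_lt_of_le ht with h | h
  · subst h
    unfold ContinuousWithinAt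
    rw [h0]
    apply squeeze_zero' (g := fun y => y * φ 1)
    · filter_upwards [self_mem_nhdsWithin] with y (hy : 0 ≤ y)
      exact phi_nonneg h0 hmono hy
    · have h1 : {y : ℝ | y < 1} ∈ nhdsWithin (0:ℝ) (Set.Ici 0) :=
        nhdsWithin_le_nhds (gt_mem_nhds one_pos)
      filter_upwards [self_mem_nhdsWithin, h1] with y (hy : 0 ≤ y) (hy1 : y < 1)
      have h := hconv.2 (Set.self_mem_Ici) (Set.mem_Ici.mpr zero_le_one)
        (show (0:ℝ) ≤ 1 - y by linarith) hy (by ring)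
      have hx : (1 - y) • (0:ℝ) + y • (1:ℝ) = y := by simp
      rw [hx] at h
      simpa [h0] using h
    · have : Filter.Tendsto (fun y : ℝ => y * φ 1) (nhdsWithin 0 (Set.Ici 0)) (nhds (0 * φ 1)) :=
        (continuous_id.mul continuous_const).continuousWithinAt
      simpa using this
  · have hopen : ContinuousOn φ (Set.Ioi 0) :=
      ConvexOn.continuousOn isOpen_Ioi (hconv.subset Set.Ioi_subset_Ici_self (convex_Ioi 0))
    exact ((hopen.continuousAt (Ioi_mem_nhds h))).continuousWithinAt

lemma jensen_partial (h0 : φ 0 = 0) (hconv : ConvexOn ℝ (Set.Ici 0) φ)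
    (k : ℕ) (w z : ℕ → ℝ) (hw : ∀ n, 0 ≤ w n) (hz : ∀ n, 0 ≤ z n)
    (hws : ∑ n ∈ Finset.range k, w n ≤ 1) :
    φ (∑ n ∈ Finset.range k, w n * z n) ≤ ∑ n ∈ Finset.range k, w n * φ (z n) := by
  set W : ℕ → ℝ := fun n => if n < k then w n else 1 - ∑ m ∈ Finset.range k, w m with hW
  set Z : ℕ → ℝ := fun n => if n < k then z n else 0 with hZ
  have hWnn : ∀ n ∈ Finset.range (k+1), 0 ≤ W n := by
    intro n _
    simp only [hW]
    split
    · exact hw n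
    · linarith
  have hWsum : ∑ n ∈ Finset.range (k+1), W n = 1 := by
    rw [Finset.sum_range_succ]
    have h1 : ∑ n ∈ Finset.range k, W n = ∑ n ∈ Finset.range k, w n := by
      apply Finset.sum_congr rfl
      intro n hn
      simp [hW, Finset.mem_range.mp hn]
    rw [h1]
    simp [hW]
  have hZmem : ∀ n ∈ Finset.range (k+1), Z n ∈ Set.Ici (0:ℝ) := by
    intro n _
    simp only [hZ]
    split
    · exact Set.mem_Ici.mpr (hz n)
    · exact Set.self_mem_Ici
  have h := hconv.map_sum_le hWnn hWsum hZmem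
  have h1 : ∑ n ∈ Finset.range (k+1), W n • Z n = ∑ n ∈ Finset.range k, w n * z n := by
    rw [Finset.sum_range_succ]
    have : ∑ n ∈ Finset.range k, W n • Z n = ∑ n ∈ Finset.range k, w n * z n := by
      apply Finset.sum_congr rfl
      intro n hn
      simp [hW, hZ, Finset.mem_range.mp hn]
    rw [this]
    simp [hW, hZ]
  have h2 : ∑ n ∈ Finset.range (k+1), W n • φ (Z n) = ∑ n ∈ Finset.range k, w n * φ (z n) := by
    rw [Finset.sum_range_succ]
    have : ∑ n ∈ Finset.range k, W n • φ (Z n) = ∑ n ∈ Finset.range k, w n * φ (z n) := by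
      apply Finset.sum_congr rfl
      intro n hn
      simp [hW, hZ, Finset.mem_range.mp hn]
    rw [this]
    simp [hW, hZ, h0]
  rw [h1, h2] at h
  exact h

lemma pointwise_master (h0 : φ 0 = 0) (hmono : StrictMonoOn φ (Set.Ici 0))
    (hconv : ConvexOn ℝ (Set.Ici 0) φ)
    (hlin : ∀ x : ℝ, 1 ≤ x → φ x = φ 1 + (φ 2 - φ 1) * (x - 1))
    (hS2 : ∀ x : ℝ, 0 < x → ∃ C : ℝ, ∀ᶠ y in nhdsWithin 0 (Set.Ioi 0), φ (x * y) / φ y ≤ C)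
    {mu s : ℝ} (hmupos : 0 < mu) (hspos : 0 < s)
    (lam : ℕ → ℝ) (hlam : ∀ n, 0 ≤ lam n) (hlamsum : Summable lam)
    (hsum : ∑' n, lam n = s)
    (z : ℕ → ℝ) (hz : ∀ n, 0 ≤ z n) :
    ENNReal.ofReal (φ (∑' n, lam n * z n)) ≤
      ∑' n, ENNReal.ofReal ((lam n / s) * (Cplus φ (z n / mu) * φ (s * mu))) := by
  by_cases hsummable : Summable (fun n => lam n * z n)
  · set X := ∑' n, lam n * z n with hX
    have hXnn : 0 ≤ X := tsum_nonneg (fun n => mul_nonneg (hlam n) (hz n))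
    have hφsmu : 0 ≤ φ (s * mu) := phi_nonneg h0 hmono (by positivity)
    -- the bound for partial sums
    have hpart : ∀ k : ℕ, ENNReal.ofReal (φ (∑ n ∈ Finset.range k, lam n * z n)) ≤
        ∑' n, ENNReal.ofReal ((lam n / s) * (Cplus φ (z n / mu) * φ (s * mu))) := by
      intro k
      have hrw : ∑ n ∈ Finset.range k, lam n * z n
          = ∑ n ∈ Finset.range k, (lam n / s) * (s * z n) := by
        apply Finset.sum_congr rfl
        intro n _
        field_simp
      have hws : ∑ n ∈ Finset.range k, lam n / s ≤ 1 := by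
        rw [← Finset.sum_div]
        rw [div_le_one hspos]
        rw [← hsum]
        exact Summable.sum_le_tsum _ (fun i _ => hlam i) hlamsum
      have hJ : φ (∑ n ∈ Finset.range k, lam n * z n) ≤
          ∑ n ∈ Finset.range k, (lam n / s) * φ (s * z n) := by
        rw [hrw]
        exact jensen_partial h0 hconv k _ _ (fun n => div_nonneg (hlam n) hspos.le)
          (fun n => mul_nonneg hspos.le (hz n)) hws
      have hkey : ∀ n, φ (s * z n) ≤ Cplus φ (z n / mu) * φ (s * mu) := by
        intro n
        have h1 : s * z n = (z n / mu) * (s * mu) := by field_simp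
        rw [h1]
        exact cplus_key h0 hmono hconv hlin hS2 (div_nonneg (hz n) hmupos.le) (by positivity)
      have h2 : ∑ n ∈ Finset.range k, (lam n / s) * φ (s * z n) ≤
          ∑ n ∈ Finset.range k, (lam n / s) * (Cplus φ (z n / mu) * φ (s * mu)) :=
        Finset.sum_le_sum (fun n _ => mul_le_mul_of_nonneg_left (hkey n)
          (div_nonneg (hlam n) hspos.le))
      calc ENNReal.ofReal (φ (∑ n ∈ Finset.range k, lam n * z n))
          ≤ ENNReal.ofReal (∑ n ∈ Finset.range k,
              (lam n / s) * (Cplus φ (z n / mu) * φ (s * mu))) :=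
            ENNReal.ofReal_le_ofReal (hJ.trans h2)
        _ = ∑ n ∈ Finset.range k, ENNReal.ofReal
              ((lam n / s) * (Cplus φ (z n / mu) * φ (s * mu))) := by
            apply ENNReal.ofReal_sum_of_nonneg
            intro n _
            have hc := cplus_nonneg h0 hmono hconv hlin hS2 (div_nonneg (hz n) hmupos.le)
            have hl := div_nonneg (hlam n) hspos.le
            positivity
        _ ≤ ∑' n, ENNReal.ofReal ((lam n / s) * (Cplus φ (z n / mu) * φ (s * mu))) :=
            ENNReal.sum_le_tsum _
    -- pass to the limit
    have htendsto : Filter.Tendsto (fun k => ∑ n ∈ Finset.range k, lam n * z n)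
        Filter.atTop (nhds X) := hsummable.hasSum.tendsto_sum_nat
    have htend2 : Filter.Tendsto (fun k => ∑ n ∈ Finset.range k, lam n * z n)
        Filter.atTop (nhdsWithin X (Set.Ici 0)) := by
      rw [tendsto_nhdsWithin_iff]
      refine ⟨htendsto, Filter.Eventually.of_forall (fun k => ?_)⟩
      exact Finset.sum_nonneg (fun n _ => mul_nonneg (hlam n) (hz n))
    have hφtend : Filter.Tendsto (fun k => φ (∑ n ∈ Finset.range k, lam n * z n))
        Filter.atTop (nhds (φ X)) :=
      (phi_cont h0 hmono hconv hXnn).tendsto.comp htend2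
    have hoftend : Filter.Tendsto
        (fun k => ENNReal.ofReal (φ (∑ n ∈ Finset.range k, lam n * z n)))
        Filter.atTop (nhds (ENNReal.ofReal (φ X))) :=
      (ENNReal.continuous_ofReal.tendsto _).comp hφtend
    exact le_of_tendsto hoftend (Filter.Eventually.of_forall hpart)
  · rw [tsum_eq_zero_of_not_summable hsummable, h0]
    simp

end aux

theorem stmt_9
    {Ω : Type*} [MeasurableSpace Ω] (P : Measure Ω) [IsProbabilityMeasure P]
    (φ : ℝ → ℝ)
    -- (S.1), with the linear extension to `[1,∞)`
    (h0 : φ 0 = 0)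
    (hmono : StrictMonoOn φ (Set.Ici 0))
    (hconv : ConvexOn ℝ (Set.Ici 0) φ)
    (hlin : ∀ x : ℝ, 1 ≤ x → φ x = φ 1 + (φ 2 - φ 1) * (x - 1))
    -- (S.2)
    (hS2 : ∀ x : ℝ, 0 < x → ∃ C : ℝ, ∀ᶠ y in nhdsWithin 0 (Set.Ioi 0), φ (x * y) / φ y ≤ C)
    (Y : ℕ → Ω → ℝ) (hYmeas : ∀ n, Measurable (Y n)) (hYpos : ∀ n ω, 0 ≤ Y n ω)
    (hident : ∀ n, Measure.map (Y n) P = Measure.map (Y 0) P)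
    (hint : Integrable (Y 0) P)
    (mu : ℝ) (hmu : mu = ∫ ω, Y 0 ω ∂P) (hmupos : 0 < mu)
    (lam : ℕ → ℝ) (hlam : ∀ n, 0 ≤ lam n) (hlamsum : Summable lam) :
    (∫⁻ ω, ENNReal.ofReal (φ (∑' n, lam n * Y n ω)) ∂P) ≤
      (∫⁻ ω, ENNReal.ofReal (Cplus φ (Y 0 ω / mu)) ∂P) *
        ENNReal.ofReal (φ (∫ ω, (∑' n, lam n * Y n ω) ∂P)) := by
  set s := ∑' n, lam n with hs
  have hsnn : 0 ≤ s := tsum_nonneg hlam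
  rcases eq_or_lt_of_le hsnn with hs0 | hspos
  · -- degenerate case : all lam n = 0
    have hl0 : ∀ n, lam n = 0 := by
      intro n
      have h1 : lam n ≤ s := Summable.le_tsum hlamsum n (fun m _ => hlam m)
      linarith [hlam n, h1, hs0.symm ▸ (le_refl (0:ℝ))]
    have hX0 : ∀ ω, (∑' n, lam n * Y n ω) = 0 := by
      intro ω; simp [hl0]
    simp only [hX0, h0, ENNReal.ofReal_zero, lintegral_zero]
    exact bot_le
  · -- main case
    -- measurable monotone version of Cplus ∘ (· / mu)
    set g : ℝ → ℝ := fun x => Cplus φ (max x 0 / mu) with hg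
    have hgmono : Monotone g := by
      intro a b hab
      exact cplus_mono h0 hmono hconv hlin hS2
        (Set.mem_Ici.mpr (div_nonneg (le_max_right a 0) hmupos.le))
        (Set.mem_Ici.mpr (div_nonneg (le_max_right b 0) hmupos.le))
        (div_le_div_of_nonneg_right (max_le_max hab (le_refl 0)) hmupos.le)
    have hgmeas : Measurable g := hgmono.measurable
    have hrew : ∀ n ω, Cplus φ (Y n ω / mu) = g (Y n ω) := by
      intro n ω
      simp [hg, max_eq_left (hYpos n ω)]
    have hgnn : ∀ x, 0 ≤ g x := fun x =>
      cplus_nonneg h0 hmono hconv hlin hS2 (div_nonneg (le_max_right x 0) hmupos.le)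
    have hogmeas : Measurable fun x : ℝ => ENNReal.ofReal (g x) :=
      ENNReal.measurable_ofReal.comp hgmeas
    -- identical distribution transfers for g
    have hIn : ∀ n, (∫⁻ ω, ENNReal.ofReal (g (Y n ω)) ∂P)
        = ∫⁻ ω, ENNReal.ofReal (g (Y 0 ω)) ∂P := by
      intro n
      rw [← lintegral_map hogmeas (hYmeas n), hident n, lintegral_map hogmeas (hYmeas 0)]
    set I := ∫⁻ ω, ENNReal.ofReal (g (Y 0 ω)) ∂P with hI
    -- lintegrals of ofReal ∘ Y n all agree, and are finite
    have honmeas : Measurable fun x : ℝ => ENNReal.ofReal x := ENNReal.measurable_ofReal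
    have hKn : ∀ n, (∫⁻ ω, ENNReal.ofReal (Y n ω) ∂P) = ∫⁻ ω, ENNReal.ofReal (Y 0 ω) ∂P := by
      intro n
      rw [← lintegral_map honmeas (hYmeas n), hident n, lintegral_map honmeas (hYmeas 0)]
    have hKfin : (∫⁻ ω, ENNReal.ofReal (Y 0 ω) ∂P) < ⊤ := by
      have h1 : (∫⁻ ω, ENNReal.ofReal (Y 0 ω) ∂P) = ∫⁻ ω, ‖Y 0 ω‖ₑ ∂P := by
        apply lintegral_congr
        intro ω
        rw [Real.enorm_eq_ofReal (hYpos 0 ω)]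
      rw [h1]
      exact hint.2
    -- each Y n is integrable with integral mu
    have hYint : ∀ n, Integrable (Y n) P := by
      intro n
      have h1 : Integrable id (Measure.map (Y n) P) := by
        rw [hident n]
        refine (integrable_map_measure aestronglyMeasurable_id (hYmeas 0).aemeasurable).mpr ?_
        simpa [Function.comp] using hint
      have h2 := (integrable_map_measure aestronglyMeasurable_id
        (hYmeas n).aemeasurable).mp h1
      simpa [Function.comp] using h2
    have hEYn : ∀ n, (∫ ω, Y n ω ∂P) = mu := by
      intro n
      have h1 : (∫ ω, Y n ω ∂P) = ∫ x, x ∂(Measure.map (Y n) P) :=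
        (integral_map (hYmeas n).aemeasurable aestronglyMeasurable_id).symm
      have h2 : (∫ ω, Y 0 ω ∂P) = ∫ x, x ∂(Measure.map (Y 0) P) :=
        (integral_map (hYmeas 0).aemeasurable aestronglyMeasurable_id).symm
      rw [h1, hident n, ← h2, hmu]
    -- the expectation of X equals s * mu
    have hEX : (∫ ω, (∑' n, lam n * Y n ω) ∂P) = s * mu := by
      have hfmeas : ∀ n : ℕ, AEStronglyMeasurable (fun ω => lam n * Y n ω) P :=
        fun n => ((hYmeas n).const_mul (lam n)).aestronglyMeasurable
      have hlint : ∑' n : ℕ, (∫⁻ ω, ‖lam n * Y n ω‖ₑ ∂P) ≠ ⊤ := by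
        have h1 : ∀ n : ℕ, (∫⁻ ω, ‖lam n * Y n ω‖ₑ ∂P)
            = ENNReal.ofReal (lam n) * ∫⁻ ω, ENNReal.ofReal (Y 0 ω) ∂P := by
          intro n
          have e1 : ∀ ω, ‖lam n * Y n ω‖ₑ
              = ENNReal.ofReal (lam n) * ENNReal.ofReal (Y n ω) := by
            intro ω
            rw [Real.enorm_eq_ofReal (mul_nonneg (hlam n) (hYpos n ω)),
              ENNReal.ofReal_mul (hlam n)]
          rw [lintegral_congr e1, lintegral_const_mul _ (hYmeas n).ennreal_ofReal, hKn n]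
        rw [tsum_congr h1, ENNReal.tsum_mul_right]
        exact ENNReal.mul_ne_top (by
          rw [← ENNReal.ofReal_tsum_of_nonneg hlam hlamsum]
          exact ENNReal.ofReal_ne_top) hKfin.ne
      rw [integral_tsum hfmeas hlint]
      have h2 : ∀ n : ℕ, (∫ ω, lam n * Y n ω ∂P) = lam n * mu := by
        intro n
        rw [integral_const_mul, hEYn n]
      rw [tsum_congr h2, tsum_mul_right]
    -- pointwise bound + computation
    have hfsum1 : ∑' n : ℕ, ENNReal.ofReal (lam n / s) = 1 := by
      rw [← ENNReal.ofReal_tsum_of_nonneg (fun n => div_nonneg (hlam n) hspos.le)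
        (hlamsum.div_const s)]
      rw [tsum_div_const, div_self hspos.ne']
      simp
    calc (∫⁻ ω, ENNReal.ofReal (φ (∑' n, lam n * Y n ω)) ∂P)
        ≤ ∫⁻ ω, ∑' n, ENNReal.ofReal
            ((lam n / s) * (g (Y n ω) * φ (s * mu))) ∂P := by
          apply lintegral_mono
          intro ω
          have := pointwise_master h0 hmono hconv hlin hS2 hmupos hspos lam hlam hlamsum
            rfl (fun n => Y n ω) (fun n => hYpos n ω)
          simpa only [hrew] using this
      _ = ∑' n, ∫⁻ ω, ENNReal.ofReal
            ((lam n / s) * (g (Y n ω) * φ (s * mu))) ∂P := by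
          apply lintegral_tsum
          intro n
          exact ((((hgmeas.comp (hYmeas n)).mul measurable_const).const_mul
            (lam n / s)).ennreal_ofReal).aemeasurable
      _ = ∑' n, (ENNReal.ofReal (lam n / s) * ENNReal.ofReal (φ (s * mu))) * I := by
          apply tsum_congr
          intro n
          have hφsmu : 0 ≤ φ (s * mu) := phi_nonneg h0 hmono (by positivity)
          have e1 : ∀ ω, ENNReal.ofReal ((lam n / s) * (g (Y n ω) * φ (s * mu)))
              = (ENNReal.ofReal (lam n / s) * ENNReal.ofReal (φ (s * mu)))
                * ENNReal.ofReal (g (Y n ω)) := by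
            intro ω
            rw [ENNReal.ofReal_mul (div_nonneg (hlam n) hspos.le),
              mul_comm (g (Y n ω)) (φ (s * mu)),
              ENNReal.ofReal_mul hφsmu]
            ring
          rw [lintegral_congr e1,
            lintegral_const_mul _ (show Measurable fun ω => ENNReal.ofReal (g (Y n ω)) from (hgmeas.comp (hYmeas n)).ennreal_ofReal), hIn n]
      _ = I * ENNReal.ofReal (φ (s * mu)) := by
          rw [ENNReal.tsum_mul_right, ENNReal.tsum_mul_right, hfsum1]
          ring
      _ = (∫⁻ ω, ENNReal.ofReal (Cplus φ (Y 0 ω / mu)) ∂P) *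
            ENNReal.ofReal (φ (∫ ω, (∑' n, lam n * Y n ω) ∂P)) := by
          rw [hEX]
          congr 1
          apply lintegral_congr
          intro ω
          rw [hrew 0 ω]
end
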